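/- arXiv:2506.10854 — 2 statements merged into one kernel-verified Lean document; each statement's English description precedes it below -/
import Mathlib

section
/- There exists an infinite family of DAGs with maximum in-degree 2 and maximum out-degree 3, on n nodes, such that with fast-memory capacity r = 4 the optimal one-shot RBP cost is Θ(n) while the optimal PRBP cost is exactly 2. -/
open scoped Classical

/-! ### Directed graphs / DAGs -/

structure DirGraph (V : Type) where
  E : V → V → Prop

namespace DirGraph

variable {V : Type}

def Acyclic (G : DirGraph V) : Prop := ∀ v, ¬ Relation.TransGen G.E v v

def IsSource (G : DirGraph V) (v : V) : Prop := ∀ u, ¬ G.E u v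

def IsSink (G : DirGraph V) (v : V) : Prop := ∀ u, ¬ G.E v u

def NoIsolated (G : DirGraph V) : Prop := ∀ v, (∃ u, G.E u v) ∨ (∃ u, G.E v u)

noncomputable def inDeg (G : DirGraph V) (v : V) : ℕ := {u | G.E u v}.ncard

noncomputable def outDeg (G : DirGraph V) (v : V) : ℕ := {u | G.E v u}.ncard

noncomputable def maxInDeg (G : DirGraph V) [Fintype V] : ℕ :=
  Finset.univ.sup G.inDeg

noncomputable def maxOutDeg (G : DirGraph V) [Fintype V] : ℕ :=
  Finset.univ.sup G.outDeg

end DirGraph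

/-! ### The (one-shot) red-blue pebble game (RBP) -/

structure RBPState (V : Type) where
  red : Finset V
  blue : Finset V
  computed : Finset V

inductive RBPMove (V : Type) where
  | save : V → RBPMove V
  | load : V → RBPMove V
  | compute : V → RBPMove V
  | delete : V → RBPMove V

def RBPMove.ioCost {V : Type} : RBPMove V → ℕ
  | .save _ => 1
  | .load _ => 1
  | _ => 0

variable {V : Type} [Fintype V] [DecidableEq V]

def RBPStep (G : DirGraph V) (r : ℕ) (s : RBPState V) :
    RBPMove V → RBPState V → Prop
  | .save v, t => v ∈ s.red ∧ t = { s with blue := insert v s.blue }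
  | .load v, t => v ∈ s.blue ∧ (insert v s.red).card ≤ r ∧
      t = { s with red := insert v s.red }
  | .compute v, t => ¬ G.IsSource v ∧ v ∉ s.computed ∧
      (∀ u, G.E u v → u ∈ s.red) ∧ (insert v s.red).card ≤ r ∧
      t = { s with red := insert v s.red, computed := insert v s.computed }
  | .delete v, t => v ∈ s.red ∧ t = { s with red := s.red.erase v }

inductive RBPReaches (G : DirGraph V) (r : ℕ) :
    RBPState V → List (RBPMove V) → RBPState V → Prop
  | nil (s : RBPState V) : RBPReaches G r s [] s
  | cons {s t u : RBPState V} {m : RBPMove V} {L : List (RBPMove V)} :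
      RBPStep G r s m t → RBPReaches G r t L u → RBPReaches G r s (m :: L) u

noncomputable def RBPInit (G : DirGraph V) : RBPState V :=
  ⟨∅, Finset.univ.filter (fun v => G.IsSource v), ∅⟩

def RBPValid (G : DirGraph V) (r : ℕ) (L : List (RBPMove V)) : Prop :=
  ∃ t, RBPReaches G r (RBPInit G) L t ∧ ∀ v, G.IsSink v → v ∈ t.blue

def RBPCost {V : Type} (L : List (RBPMove V)) : ℕ := (L.map RBPMove.ioCost).sum

noncomputable def optRBP (G : DirGraph V) (r : ℕ) : ℕ∞ :=
  sInf ((fun L => (RBPCost L : ℕ∞)) '' {L | RBPValid G r L})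

/-! ### The partial-computing red-blue pebble game (PRBP) -/

structure PRBPState (V : Type) where
  lred : Finset V
  dred : Finset V
  blue : Finset V
  marked : Finset (V × V)

def PRBPState.red (s : PRBPState V) : Finset V := s.lred ∪ s.dred

inductive PRBPMove (V : Type) where
  | save : V → PRBPMove V
  | load : V → PRBPMove V
  | pcompute : V → V → PRBPMove V
  | delete : V → PRBPMove V

def PRBPMove.ioCost {V : Type} : PRBPMove V → ℕ
  | .save _ => 1
  | .load _ => 1
  | _ => 0

def PRBPStep (G : DirGraph V) (r : ℕ) (s : PRBPState V) :
    PRBPMove V → PRBPState V → Prop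
  | .save v, t => v ∈ s.dred ∧
      t = { s with lred := insert v s.lred, dred := s.dred.erase v,
                   blue := insert v s.blue }
  | .load v, t => v ∈ s.blue ∧ ((insert v s.lred) ∪ s.dred).card ≤ r ∧
      t = { s with lred := insert v s.lred }
  | .pcompute u v, t => G.E u v ∧ (u, v) ∉ s.marked ∧
      (∀ w, G.E w u → (w, u) ∈ s.marked) ∧ u ∈ s.red ∧
      (v ∈ s.red ∨ (v ∉ s.red ∧ v ∉ s.blue)) ∧
      ((s.lred.erase v) ∪ (insert v s.dred)).card ≤ r ∧
      t = { s with lred := s.lred.erase v, dred := insert v s.dred,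
                   blue := s.blue.erase v, marked := insert (u, v) s.marked }
  | .delete v, t =>
      (v ∈ s.lred ∧ t = { s with lred := s.lred.erase v }) ∨
      (v ∈ s.dred ∧ (∀ w, G.E v w → (v, w) ∈ s.marked) ∧
        t = { s with dred := s.dred.erase v })

inductive PRBPReaches (G : DirGraph V) (r : ℕ) :
    PRBPState V → List (PRBPMove V) → PRBPState V → Prop
  | nil (s : PRBPState V) : PRBPReaches G r s [] s
  | cons {s t u : PRBPState V} {m : PRBPMove V} {L : List (PRBPMove V)} :
      PRBPStep G r s m t → PRBPReaches G r t L u → PRBPReaches G r s (m :: L) u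

noncomputable def PRBPInit (G : DirGraph V) : PRBPState V :=
  ⟨∅, ∅, Finset.univ.filter (fun v => G.IsSource v), ∅⟩

def PRBPValid (G : DirGraph V) (r : ℕ) (L : List (PRBPMove V)) : Prop :=
  ∃ t, PRBPReaches G r (PRBPInit G) L t ∧ (∀ v, G.IsSink v → v ∈ t.blue) ∧
    ∀ u v, G.E u v → (u, v) ∈ t.marked

def PRBPCost {V : Type} (L : List (PRBPMove V)) : ℕ := (L.map PRBPMove.ioCost).sum

noncomputable def optPRBP (G : DirGraph V) (r : ℕ) : ℕ∞ :=
  sInf ((fun L => (PRBPCost L : ℕ∞)) '' {L | PRBPValid G r L})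

/-- `s` is a state reached by some prefix of the pebbling `L`. -/
def PRBPPrefixState (G : DirGraph V) (r : ℕ) (L : List (PRBPMove V))
    (s : PRBPState V) : Prop :=
  ∃ L₁ L₂, L = L₁ ++ L₂ ∧ PRBPReaches G r (PRBPInit G) L₁ s

/-! ### Paths, dominators, S-partitions -/

/-- A directed path in `G` starting at a source node. -/
def IsSourcePath (G : DirGraph V) (p : List V) : Prop :=
  p ≠ [] ∧ p.Chain' G.E ∧ ∀ h : p ≠ [], G.IsSource (p.head h)

/-- `D` is a dominator for the node set `V₀`. -/
def Dominates (G : DirGraph V) (D : Set V) (V₀ : Set V) : Prop :=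
  ∀ p : List V, IsSourcePath G p → ∀ h : p ≠ [], p.getLast h ∈ V₀ →
    ∃ d ∈ D, d ∈ p

/-- The path `p` contains an edge of `E₀` (two consecutive nodes forming it). -/
def PathContainsEdge (p : List V) (E₀ : Set (V × V)) : Prop :=
  ∃ u v, (u, v) ∈ E₀ ∧ [u, v] <:+: p

/-- `D` is an edge-dominator for the edge set `E₀`. -/
def EdgeDominates (G : DirGraph V) (D : Set V) (E₀ : Set (V × V)) : Prop :=
  ∀ p : List V, IsSourcePath G p → PathContainsEdge p E₀ → ∃ d ∈ D, d ∈ p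

/-- The terminal set of a node set `V₀`: nodes of `V₀` with no out-neighbor in `V₀`. -/
def terminalSet (G : DirGraph V) (V₀ : Set V) : Set V :=
  {v | v ∈ V₀ ∧ ∀ w, G.E v w → w ∉ V₀}

/-- The edge-terminal set of an edge set `E₀`. -/
def edgeTerminalSet (E₀ : Set (V × V)) : Set V :=
  {v | (∃ u, (u, v) ∈ E₀) ∧ ∀ w, (v, w) ∉ E₀}

/-- An `S`-partition of the DAG `G` (Hong–Kung). -/
def IsSPartition (G : DirGraph V) (S : ℕ) (k : ℕ) (P : Fin k → Set V) : Prop :=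
  (∀ v : V, ∃! i, v ∈ P i) ∧
  (∀ i j : Fin k, j < i → ∀ u v, u ∈ P i → v ∈ P j → ¬ G.E u v) ∧
  (∀ i, ∃ D : Set V, D.ncard ≤ S ∧ Dominates G D (P i)) ∧
  (∀ i, (terminalSet G (P i)).ncard ≤ S)

/-- An `S`-dominator partition of the DAG `G`: an `S`-partition without the
terminal-set condition. -/
def IsSDomPartition (G : DirGraph V) (S : ℕ) (k : ℕ) (P : Fin k → Set V) : Prop :=
  (∀ v : V, ∃! i, v ∈ P i) ∧
  (∀ i j : Fin k, j < i → ∀ u v, u ∈ P i → v ∈ P j → ¬ G.E u v) ∧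
  (∀ i, ∃ D : Set V, D.ncard ≤ S ∧ Dominates G D (P i))

/-- An `S`-edge partition of the DAG `G`. -/
def IsSEdgePartition (G : DirGraph V) (S : ℕ) (k : ℕ)
    (P : Fin k → Set (V × V)) : Prop :=
  (∀ i, P i ⊆ {e | G.E e.1 e.2}) ∧
  (∀ u v, G.E u v → ∃! i, (u, v) ∈ P i) ∧
  (∀ i j : Fin k, i < j → ∀ u v w, G.E u v → G.E v w →
      ¬ ((v, w) ∈ P i ∧ (u, v) ∈ P j)) ∧
  (∀ i, ∃ D : Set V, D.ncard ≤ S ∧ EdgeDominates G D (P i)) ∧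
  (∀ i, (edgeTerminalSet (P i)).ncard ≤ S)

noncomputable def minEdgePartition (G : DirGraph V) (S : ℕ) : ℕ :=
  sInf {k | ∃ P : Fin k → Set (V × V), IsSEdgePartition G S k P}

noncomputable def minDomPartition (G : DirGraph V) (S : ℕ) : ℕ :=
  sInf {k | ∃ P : Fin k → Set V, IsSDomPartition G S k P}

noncomputable def minSPartition (G : DirGraph V) (S : ℕ) : ℕ :=
  sInf {k | ∃ P : Fin k → Set V, IsSPartition G S k P}
namespace LGF

/-- Edge relation (on ℕ) for a chain of `m` copies of the gadget. -/
def gE (m x y : ℕ) : Prop :=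
  (x = 0 ∧ (y = 1 ∨ y = 2)) ∨
  (∃ i, i < m ∧
    ((x = 5*i+1 ∧ (y = 5*i+3 ∨ y = 5*i+4 ∨ y = 5*i+6)) ∨
     (x = 5*i+3 ∧ y = 5*i+5) ∨ (x = 5*i+4 ∧ y = 5*i+5) ∨
     (x = 5*i+5 ∧ (y = 5*i+6 ∨ y = 5*i+7)) ∨
     (x = 5*i+2 ∧ y = 5*i+7))) ∨
  ((x = 5*m+1 ∨ x = 5*m+2) ∧ y = 5*m+3)

lemma gE_lt {m x y : ℕ} (h : gE m x y) : x < y := by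
  rcases h with h | ⟨i, hi, h⟩ | h <;> omega

lemma gE_lt_n {m x y : ℕ} (h : gE m x y) : x < 5*m+4 ∧ y < 5*m+4 := by
  rcases h with h | ⟨i, hi, h⟩ | h <;> omega

/- predecessor characterizations -/
lemma pred0 {m x : ℕ} : ¬ gE m x 0 := fun h => by
  rcases h with h | ⟨i, hi, h⟩ | h <;> omega

lemma predA0 {m x : ℕ} : gE m x 1 ↔ x = 0 := by
  constructor
  · rintro (h | ⟨i, hi, h⟩ | h) <;> omega
  · intro h; exact Or.inl (by omega)

lemma predB0 {m x : ℕ} : gE m x 2 ↔ x = 0 := by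
  constructor
  · rintro (h | ⟨i, hi, h⟩ | h) <;> omega
  · intro h; exact Or.inl (by omega)

lemma predW1 {m i x : ℕ} (hi : i < m) : gE m x (5*i+3) ↔ x = 5*i+1 := by
  constructor
  · rintro (h | ⟨j, hj, h⟩ | h) <;> omega
  · intro h; exact Or.inr (Or.inl ⟨i, hi, by omega⟩)

lemma predW2 {m i x : ℕ} (hi : i < m) : gE m x (5*i+4) ↔ x = 5*i+1 := by
  constructor
  · rintro (h | ⟨j, hj, h⟩ | h) <;> omega
  · intro h; exact Or.inr (Or.inl ⟨i, hi, by omega⟩)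

lemma predW3 {m i x : ℕ} (hi : i < m) :
    gE m x (5*i+5) ↔ (x = 5*i+3 ∨ x = 5*i+4) := by
  constructor
  · rintro (h | ⟨j, hj, h⟩ | h) <;> omega
  · intro h; exact Or.inr (Or.inl ⟨i, hi, by omega⟩)

lemma predA' {m i x : ℕ} (hi : i < m) :
    gE m x (5*i+6) ↔ (x = 5*i+1 ∨ x = 5*i+5) := by
  constructor
  · rintro (h | ⟨j, hj, h⟩ | h) <;> omega
  · intro h; exact Or.inr (Or.inl ⟨i, hi, by omega⟩)

lemma predB' {m i x : ℕ} (hi : i < m) :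
    gE m x (5*i+7) ↔ (x = 5*i+2 ∨ x = 5*i+5) := by
  constructor
  · rintro (h | ⟨j, hj, h⟩ | h) <;> omega
  · intro h; exact Or.inr (Or.inl ⟨i, hi, by omega⟩)

lemma predV0 {m x : ℕ} : gE m x (5*m+3) ↔ (x = 5*m+1 ∨ x = 5*m+2) := by
  constructor
  · rintro (h | ⟨j, hj, h⟩ | h) <;> omega
  · intro h; exact Or.inr (Or.inr ⟨by omega, rfl⟩)

/- successor characterizations -/
lemma succ0 {m y : ℕ} (hm : 0 < m) : gE m 0 y ↔ (y = 1 ∨ y = 2) := by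
  constructor
  · rintro (h | ⟨j, hj, h⟩ | h) <;> omega
  · intro h; exact Or.inl ⟨rfl, h⟩

lemma succA {m i y : ℕ} (hi : i < m) :
    gE m (5*i+1) y ↔ (y = 5*i+3 ∨ y = 5*i+4 ∨ y = 5*i+6) := by
  constructor
  · rintro (h | ⟨j, hj, h⟩ | h) <;> omega
  · intro h; exact Or.inr (Or.inl ⟨i, hi, by omega⟩)

lemma succB {m i y : ℕ} (hi : i < m) : gE m (5*i+2) y ↔ y = 5*i+7 := by
  constructor
  · rintro (h | ⟨j, hj, h⟩ | h) <;> omega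
  · intro h; exact Or.inr (Or.inl ⟨i, hi, by omega⟩)

lemma succW1 {m i y : ℕ} (hi : i < m) : gE m (5*i+3) y ↔ y = 5*i+5 := by
  constructor
  · rintro (h | ⟨j, hj, h⟩ | h) <;> omega
  · intro h; exact Or.inr (Or.inl ⟨i, hi, by omega⟩)

lemma succW2 {m i y : ℕ} (hi : i < m) : gE m (5*i+4) y ↔ y = 5*i+5 := by
  constructor
  · rintro (h | ⟨j, hj, h⟩ | h) <;> omega
  · intro h; exact Or.inr (Or.inl ⟨i, hi, by omega⟩)

lemma succW3 {m i y : ℕ} (hi : i < m) :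
    gE m (5*i+5) y ↔ (y = 5*i+6 ∨ y = 5*i+7) := by
  constructor
  · rintro (h | ⟨j, hj, h⟩ | h) <;> omega
  · intro h; exact Or.inr (Or.inl ⟨i, hi, by omega⟩)

lemma succAm {m y : ℕ} : gE m (5*m+1) y ↔ y = 5*m+3 := by
  constructor
  · rintro (h | ⟨j, hj, h⟩ | h) <;> omega
  · intro h; exact Or.inr (Or.inr ⟨Or.inl rfl, h⟩)

lemma succBm {m y : ℕ} : gE m (5*m+2) y ↔ y = 5*m+3 := by
  constructor
  · rintro (h | ⟨j, hj, h⟩ | h) <;> omega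
  · intro h; exact Or.inr (Or.inr ⟨Or.inr rfl, h⟩)

lemma succV0 {m y : ℕ} : ¬ gE m (5*m+3) y := fun h => by
  rcases h with h | ⟨j, hj, h⟩ | h <;> omega

/-- classification of nodes -/
lemma classify {m v : ℕ} (hv : v < 5*m+4) :
    v = 0 ∨ v = 5*m+3 ∨
    (∃ i, i ≤ m ∧ (v = 5*i+1 ∨ v = 5*i+2)) ∨
    (∃ i, i < m ∧ (v = 5*i+3 ∨ v = 5*i+4 ∨ v = 5*i+5)) := by
  obtain ⟨q, r, hr, rfl⟩ : ∃ q r, r < 5 ∧ v = 5*q + r :=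
    ⟨v/5, v%5, Nat.mod_lt _ (by norm_num), by omega⟩
  interval_cases r
  · rcases Nat.eq_zero_or_pos q with rfl | hq
    · exact Or.inl (by omega)
    · exact Or.inr (Or.inr (Or.inr ⟨q-1, by omega, by omega⟩))
  · exact Or.inr (Or.inr (Or.inl ⟨q, by omega, by omega⟩))
  · exact Or.inr (Or.inr (Or.inl ⟨q, by omega, by omega⟩))
  · rcases Nat.lt_or_ge q m with hq | hq
    · exact Or.inr (Or.inr (Or.inr ⟨q, hq, by omega⟩))
    · exact Or.inr (Or.inl (by omega))
  · exact Or.inr (Or.inr (Or.inr ⟨q, by omega, by omega⟩))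

/-- the graph on `Fin (5*m+4)` -/
def Gm (m : ℕ) : DirGraph (Fin (5*m+4)) := ⟨fun u v => gE m u.val v.val⟩

lemma Gm_E {m : ℕ} {u v : Fin (5*m+4)} : (Gm m).E u v ↔ gE m u.val v.val :=
  Iff.rfl

lemma exists_pred {m : ℕ} (hm : 0 < m) (v : Fin (5*m+4)) (h : v.val ≠ 0) :
    ∃ u : Fin (5*m+4), gE m u.val v.val := by
  rcases classify v.isLt with h0 | h0 | ⟨i, hi, h0⟩ | ⟨i, hi, h0⟩
  · omega
  · have hg : gE m (5*m+1) v.val := by rw [h0]; exact predV0.mpr (Or.inl rfl)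
    exact ⟨⟨5*m+1, by omega⟩, hg⟩
  · rcases Nat.eq_zero_or_pos i with rfl | hipos
    · have hg : gE m 0 v.val := Or.inl (by omega)
      exact ⟨⟨0, by omega⟩, hg⟩
    · rcases h0 with h0 | h0
      · have hg : gE m (5*(i-1)+1) v.val := Or.inr (Or.inl ⟨i-1, by omega, by omega⟩)
        exact ⟨⟨5*(i-1)+1, by omega⟩, hg⟩
      · have hg : gE m (5*(i-1)+2) v.val := Or.inr (Or.inl ⟨i-1, by omega, by omega⟩)
        exact ⟨⟨5*(i-1)+2, by omega⟩, hg⟩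
  · have hg : gE m (5*i+1) v.val ∨ gE m (5*i+3) v.val := by
      rcases h0 with h0 | h0 | h0
      · exact Or.inl (by rw [h0]; exact (predW1 hi).mpr rfl)
      · exact Or.inl (by rw [h0]; exact (predW2 hi).mpr rfl)
      · exact Or.inr (by rw [h0]; exact (predW3 hi).mpr (Or.inl rfl))
    rcases hg with hg | hg
    · exact ⟨⟨5*i+1, by omega⟩, hg⟩
    · exact ⟨⟨5*i+3, by omega⟩, hg⟩

lemma exists_succ {m : ℕ} (hm : 0 < m) (v : Fin (5*m+4)) (h : v.val ≠ 5*m+3) :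
    ∃ u : Fin (5*m+4), gE m v.val u.val := by
  rcases classify v.isLt with h0 | h0 | ⟨i, hi, h0⟩ | ⟨i, hi, h0⟩
  · have hg : gE m v.val 1 := Or.inl (by omega)
    exact ⟨⟨1, by omega⟩, hg⟩
  · omega
  · rcases Nat.lt_or_ge i m with him | him
    · rcases h0 with h0 | h0
      · have hg : gE m v.val (5*i+3) := by rw [h0]; exact (succA him).mpr (Or.inl rfl)
        exact ⟨⟨5*i+3, by omega⟩, hg⟩
      · have hg : gE m v.val (5*i+7) := by rw [h0]; exact (succB him).mpr rfl
        exact ⟨⟨5*i+7, by omega⟩, hg⟩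
    · have hg : gE m v.val (5*m+3) := by
        rcases h0 with h0 | h0
        · rw [h0]; exact Or.inr (Or.inr ⟨Or.inl (by omega), rfl⟩)
        · rw [h0]; exact Or.inr (Or.inr ⟨Or.inr (by omega), rfl⟩)
      exact ⟨⟨5*m+3, by omega⟩, hg⟩
  · have hg : gE m v.val (5*i+5) ∨ gE m v.val (5*i+6) := by
      rcases h0 with h0 | h0 | h0
      · exact Or.inl (by rw [h0]; exact (succW1 hi).mpr rfl)
      · exact Or.inl (by rw [h0]; exact (succW2 hi).mpr rfl)
      · exact Or.inr (by rw [h0]; exact (succW3 hi).mpr (Or.inl rfl))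
    rcases hg with hg | hg
    · exact ⟨⟨5*i+5, by omega⟩, hg⟩
    · exact ⟨⟨5*i+6, by omega⟩, hg⟩

lemma isSource_iff {m : ℕ} (hm : 0 < m) (v : Fin (5*m+4)) :
    (Gm m).IsSource v ↔ v.val = 0 := by
  constructor
  · intro h
    by_contra hne
    obtain ⟨u, hu⟩ := exists_pred hm v hne
    exact h u hu
  · intro h u hu
    have := gE_lt hu
    have : (v : ℕ) ≠ 0 := by omega
    exact this h

lemma isSink_iff {m : ℕ} (hm : 0 < m) (v : Fin (5*m+4)) :
    (Gm m).IsSink v ↔ v.val = 5*m+3 := by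
  constructor
  · intro h
    by_contra hne
    obtain ⟨u, hu⟩ := exists_succ hm v hne
    exact h u hu
  · intro h u hu
    rw [Gm_E, h] at hu
    exact succV0 hu

lemma acyclic_Gm (m : ℕ) : (Gm m).Acyclic := by
  intro v hv
  have key : ∀ a b : Fin (5*m+4), Relation.TransGen (Gm m).E a b → a.val < b.val := by
    intro a b h
    induction h with
    | single h => exact gE_lt h
    | tail _ h ih => exact lt_trans ih (gE_lt h)
  exact absurd (key v v hv) (lt_irrefl _)

lemma noIsolated_Gm {m : ℕ} (hm : 0 < m) : (Gm m).NoIsolated := by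
  intro v
  by_cases h : v.val = 0
  · have hg : gE m v.val 1 := Or.inl (by omega)
    exact Or.inr ⟨⟨1, by omega⟩, hg⟩
  · obtain ⟨u, hu⟩ := exists_pred hm v h
    exact Or.inl ⟨u, hu⟩

end LGF
namespace LGF

lemma ncard_le_one {α : Type} (a : α) : ({a} : Set α).ncard ≤ 1 := by
  simp [Set.ncard_singleton]

lemma ncard_le_two {α : Type} (a b : α) : ({a, b} : Set α).ncard ≤ 2 :=
  (Set.ncard_insert_le a _).trans (by simp [Set.ncard_singleton])

lemma ncard_le_three {α : Type} (a b c : α) : ({a, b, c} : Set α).ncard ≤ 3 :=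
  (Set.ncard_insert_le a _).trans
    (Nat.add_le_add_right (ncard_le_two b c) 1)

lemma inDeg_le {m : ℕ} (hm : 0 < m) (v : Fin (5*m+4)) : (Gm m).inDeg v ≤ 2 := by
  have key : ∃ (a b : Fin (5*m+4)), {u : Fin (5*m+4) | (Gm m).E u v} ⊆ {a, b} := by
    rcases classify v.isLt with h0 | h0 | ⟨i, hi, h0⟩ | ⟨i, hi, h0⟩
    · refine ⟨v, v, fun u hu => ?_⟩
      have hu' : gE m u.val v.val := hu
      rw [h0] at hu'
      exact absurd hu' pred0
    · refine ⟨⟨5*m+1, by omega⟩, ⟨5*m+2, by omega⟩, fun u hu => ?_⟩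
      have : gE m u.val (5*m+3) := by rw [← h0]; exact hu
      rcases predV0.mp this with h | h
      · exact Or.inl (Fin.ext h)
      · exact Or.inr (Fin.ext h)
    · rcases Nat.eq_zero_or_pos i with rfl | hipos
      · refine ⟨⟨0, by omega⟩, ⟨0, by omega⟩, fun u hu => ?_⟩
        have hu' : gE m u.val v.val := hu
        have : u.val = 0 := by
          rcases h0 with h0 | h0
          · have h0' : v.val = 1 := by omega
            rw [h0'] at hu'; exact predA0.mp hu'
          · have h0' : v.val = 2 := by omega
            rw [h0'] at hu'; exact predB0.mp hu'
        exact Or.inl (Fin.ext this)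
      · rcases h0 with h0 | h0
        · refine ⟨⟨5*(i-1)+1, by omega⟩, ⟨5*(i-1)+5, by omega⟩, fun u hu => ?_⟩
          have hu' : gE m u.val v.val := hu
          have h0' : v.val = 5*(i-1)+6 := by omega
          rw [h0'] at hu'
          rcases (predA' (by omega)).mp hu' with h | h
          · exact Or.inl (Fin.ext h)
          · exact Or.inr (Fin.ext h)
        · refine ⟨⟨5*(i-1)+2, by omega⟩, ⟨5*(i-1)+5, by omega⟩, fun u hu => ?_⟩
          have hu' : gE m u.val v.val := hu
          have h0' : v.val = 5*(i-1)+7 := by omega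
          rw [h0'] at hu'
          rcases (predB' (by omega)).mp hu' with h | h
          · exact Or.inl (Fin.ext h)
          · exact Or.inr (Fin.ext h)
    · rcases h0 with h0 | h0 | h0
      · refine ⟨⟨5*i+1, by omega⟩, ⟨5*i+1, by omega⟩, fun u hu => ?_⟩
        have : gE m u.val v.val := hu
        rw [h0] at this
        exact Or.inl (Fin.ext ((predW1 hi).mp this))
      · refine ⟨⟨5*i+1, by omega⟩, ⟨5*i+1, by omega⟩, fun u hu => ?_⟩
        have : gE m u.val v.val := hu
        rw [h0] at this
        exact Or.inl (Fin.ext ((predW2 hi).mp this))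
      · refine ⟨⟨5*i+3, by omega⟩, ⟨5*i+4, by omega⟩, fun u hu => ?_⟩
        have : gE m u.val v.val := hu
        rw [h0] at this
        rcases (predW3 hi).mp this with h | h
        · exact Or.inl (Fin.ext h)
        · exact Or.inr (Fin.ext h)
  obtain ⟨a, b, hab⟩ := key
  exact (Set.ncard_le_ncard hab (Set.toFinite _)).trans (ncard_le_two a b)

lemma outDeg_le {m : ℕ} (hm : 0 < m) (v : Fin (5*m+4)) : (Gm m).outDeg v ≤ 3 := by
  have key : ∃ (a b c : Fin (5*m+4)),
      {u : Fin (5*m+4) | (Gm m).E v u} ⊆ {a, b, c} := by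
    rcases classify v.isLt with h0 | h0 | ⟨i, hi, h0⟩ | ⟨i, hi, h0⟩
    · refine ⟨⟨1, by omega⟩, ⟨2, by omega⟩, ⟨2, by omega⟩, fun u hu => ?_⟩
      have : gE m v.val u.val := hu
      rw [h0] at this
      rcases (succ0 hm).mp this with h | h
      · exact Or.inl (Fin.ext h)
      · exact Or.inr (Or.inl (Fin.ext h))
    · refine ⟨v, v, v, fun u hu => ?_⟩
      have : gE m v.val u.val := hu
      rw [h0] at this
      exact absurd this succV0
    · rcases Nat.lt_or_ge i m with him | him
      · rcases h0 with h0 | h0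
        · refine ⟨⟨5*i+3, by omega⟩, ⟨5*i+4, by omega⟩, ⟨5*i+6, by omega⟩,
            fun u hu => ?_⟩
          have : gE m v.val u.val := hu
          rw [h0] at this
          rcases (succA him).mp this with h | h | h
          · exact Or.inl (Fin.ext h)
          · exact Or.inr (Or.inl (Fin.ext h))
          · exact Or.inr (Or.inr (Fin.ext h))
        · refine ⟨⟨5*i+7, by omega⟩, ⟨5*i+7, by omega⟩, ⟨5*i+7, by omega⟩,
            fun u hu => ?_⟩
          have : gE m v.val u.val := hu
          rw [h0] at this
          exact Or.inl (Fin.ext ((succB him).mp this))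
      · refine ⟨⟨5*m+3, by omega⟩, ⟨5*m+3, by omega⟩, ⟨5*m+3, by omega⟩,
          fun u hu => ?_⟩
        have : gE m v.val u.val := hu
        have : u.val = 5*m+3 := by
          rcases h0 with h0 | h0
          · exact succAm.mp (by rw [← show v.val = 5*m+1 by omega]; exact this)
          · exact succBm.mp (by rw [← show v.val = 5*m+2 by omega]; exact this)
        exact Or.inl (Fin.ext this)
    · rcases h0 with h0 | h0 | h0
      · refine ⟨⟨5*i+5, by omega⟩, ⟨5*i+5, by omega⟩, ⟨5*i+5, by omega⟩,
          fun u hu => ?_⟩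
        have : gE m v.val u.val := hu
        rw [h0] at this
        exact Or.inl (Fin.ext ((succW1 hi).mp this))
      · refine ⟨⟨5*i+5, by omega⟩, ⟨5*i+5, by omega⟩, ⟨5*i+5, by omega⟩,
          fun u hu => ?_⟩
        have : gE m v.val u.val := hu
        rw [h0] at this
        exact Or.inl (Fin.ext ((succW2 hi).mp this))
      · refine ⟨⟨5*i+6, by omega⟩, ⟨5*i+7, by omega⟩, ⟨5*i+7, by omega⟩,
          fun u hu => ?_⟩
        have : gE m v.val u.val := hu
        rw [h0] at this
        rcases (succW3 hi).mp this with h | h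
        · exact Or.inl (Fin.ext h)
        · exact Or.inr (Or.inl (Fin.ext h))
  obtain ⟨a, b, c, habc⟩ := key
  exact (Set.ncard_le_ncard habc (Set.toFinite _)).trans (ncard_le_three a b c)

lemma inDeg_w30 {m : ℕ} (hm : 0 < m) :
    (Gm m).inDeg (⟨5, by omega⟩ : Fin (5*m+4)) = 2 := by
  have hset : {u : Fin (5*m+4) | (Gm m).E u ⟨5, by omega⟩} =
      {(⟨3, by omega⟩ : Fin (5*m+4)), ⟨4, by omega⟩} := by
    ext u
    constructor
    · intro hu
      have : gE m u.val 5 := hu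
      have := (predW3 (i := 0) hm).mp (by convert this using 2 <;> omega)
      rcases this with h | h
      · exact Or.inl (Fin.ext (show u.val = 3 by omega))
      · exact Or.inr (Fin.ext (show u.val = 4 by omega))
    · rintro (rfl | rfl)
      · show gE m 3 5
        exact (predW3 (i := 0) hm).mpr (Or.inl (by omega))
      · show gE m 4 5
        exact (predW3 (i := 0) hm).mpr (Or.inr (by omega))
  show Set.ncard _ = 2
  rw [hset]
  exact Set.ncard_pair (by simp [Fin.ext_iff])

lemma outDeg_A0 {m : ℕ} (hm : 0 < m) :
    (Gm m).outDeg (⟨1, by omega⟩ : Fin (5*m+4)) = 3 := by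
  have hset : {u : Fin (5*m+4) | (Gm m).E ⟨1, by omega⟩ u} =
      {(⟨3, by omega⟩ : Fin (5*m+4)), ⟨4, by omega⟩, ⟨6, by omega⟩} := by
    ext u
    constructor
    · intro hu
      have : gE m 1 u.val := hu
      have := (succA (i := 0) hm).mp (by convert this using 2 <;> omega)
      rcases this with h | h | h
      · exact Or.inl (Fin.ext (show u.val = 3 by omega))
      · exact Or.inr (Or.inl (Fin.ext (show u.val = 4 by omega)))
      · exact Or.inr (Or.inr (Fin.ext (show u.val = 6 by omega)))
    · rintro (rfl | rfl | rfl)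
      · show gE m 1 3
        exact (succA (i := 0) hm).mpr (by omega)
      · show gE m 1 4
        exact (succA (i := 0) hm).mpr (by omega)
      · show gE m 1 6
        exact (succA (i := 0) hm).mpr (by omega)
  show Set.ncard _ = 3
  rw [hset]
  rw [Set.ncard_insert_of_notMem (by simp [Fin.ext_iff]) (Set.toFinite _)]
  rw [Set.ncard_pair (by simp [Fin.ext_iff])]

lemma maxInDeg_Gm {m : ℕ} (hm : 0 < m) : (Gm m).maxInDeg = 2 := by
  apply le_antisymm
  · exact Finset.sup_le fun v _ => inDeg_le hm v
  · have := Finset.le_sup (f := (Gm m).inDeg) (Finset.mem_univ ⟨5, by omega⟩)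
    rwa [inDeg_w30 hm] at this

lemma maxOutDeg_Gm {m : ℕ} (hm : 0 < m) : (Gm m).maxOutDeg = 3 := by
  apply le_antisymm
  · exact Finset.sup_le fun v _ => outDeg_le hm v
  · have := Finset.le_sup (f := (Gm m).outDeg) (Finset.mem_univ ⟨1, by omega⟩)
    rwa [outDeg_A0 hm] at this

end LGF
namespace LGF

lemma card_le_sum {α : Type} [DecidableEq α] (c : α → ℕ) :
    ∀ (L : List α) (S : Finset α), (∀ x ∈ S, x ∈ L ∧ c x = 1) →
      S.card ≤ (L.map c).sum := by
  intro L
  induction L with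
  | nil =>
      intro S hS
      have : S = ∅ := Finset.eq_empty_of_forall_notMem fun x hx => by
        simpa using (hS x hx).1
      simp [this]
  | cons a L ih =>
      intro S hS
      have h' := ih (S.erase a) (fun x hx => by
        obtain ⟨hxa, hxS⟩ := Finset.mem_erase.mp hx
        obtain ⟨hmem, hc⟩ := hS x hxS
        refine ⟨?_, hc⟩
        rcases List.mem_cons.mp hmem with rfl | h
        · exact absurd rfl hxa
        · exact h)
      by_cases ha : a ∈ S
      · have : S.card = (S.erase a).card + 1 := by
          rw [Finset.card_erase_of_mem ha]
          have := Finset.card_pos.mpr ⟨a, ha⟩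
          omega
        have hca : c a = 1 := (hS a ha).2
        simp only [List.map_cons, List.sum_cons, hca]
        omega
      · have : S.card = (S.erase a).card := by rw [Finset.erase_eq_of_notMem ha]
        simp only [List.map_cons, List.sum_cons]
        omega

section RBPInfra

variable {V : Type} [Fintype V] [DecidableEq V] {G : DirGraph V} {r : ℕ}

def StepAt (G : DirGraph V) (r : ℕ) (L : List (RBPMove V))
    (f : ℕ → RBPState V) : Prop :=
  ∀ j (h : j < L.length), RBPStep G r (f j) (L.get ⟨j, h⟩) (f (j+1))

lemma exists_trace {s t : RBPState V} {L : List (RBPMove V)}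
    (h : RBPReaches G r s L t) :
    ∃ f : ℕ → RBPState V, f 0 = s ∧ (∀ j, L.length ≤ j → f j = t) ∧
      StepAt G r L f := by
  induction h with
  | nil s => exact ⟨fun _ => s, rfl, fun _ _ => rfl, fun j h => absurd h (by simp)⟩
  | @cons s t u mv L st rest ih =>
      obtain ⟨f, hf0, hfl, hstep⟩ := ih
      refine ⟨fun j => match j with | 0 => s | (j'+1) => f j', rfl, ?_, ?_⟩
      · intro j hj
        match j with
        | (j'+1) => exact hfl j' (by simpa using hj)
      · intro j hj
        match j with
        | 0 => show RBPStep G r s ((mv :: L).get ⟨0, hj⟩) (f 0); rw [hf0]; exact st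
        | (j'+1) => exact hstep j' (by simpa using hj)

/- single-step facts -/
lemma step_computed_mono {s t : RBPState V} {mv : RBPMove V}
    (h : RBPStep G r s mv t) : s.computed ⊆ t.computed := by
  cases mv with
  | save v => obtain ⟨_, rfl⟩ := h; exact subset_rfl
  | load v => obtain ⟨_, _, rfl⟩ := h; exact subset_rfl
  | compute v => obtain ⟨_, _, _, _, rfl⟩ := h; exact Finset.subset_insert _ _
  | delete v => obtain ⟨_, rfl⟩ := h; exact subset_rfl

lemma step_blue_mono {s t : RBPState V} {mv : RBPMove V}
    (h : RBPStep G r s mv t) : s.blue ⊆ t.blue := by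
  cases mv with
  | save v => obtain ⟨_, rfl⟩ := h; exact Finset.subset_insert _ _
  | load v => obtain ⟨_, _, rfl⟩ := h; exact subset_rfl
  | compute v => obtain ⟨_, _, _, _, rfl⟩ := h; exact subset_rfl
  | delete v => obtain ⟨_, rfl⟩ := h; exact subset_rfl

lemma step_red_insert {s t : RBPState V} {mv : RBPMove V} {v : V}
    (h : RBPStep G r s mv t) (h1 : v ∈ t.red) (h2 : v ∉ s.red) :
    mv = .load v ∨ mv = .compute v := by
  cases mv with
  | save w => obtain ⟨_, rfl⟩ := h; exact absurd h1 h2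
  | load w =>
      obtain ⟨_, _, rfl⟩ := h
      rcases Finset.mem_insert.mp h1 with rfl | h1
      · exact Or.inl rfl
      · exact absurd h1 h2
  | compute w =>
      obtain ⟨_, _, _, _, rfl⟩ := h
      rcases Finset.mem_insert.mp h1 with rfl | h1
      · exact Or.inr rfl
      · exact absurd h1 h2
  | delete w =>
      obtain ⟨_, rfl⟩ := h
      exact absurd (Finset.mem_of_mem_erase h1) h2

lemma step_computed_insert {s t : RBPState V} {mv : RBPMove V} {v : V}
    (h : RBPStep G r s mv t) (h1 : v ∈ t.computed) (h2 : v ∉ s.computed) :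
    mv = .compute v := by
  cases mv with
  | save w => obtain ⟨_, rfl⟩ := h; exact absurd h1 h2
  | load w => obtain ⟨_, _, rfl⟩ := h; exact absurd h1 h2
  | compute w =>
      obtain ⟨_, _, _, _, rfl⟩ := h
      rcases Finset.mem_insert.mp h1 with rfl | h1
      · rfl
      · exact absurd h1 h2
  | delete w => obtain ⟨_, rfl⟩ := h; exact absurd h1 h2

/- the compute-step conditions -/
lemma compute_spec {s t : RBPState V} {v : V}
    (h : RBPStep G r s (.compute v) t) :
    ¬ G.IsSource v ∧ v ∉ s.computed ∧ (∀ u, G.E u v → u ∈ s.red) ∧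
      (insert v s.red).card ≤ r :=
  ⟨h.1, h.2.1, h.2.2.1, h.2.2.2.1⟩

/- Goodness invariant -/
def GoodS (G : DirGraph V) (s : RBPState V) : Prop :=
  ∀ v, ¬ G.IsSource v → (v ∈ s.red ∨ v ∈ s.blue) → v ∈ s.computed

lemma good_init : GoodS G (RBPInit G) := by
  intro v hv h
  rcases h with h | h
  · simp [RBPInit] at h
  · simp [RBPInit] at h
    exact absurd h hv

lemma good_step {s t : RBPState V} {mv : RBPMove V}
    (h : RBPStep G r s mv t) (hs : GoodS G s) : GoodS G t := by
  cases mv with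
  | save w =>
      obtain ⟨hw, rfl⟩ := h
      intro v hv hmem
      rcases hmem with hmem | hmem
      · exact hs v hv (Or.inl hmem)
      · rcases Finset.mem_insert.mp hmem with rfl | hmem
        · exact hs v hv (Or.inl hw)
        · exact hs v hv (Or.inr hmem)
  | load w =>
      obtain ⟨hw, _, rfl⟩ := h
      intro v hv hmem
      rcases hmem with hmem | hmem
      · rcases Finset.mem_insert.mp hmem with rfl | hmem
        · exact hs v hv (Or.inr hw)
        · exact hs v hv (Or.inl hmem)
      · exact hs v hv (Or.inr hmem)
  | compute w =>
      obtain ⟨_, _, _, _, rfl⟩ := h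
      intro v hv hmem
      rcases hmem with hmem | hmem
      · rcases Finset.mem_insert.mp hmem with rfl | hmem
        · exact Finset.mem_insert_self _ _
        · exact Finset.mem_insert_of_mem (hs v hv (Or.inl hmem))
      · exact Finset.mem_insert_of_mem (hs v hv (Or.inr hmem))
  | delete w =>
      obtain ⟨hw, rfl⟩ := h
      intro v hv hmem
      rcases hmem with hmem | hmem
      · exact hs v hv (Or.inl (Finset.mem_of_mem_erase hmem))
      · exact hs v hv (Or.inr hmem)

section Trace

variable {L : List (RBPMove V)} {f : ℕ → RBPState V}

lemma good_at (h0 : f 0 = RBPInit G) (hstep : StepAt G r L f) :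
    ∀ j, j ≤ L.length → GoodS G (f j) := by
  intro j
  induction j with
  | zero => intro _; rw [h0]; exact good_init
  | succ n ih =>
      intro hj
      exact good_step (hstep n (by omega)) (ih (by omega))

lemma computed_mono (hstep : StepAt G r L f) {j j' : ℕ} (hjj : j ≤ j')
    (hj' : j' ≤ L.length) : (f j).computed ⊆ (f j').computed := by
  induction j' with
  | zero => have : j = 0 := by omega
            rw [this]
  | succ n ih =>
      rcases Nat.eq_or_lt_of_le hjj with rfl | hlt
      · exact subset_rfl
      · exact (ih (by omega) (by omega)).trans
          (step_computed_mono (hstep n (by omega)))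

lemma blue_mono (hstep : StepAt G r L f) {j j' : ℕ} (hjj : j ≤ j')
    (hj' : j' ≤ L.length) : (f j).blue ⊆ (f j').blue := by
  induction j' with
  | zero => have : j = 0 := by omega
            rw [this]
  | succ n ih =>
      rcases Nat.eq_or_lt_of_le hjj with rfl | hlt
      · exact subset_rfl
      · exact (ih (by omega) (by omega)).trans
          (step_blue_mono (hstep n (by omega)))

lemma exists_compute_of_computed (h0 : f 0 = RBPInit G)
    (hstep : StepAt G r L f) {v : V} {j : ℕ} (hj : j ≤ L.length)
    (hv : v ∈ (f j).computed) :
    ∃ j', ∃ h : j' < L.length, j' < j ∧ L.get ⟨j', h⟩ = .compute v := by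
  induction j with
  | zero => rw [h0] at hv; simp [RBPInit] at hv
  | succ n ih =>
      by_cases hn : v ∈ (f n).computed
      · obtain ⟨j', h', hlt, hget⟩ := ih (by omega) hn
        exact ⟨j', h', by omega, hget⟩
      · exact ⟨n, by omega, by omega,
          step_computed_insert (hstep n (by omega)) hv hn⟩

lemma exists_red_insert (hstep : StepAt G r L f) {v : V} {j j' : ℕ}
    (hle : j ≤ j') (hj' : j' ≤ L.length) (h1 : v ∉ (f j).red)
    (h2 : v ∈ (f j').red) :
    ∃ a, ∃ h : a < L.length, j ≤ a ∧ a < j' ∧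
      (L.get ⟨a, h⟩ = .load v ∨ L.get ⟨a, h⟩ = .compute v) := by
  induction j' with
  | zero => have : j = 0 := by omega
            rw [this] at h1; exact absurd h2 h1
  | succ n ih =>
      rcases Nat.eq_or_lt_of_le hle with rfl | hlt
      · exact absurd h2 h1
      · by_cases hn : v ∈ (f n).red
        · obtain ⟨a, h, ha1, ha2, ha3⟩ := ih (by omega) (by omega) hn
          exact ⟨a, h, ha1, by omega, ha3⟩
        · exact ⟨n, by omega, by omega, by omega,
            step_red_insert (hstep n (by omega)) h2 hn⟩

lemma compute_lt_of_computed (hstep : StepAt G r L f) {v : V} {j j' : ℕ}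
    (hj : j ≤ L.length) {h' : j' < L.length}
    (hget : L.get ⟨j', h'⟩ = .compute v) (hv : v ∈ (f j).computed) :
    j' < j := by
  by_contra hcon
  push_neg at hcon
  have hv' : v ∈ (f j').computed :=
    computed_mono hstep hcon (by omega) hv
  have := hstep j' h'
  rw [hget] at this
  exact (compute_spec this).2.1 hv'

end Trace

end RBPInfra

end LGF
namespace LGF

lemma rbp_lower {m : ℕ} (hm : 0 < m) {L : List (RBPMove (Fin (5*m+4)))}
    (hL : RBPValid (Gm m) 4 L) : m ≤ RBPCost L := by
  obtain ⟨t, hreach, hsinks⟩ := hL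
  obtain ⟨f, hf0, hflen, hstep⟩ := exists_trace hreach
  have hgood : ∀ j, j ≤ L.length → GoodS (Gm m) (f j) := good_at hf0 hstep
  have hns : ∀ v : Fin (5*m+4), v.val ≠ 0 → ¬ (Gm m).IsSource v :=
    fun v hv hs => hv ((isSource_iff hm v).mp hs)
  -- every non-source node is computed at some step
  have hall : ∀ v : Fin (5*m+4), v.val ≠ 0 →
      ∃ j', ∃ h : j' < L.length, L.get ⟨j', h⟩ = .compute v := by
    suffices H : ∀ d (v : Fin (5*m+4)), 5*m+4 - v.val ≤ d → v.val ≠ 0 →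
        ∃ j', ∃ h : j' < L.length, L.get ⟨j', h⟩ = .compute v by
      exact fun v hv => H (5*m+4) v (by omega) hv
    intro d
    induction d with
    | zero => intro v h0 _; exact absurd h0 (by have := v.isLt; omega)
    | succ d ih =>
        intro v hvd hv0
        by_cases hsink : v.val = 5*m+3
        · have hb : v ∈ (f L.length).blue := by
            rw [hflen L.length le_rfl]
            exact hsinks v ((isSink_iff hm v).mpr hsink)
          have hc : v ∈ (f L.length).computed :=
            hgood L.length le_rfl v (hns v hv0) (Or.inr hb)
          obtain ⟨j', h', _, hget⟩ :=
            exists_compute_of_computed hf0 hstep le_rfl hc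
          exact ⟨j', h', hget⟩
        · obtain ⟨u, hu⟩ := exists_succ hm v hsink
          have hu0 : u.val ≠ 0 := by have := gE_lt hu; omega
          have hd : 5*m+4 - u.val ≤ d := by
            have := gE_lt hu; have := u.isLt; omega
          obtain ⟨j', h', hget⟩ := ih u hd hu0
          have hstep' := hstep j' h'
          rw [hget] at hstep'
          have hred : v ∈ (f j').red := (compute_spec hstep').2.2.1 v hu
          have hcomp : v ∈ (f j').computed :=
            hgood j' (le_of_lt h') v (hns v hv0) (Or.inl hred)
          obtain ⟨j'', h'', _, hget''⟩ :=
            exists_compute_of_computed hf0 hstep (le_of_lt h') hcomp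
          exact ⟨j'', h'', hget''⟩
  -- per-gadget: some node in {5i, 5i+1, 5i+2} gets loaded
  have hgadget : ∀ i, i < m → ∃ z : Fin (5*m+4),
      (z.val = 5*i ∨ z.val = 5*i+1 ∨ z.val = 5*i+2) ∧ (RBPMove.load z) ∈ L := by
    intro i hi
    have hp : (5:ℕ)*i < 5*m+4 := by omega
    have ha : (5:ℕ)*i+1 < 5*m+4 := by omega
    have hb : (5:ℕ)*i+2 < 5*m+4 := by omega
    have h1 : (5:ℕ)*i+3 < 5*m+4 := by omega
    have h2 : (5:ℕ)*i+4 < 5*m+4 := by omega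
    have h3 : (5:ℕ)*i+5 < 5*m+4 := by omega
    have h6 : (5:ℕ)*i+6 < 5*m+4 := by omega
    have h7 : (5:ℕ)*i+7 < 5*m+4 := by omega
    -- the compute step of w3
    obtain ⟨j3, hj3len, hj3get⟩ := hall ⟨5*i+5, h3⟩ (show 5*i+5 ≠ 0 by omega)
    have hs3 := hstep j3 hj3len
    rw [hj3get] at hs3
    obtain ⟨hns3, hnc3, hpre3, hcard3⟩ := compute_spec hs3
    have hw1red : (⟨5*i+3, h1⟩ : Fin (5*m+4)) ∈ (f j3).red :=
      hpre3 _ ((predW3 hi).mpr (Or.inl rfl))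
    have hw2red : (⟨5*i+4, h2⟩ : Fin (5*m+4)) ∈ (f j3).red :=
      hpre3 _ ((predW3 hi).mpr (Or.inr rfl))
    have hw3notred : (⟨5*i+5, h3⟩ : Fin (5*m+4)) ∉ (f j3).red := fun hmem =>
      hnc3 (hgood j3 (le_of_lt hj3len) _ (hns _ (show 5*i+5 ≠ 0 by omega))
        (Or.inl hmem))
    by_cases hared : (⟨5*i+1, ha⟩ : Fin (5*m+4)) ∈ (f j3).red
    · -- CASE 2 : u1 is red when w3 is computed
      -- then nothing else is red at that moment
      have honly : ∀ x : Fin (5*m+4), x ∈ (f j3).red →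
          x.val = 5*i+3 ∨ x.val = 5*i+4 ∨ x.val = 5*i+1 := by
        intro x hx
        by_contra hcon
        push_neg at hcon
        obtain ⟨hc1, hc2, hc3⟩ := hcon
        have hxw3 : x ≠ ⟨5*i+5, h3⟩ := fun h => hw3notred (h ▸ hx)
        have hxval : x.val ≠ 5*i+5 := fun h => hxw3 (Fin.ext h)
        have hsub : ({⟨5*i+5, h3⟩, ⟨5*i+3, h1⟩, ⟨5*i+4, h2⟩, ⟨5*i+1, ha⟩, x} :
            Finset (Fin (5*m+4))) ⊆ insert ⟨5*i+5, h3⟩ (f j3).red := by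
          intro y hy
          simp only [Finset.mem_insert, Finset.mem_singleton] at hy
          rcases hy with rfl | rfl | rfl | rfl | rfl
          · exact Finset.mem_insert_self _ _
          · exact Finset.mem_insert_of_mem hw1red
          · exact Finset.mem_insert_of_mem hw2red
          · exact Finset.mem_insert_of_mem hared
          · exact Finset.mem_insert_of_mem hx
        have hcard5 : ({⟨5*i+5, h3⟩, ⟨5*i+3, h1⟩, ⟨5*i+4, h2⟩, ⟨5*i+1, ha⟩, x} :
            Finset (Fin (5*m+4))).card = 5 := by
          have hxv := x.isLt
          rw [Finset.card_insert_of_notMem (by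
            simp only [Finset.mem_insert, Finset.mem_singleton, Fin.ext_iff,
              Fin.val_mk]
            omega)]
          rw [Finset.card_insert_of_notMem (by
            simp only [Finset.mem_insert, Finset.mem_singleton, Fin.ext_iff,
              Fin.val_mk]
            omega)]
          rw [Finset.card_insert_of_notMem (by
            simp only [Finset.mem_insert, Finset.mem_singleton, Fin.ext_iff,
              Fin.val_mk]
            omega)]
          rw [Finset.card_pair (by
            intro hcc
            have : 5*i+1 = x.val := congrArg Fin.val hcc
            omega)]
        have hle := Finset.card_le_card hsub
        rw [hcard5] at hle
        omega
      have hbnotred : (⟨5*i+2, hb⟩ : Fin (5*m+4)) ∉ (f j3).red := fun hmem => by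
        have h' : 5*i+2 = 5*i+3 ∨ 5*i+2 = 5*i+4 ∨ 5*i+2 = 5*i+1 := honly _ hmem
        omega
      have hpnotred : (⟨5*i, hp⟩ : Fin (5*m+4)) ∉ (f j3).red := fun hmem => by
        have h' : 5*i = 5*i+3 ∨ 5*i = 5*i+4 ∨ 5*i = 5*i+1 := honly _ hmem
        omega
      by_cases hbc : (⟨5*i+2, hb⟩ : Fin (5*m+4)) ∈ (f j3).computed
      · -- u2 computed before; needed red again at compute time of B'
        obtain ⟨jb', hb'len, hb'get⟩ := hall ⟨5*i+7, h7⟩ (show 5*i+7 ≠ 0 by omega)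
        have hsb' := hstep jb' hb'len
        rw [hb'get] at hsb'
        have hbred : (⟨5*i+2, hb⟩ : Fin (5*m+4)) ∈ (f jb').red :=
          (compute_spec hsb').2.2.1 _ ((predB' hi).mpr (Or.inl rfl))
        have hw3red' : (⟨5*i+5, h3⟩ : Fin (5*m+4)) ∈ (f jb').red :=
          (compute_spec hsb').2.2.1 _ ((predB' hi).mpr (Or.inr rfl))
        have hw3comp' : (⟨5*i+5, h3⟩ : Fin (5*m+4)) ∈ (f jb').computed :=
          hgood jb' (le_of_lt hb'len) _ (hns _ (show 5*i+5 ≠ 0 by omega))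
            (Or.inl hw3red')
        have hj3lt : j3 < jb' :=
          compute_lt_of_computed hstep (le_of_lt hb'len) hj3get hw3comp'
        obtain ⟨jl, hjllen, hge, hlt, hdd⟩ := exists_red_insert hstep
          (le_of_lt hj3lt) (le_of_lt hb'len) hbnotred hbred
        rcases hdd with hdd | hdd
        · exact ⟨⟨5*i+2, hb⟩, Or.inr (Or.inr rfl), by
            rw [← hdd]; exact List.get_mem L _⟩
        · have hsl := hstep jl hjllen
          rw [hdd] at hsl
          exact absurd (computed_mono hstep hge (le_of_lt hjllen) hbc)
            (compute_spec hsl).2.1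
      · -- u2 computed after the w3 step; its predecessor p = 5i must be red then
        obtain ⟨jb, hblen, hbget⟩ := hall ⟨5*i+2, hb⟩ (show 5*i+2 ≠ 0 by omega)
        have hsb := hstep jb hblen
        rw [hbget] at hsb
        have hj3jb : j3 < jb := by
          rcases lt_trichotomy jb j3 with h | h | h
          · exfalso
            have hmem : (⟨5*i+2, hb⟩ : Fin (5*m+4)) ∈ (f (jb+1)).computed := by
              obtain ⟨_, _, _, _, heq⟩ := hsb
              rw [heq]
              exact Finset.mem_insert_self _ _
            exact hbc (computed_mono hstep (by omega) (le_of_lt hj3len) hmem)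
          · exfalso
            subst h
            have hcc := hj3get.symm.trans hbget
            have heq : (⟨5*i+5, h3⟩ : Fin (5*m+4)) = ⟨5*i+2, hb⟩ :=
              RBPMove.compute.inj hcc
            have hvv : 5*i+5 = 5*i+2 := congrArg Fin.val heq
            omega
          · exact h
        have hpedge : gE m (5*i) (5*i+2) := by
          rcases Nat.eq_zero_or_pos i with rfl | hip
          · exact Or.inl (by omega)
          · exact Or.inr (Or.inl ⟨i-1, by omega, by omega⟩)
        have hpred : (⟨5*i, hp⟩ : Fin (5*m+4)) ∈ (f jb).red :=
          (compute_spec hsb).2.2.1 _ hpedge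
        rcases Nat.eq_zero_or_pos i with rfl | hip
        · -- i = 0 : p = u0 is the source; it must have been loaded
          have hp0 : (⟨5*0, hp⟩ : Fin (5*m+4)) ∉ (f 0).red := by
            rw [hf0]; simp [RBPInit]
          obtain ⟨jl, hjllen, hge, hlt, hdd⟩ := exists_red_insert hstep
            (Nat.zero_le jb) (le_of_lt hblen) hp0 hpred
          rcases hdd with hdd | hdd
          · exact ⟨⟨5*0, hp⟩, Or.inl rfl, by
              rw [← hdd]; exact List.get_mem L _⟩
          · have hsl := hstep jl hjllen
            rw [hdd] at hsl
            exact absurd ((isSource_iff hm _).mpr rfl) hsl.1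
        · -- i ≥ 1 : p = w3 of the previous gadget
          have hpa : gE m (5*i) (5*i+1) :=
            Or.inr (Or.inl ⟨i-1, by omega, by omega⟩)
          have hacomp : (⟨5*i+1, ha⟩ : Fin (5*m+4)) ∈ (f j3).computed :=
            hgood j3 (le_of_lt hj3len) _ (hns _ (show 5*i+1 ≠ 0 by omega))
              (Or.inl hared)
          obtain ⟨ja, hjalen, hjalt, hjaget⟩ :=
            exists_compute_of_computed hf0 hstep (le_of_lt hj3len) hacomp
          have hsa := hstep ja hjalen
          rw [hjaget] at hsa
          have hpreda : (⟨5*i, hp⟩ : Fin (5*m+4)) ∈ (f ja).red :=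
            (compute_spec hsa).2.2.1 _ hpa
          have hpcomp : (⟨5*i, hp⟩ : Fin (5*m+4)) ∈ (f j3).computed := by
            have := hgood ja (le_of_lt hjalen) _ (hns _ (show 5*i ≠ 0 by omega))
              (Or.inl hpreda)
            exact computed_mono hstep (le_of_lt hjalt) (le_of_lt hj3len) this
          obtain ⟨jl, hjllen, hge, hlt, hdd⟩ := exists_red_insert hstep
            (le_of_lt hj3jb) (le_of_lt hblen) hpnotred hpred
          rcases hdd with hdd | hdd
          · exact ⟨⟨5*i, hp⟩, Or.inl rfl, by
              rw [← hdd]; exact List.get_mem L _⟩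
          · have hsl := hstep jl hjllen
            rw [hdd] at hsl
            exact absurd (computed_mono hstep hge (le_of_lt hjllen) hpcomp)
              (compute_spec hsl).2.1
    · -- CASE 1 : u1 is not red when w3 is computed, but needed later for A'
      have hw1comp : (⟨5*i+3, h1⟩ : Fin (5*m+4)) ∈ (f j3).computed :=
        hgood j3 (le_of_lt hj3len) _ (hns _ (show 5*i+3 ≠ 0 by omega))
          (Or.inl hw1red)
      obtain ⟨jw1, hw1len, hjw1lt, hw1get⟩ :=
        exists_compute_of_computed hf0 hstep (le_of_lt hj3len) hw1comp
      have hsw1 := hstep jw1 hw1len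
      rw [hw1get] at hsw1
      have hared1 : (⟨5*i+1, ha⟩ : Fin (5*m+4)) ∈ (f jw1).red :=
        (compute_spec hsw1).2.2.1 _ ((predW1 hi).mpr rfl)
      have hacomp : (⟨5*i+1, ha⟩ : Fin (5*m+4)) ∈ (f j3).computed := by
        have := hgood jw1 (le_of_lt hw1len) _ (hns _ (show 5*i+1 ≠ 0 by omega))
          (Or.inl hared1)
        exact computed_mono hstep (le_of_lt hjw1lt) (le_of_lt hj3len) this
      obtain ⟨ja', ha'len, ha'get⟩ := hall ⟨5*i+6, h6⟩ (show 5*i+6 ≠ 0 by omega)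
      have hsa' := hstep ja' ha'len
      rw [ha'get] at hsa'
      have hared2 : (⟨5*i+1, ha⟩ : Fin (5*m+4)) ∈ (f ja').red :=
        (compute_spec hsa').2.2.1 _ ((predA' hi).mpr (Or.inl rfl))
      have hw3red' : (⟨5*i+5, h3⟩ : Fin (5*m+4)) ∈ (f ja').red :=
        (compute_spec hsa').2.2.1 _ ((predA' hi).mpr (Or.inr rfl))
      have hw3comp' : (⟨5*i+5, h3⟩ : Fin (5*m+4)) ∈ (f ja').computed :=
        hgood ja' (le_of_lt ha'len) _ (hns _ (show 5*i+5 ≠ 0 by omega))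
          (Or.inl hw3red')
      have hj3lt : j3 < ja' :=
        compute_lt_of_computed hstep (le_of_lt ha'len) hj3get hw3comp'
      obtain ⟨jl, hjllen, hge, hlt, hdd⟩ := exists_red_insert hstep
        (le_of_lt hj3lt) (le_of_lt ha'len) hared hared2
      rcases hdd with hdd | hdd
      · exact ⟨⟨5*i+1, ha⟩, Or.inr (Or.inl rfl), by
          rw [← hdd]; exact List.get_mem L _⟩
      · have hsl := hstep jl hjllen
        rw [hdd] at hsl
        exact absurd (computed_mono hstep hge (le_of_lt hjllen) hacomp)
          (compute_spec hsl).2.1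
  -- counting the loads
  have hchoice : ∀ i : Fin m, ∃ z : Fin (5*m+4),
      (z.val = 5*i.val ∨ z.val = 5*i.val+1 ∨ z.val = 5*i.val+2) ∧
        (RBPMove.load z) ∈ L := fun i => hgadget i.val i.isLt
  choose z hz1 hz2 using hchoice
  have hinj : Function.Injective (fun i : Fin m => RBPMove.load (z i)) := by
    intro i i' h
    simp only [RBPMove.load.injEq] at h
    have hv : (z i).val = (z i').val := by rw [h]
    have h1 := hz1 i
    have h2 := hz1 i'
    apply Fin.ext
    omega
  have hcard : (Finset.univ.image
      (fun i : Fin m => RBPMove.load (z i))).card = m := by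
    rw [Finset.card_image_of_injective _ hinj, Finset.card_univ,
      Fintype.card_fin]
  calc m = _ := hcard.symm
    _ ≤ RBPCost L := by
        apply card_le_sum
        intro x hx
        obtain ⟨i, _, rfl⟩ := Finset.mem_image.mp hx
        exact ⟨hz2 i, rfl⟩

end LGF
namespace LGF

section CardHelpers
variable {α : Type} [DecidableEq α]

lemma cle_1 (x1 : α) : ({x1} : Finset α).card ≤ 1 := by simp
lemma cle_2 (x1 x2 : α) : ({x1, x2} : Finset α).card ≤ 2 :=
  le_trans (Finset.card_insert_le _ _) (by have := cle_1 x2; omega)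
lemma cle_3 (x1 x2 x3 : α) : ({x1, x2, x3} : Finset α).card ≤ 3 :=
  le_trans (Finset.card_insert_le _ _) (by have := cle_2 x2 x3; omega)
lemma cle_4 (x1 x2 x3 x4 : α) : ({x1, x2, x3, x4} : Finset α).card ≤ 4 :=
  le_trans (Finset.card_insert_le _ _) (by have := cle_3 x2 x3 x4; omega)
lemma cle4_1 (x1 : α) : ({x1} : Finset α).card ≤ 4 :=
  le_trans (cle_1 x1) (by omega)
lemma cle4_2 (x1 x2 : α) : ({x1, x2} : Finset α).card ≤ 4 :=
  le_trans (cle_2 x1 x2) (by omega)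
lemma cle4_3 (x1 x2 x3 : α) : ({x1, x2, x3} : Finset α).card ≤ 4 :=
  le_trans (cle_3 x1 x2 x3) (by omega)
lemma cle4_4 (x1 x2 x3 x4 : α) : ({x1, x2, x3, x4} : Finset α).card ≤ 4 :=
  cle_4 x1 x2 x3 x4
end CardHelpers

section RBPUpper

variable {V : Type} [Fintype V] [DecidableEq V] {G : DirGraph V} {r : ℕ}

lemma reaches_append {s t u : RBPState V} {L1 L2 : List (RBPMove V)}
    (h1 : RBPReaches G r s L1 t) (h2 : RBPReaches G r t L2 u) :
    RBPReaches G r s (L1 ++ L2) u := by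
  induction h1 with
  | nil => exact h2
  | cons st _ ih => exact RBPReaches.cons st (ih h2)

lemma RBPCost_append {V : Type} (L1 L2 : List (RBPMove V)) :
    RBPCost (L1 ++ L2) = RBPCost L1 + RBPCost L2 := by
  simp [RBPCost]

end RBPUpper

lemma rbp_gadget {m i : ℕ} (hi : i < m) (B C : Finset (Fin (5*m+4)))
    (hC : ∀ x ∈ C, x.val ≤ 5*i+2) :
    ∃ (L : List (RBPMove (Fin (5*m+4)))) (C' : Finset (Fin (5*m+4))),
      RBPCost L = 2 ∧ (∀ x ∈ C', x.val ≤ 5*i+7) ∧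
      RBPReaches (Gm m) 4
        ⟨{⟨5*i+1, by omega⟩, ⟨5*i+2, by omega⟩}, B, C⟩ L
        ⟨{⟨5*i+6, by omega⟩, ⟨5*i+7, by omega⟩}, insert ⟨5*i+1, by omega⟩ B,
          C'⟩ := by
  have hm : 0 < m := by omega
  have hnsrc : ∀ (x : ℕ) (h : x < 5*m+4), x ≠ 0 →
      ¬ (Gm m).IsSource (⟨x, h⟩ : Fin (5*m+4)) := fun x h hx hs =>
    hx ((isSource_iff hm _).mp hs)
  refine ⟨[.compute ⟨5*i+3, by omega⟩, .compute ⟨5*i+4, by omega⟩,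
    .save ⟨5*i+1, by omega⟩, .delete ⟨5*i+1, by omega⟩,
    .compute ⟨5*i+5, by omega⟩, .delete ⟨5*i+3, by omega⟩,
    .delete ⟨5*i+4, by omega⟩, .load ⟨5*i+1, by omega⟩,
    .compute ⟨5*i+6, by omega⟩, .delete ⟨5*i+1, by omega⟩,
    .compute ⟨5*i+7, by omega⟩, .delete ⟨5*i+5, by omega⟩,
    .delete ⟨5*i+2, by omega⟩],
    insert ⟨5*i+7, by omega⟩ (insert ⟨5*i+6, by omega⟩ (insert ⟨5*i+5, by omega⟩
      (insert ⟨5*i+4, by omega⟩ (insert ⟨5*i+3, by omega⟩ C)))), ?_, ?_, ?_⟩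
  · rfl
  · intro x hx
    simp only [Finset.mem_insert] at hx
    rcases hx with rfl | rfl | rfl | rfl | rfl | hx
    · exact (by omega : 5*i+7 ≤ 5*i+7)
    · exact (by omega : 5*i+6 ≤ 5*i+7)
    · exact (by omega : 5*i+5 ≤ 5*i+7)
    · exact (by omega : 5*i+4 ≤ 5*i+7)
    · exact (by omega : 5*i+3 ≤ 5*i+7)
    · exact le_trans (hC x hx) (by omega)
  -- the run itself
  -- step 1 : compute w1
  · refine RBPReaches.cons (t := ⟨{⟨5*i+3, by omega⟩, ⟨5*i+1, by omega⟩,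
      ⟨5*i+2, by omega⟩}, B, insert ⟨5*i+3, by omega⟩ C⟩)
      ⟨hnsrc _ _ (by omega), ?_, ?_, cle4_3 _ _ _, rfl⟩ ?_
    · exact fun hx => absurd (show 5*i+3 ≤ 5*i+2 from hC _ hx) (by omega)
    · intro u hu
      have hu' : u.val = 5*i+1 := (predW1 hi).mp hu
      have : u = (⟨5*i+1, by omega⟩ : Fin (5*m+4)) := Fin.ext hu'
      rw [this]; exact Finset.mem_insert_self _ _
    -- step 2 : compute w2
    refine RBPReaches.cons (t := ⟨{⟨5*i+4, by omega⟩, ⟨5*i+3, by omega⟩,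
      ⟨5*i+1, by omega⟩, ⟨5*i+2, by omega⟩}, B,
      insert ⟨5*i+4, by omega⟩ (insert ⟨5*i+3, by omega⟩ C)⟩)
      ⟨hnsrc _ _ (by omega), ?_, ?_, cle4_4 _ _ _ _, rfl⟩ ?_
    · intro hx
      rcases Finset.mem_insert.mp hx with heq | hx
      · exact absurd (show 5*i+4 = 5*i+3 from congrArg Fin.val heq) (by omega)
      · exact absurd (show 5*i+4 ≤ 5*i+2 from hC _ hx) (by omega)
    · intro u hu
      have hu' : u.val = 5*i+1 := (predW2 hi).mp hu
      have : u = (⟨5*i+1, by omega⟩ : Fin (5*m+4)) := Fin.ext hu'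
      rw [this]; exact Finset.mem_insert_of_mem (Finset.mem_insert_self _ _)
    -- step 3 : save a
    refine RBPReaches.cons (t := ⟨{⟨5*i+4, by omega⟩, ⟨5*i+3, by omega⟩,
      ⟨5*i+1, by omega⟩, ⟨5*i+2, by omega⟩}, insert ⟨5*i+1, by omega⟩ B,
      insert ⟨5*i+4, by omega⟩ (insert ⟨5*i+3, by omega⟩ C)⟩)
      ⟨Finset.mem_insert_of_mem (Finset.mem_insert_of_mem (Finset.mem_insert_self _ _)), rfl⟩ ?_
    -- step 4 : delete a
    refine RBPReaches.cons (t := ⟨{⟨5*i+4, by omega⟩, ⟨5*i+3, by omega⟩,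
      ⟨5*i+2, by omega⟩}, insert ⟨5*i+1, by omega⟩ B,
      insert ⟨5*i+4, by omega⟩ (insert ⟨5*i+3, by omega⟩ C)⟩)
      ⟨Finset.mem_insert_of_mem (Finset.mem_insert_of_mem (Finset.mem_insert_self _ _)), ?_⟩ ?_
    · have h : ({⟨5*i+4, by omega⟩, ⟨5*i+3, by omega⟩, ⟨5*i+2, by omega⟩} :
          Finset (Fin (5*m+4))) =
          ({⟨5*i+4, by omega⟩, ⟨5*i+3, by omega⟩, ⟨5*i+1, by omega⟩,
            ⟨5*i+2, by omega⟩} : Finset (Fin (5*m+4))).erase ⟨5*i+1, by omega⟩ := by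
        ext x
        simp only [Finset.mem_insert, Finset.mem_singleton, Finset.mem_erase,
          ne_eq, Fin.ext_iff, Fin.val_mk]
        omega
      rw [h]
    -- step 5 : compute w3
    refine RBPReaches.cons (t := ⟨{⟨5*i+5, by omega⟩, ⟨5*i+4, by omega⟩,
      ⟨5*i+3, by omega⟩, ⟨5*i+2, by omega⟩}, insert ⟨5*i+1, by omega⟩ B,
      insert ⟨5*i+5, by omega⟩ (insert ⟨5*i+4, by omega⟩
        (insert ⟨5*i+3, by omega⟩ C))⟩)
      ⟨hnsrc _ _ (by omega), ?_, ?_, cle4_4 _ _ _ _, rfl⟩ ?_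
    · intro hx
      rcases Finset.mem_insert.mp hx with heq | hx
      · exact absurd (show 5*i+5 = 5*i+4 from congrArg Fin.val heq) (by omega)
      rcases Finset.mem_insert.mp hx with heq | hx
      · exact absurd (show 5*i+5 = 5*i+3 from congrArg Fin.val heq) (by omega)
      · exact absurd (show 5*i+5 ≤ 5*i+2 from hC _ hx) (by omega)
    · intro u hu
      rcases (predW3 hi).mp hu with hu' | hu'
      · have : u = (⟨5*i+3, by omega⟩ : Fin (5*m+4)) := Fin.ext hu'
        rw [this]; exact Finset.mem_insert_of_mem (Finset.mem_insert_self _ _)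
      · have : u = (⟨5*i+4, by omega⟩ : Fin (5*m+4)) := Fin.ext hu'
        rw [this]; exact Finset.mem_insert_self _ _
    -- step 6 : delete w1
    refine RBPReaches.cons (t := ⟨{⟨5*i+5, by omega⟩, ⟨5*i+4, by omega⟩,
      ⟨5*i+2, by omega⟩}, insert ⟨5*i+1, by omega⟩ B,
      insert ⟨5*i+5, by omega⟩ (insert ⟨5*i+4, by omega⟩
        (insert ⟨5*i+3, by omega⟩ C))⟩)
      ⟨Finset.mem_insert_of_mem (Finset.mem_insert_of_mem (Finset.mem_insert_self _ _)), ?_⟩ ?_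
    · have h : ({⟨5*i+5, by omega⟩, ⟨5*i+4, by omega⟩, ⟨5*i+2, by omega⟩} :
          Finset (Fin (5*m+4))) =
          ({⟨5*i+5, by omega⟩, ⟨5*i+4, by omega⟩, ⟨5*i+3, by omega⟩,
            ⟨5*i+2, by omega⟩} : Finset (Fin (5*m+4))).erase ⟨5*i+3, by omega⟩ := by
        ext x
        simp only [Finset.mem_insert, Finset.mem_singleton, Finset.mem_erase,
          ne_eq, Fin.ext_iff, Fin.val_mk]
        omega
      rw [h]
    -- step 7 : delete w2
    refine RBPReaches.cons (t := ⟨{⟨5*i+5, by omega⟩, ⟨5*i+2, by omega⟩},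
      insert ⟨5*i+1, by omega⟩ B,
      insert ⟨5*i+5, by omega⟩ (insert ⟨5*i+4, by omega⟩
        (insert ⟨5*i+3, by omega⟩ C))⟩)
      ⟨Finset.mem_insert_of_mem (Finset.mem_insert_self _ _), ?_⟩ ?_
    · have h : ({⟨5*i+5, by omega⟩, ⟨5*i+2, by omega⟩} :
          Finset (Fin (5*m+4))) =
          ({⟨5*i+5, by omega⟩, ⟨5*i+4, by omega⟩, ⟨5*i+2, by omega⟩} :
            Finset (Fin (5*m+4))).erase ⟨5*i+4, by omega⟩ := by
        ext x
        simp only [Finset.mem_insert, Finset.mem_singleton, Finset.mem_erase,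
          ne_eq, Fin.ext_iff, Fin.val_mk]
        omega
      rw [h]
    -- step 8 : load a
    refine RBPReaches.cons (t := ⟨{⟨5*i+1, by omega⟩, ⟨5*i+5, by omega⟩,
      ⟨5*i+2, by omega⟩}, insert ⟨5*i+1, by omega⟩ B,
      insert ⟨5*i+5, by omega⟩ (insert ⟨5*i+4, by omega⟩
        (insert ⟨5*i+3, by omega⟩ C))⟩)
      ⟨Finset.mem_insert_self _ _, cle4_3 _ _ _, rfl⟩ ?_
    -- step 9 : compute a'
    refine RBPReaches.cons (t := ⟨{⟨5*i+6, by omega⟩, ⟨5*i+1, by omega⟩,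
      ⟨5*i+5, by omega⟩, ⟨5*i+2, by omega⟩}, insert ⟨5*i+1, by omega⟩ B,
      insert ⟨5*i+6, by omega⟩ (insert ⟨5*i+5, by omega⟩
        (insert ⟨5*i+4, by omega⟩ (insert ⟨5*i+3, by omega⟩ C)))⟩)
      ⟨hnsrc _ _ (by omega), ?_, ?_, cle4_4 _ _ _ _, rfl⟩ ?_
    · intro hx
      rcases Finset.mem_insert.mp hx with heq | hx
      · exact absurd (show 5*i+6 = 5*i+5 from congrArg Fin.val heq) (by omega)
      rcases Finset.mem_insert.mp hx with heq | hx
      · exact absurd (show 5*i+6 = 5*i+4 from congrArg Fin.val heq) (by omega)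
      rcases Finset.mem_insert.mp hx with heq | hx
      · exact absurd (show 5*i+6 = 5*i+3 from congrArg Fin.val heq) (by omega)
      · exact absurd (show 5*i+6 ≤ 5*i+2 from hC _ hx) (by omega)
    · intro u hu
      rcases (predA' hi).mp hu with hu' | hu'
      · have : u = (⟨5*i+1, by omega⟩ : Fin (5*m+4)) := Fin.ext hu'
        rw [this]; exact Finset.mem_insert_self _ _
      · have : u = (⟨5*i+5, by omega⟩ : Fin (5*m+4)) := Fin.ext hu'
        rw [this]; exact Finset.mem_insert_of_mem (Finset.mem_insert_self _ _)
    -- step 10 : delete a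
    refine RBPReaches.cons (t := ⟨{⟨5*i+6, by omega⟩, ⟨5*i+5, by omega⟩,
      ⟨5*i+2, by omega⟩}, insert ⟨5*i+1, by omega⟩ B,
      insert ⟨5*i+6, by omega⟩ (insert ⟨5*i+5, by omega⟩
        (insert ⟨5*i+4, by omega⟩ (insert ⟨5*i+3, by omega⟩ C)))⟩)
      ⟨Finset.mem_insert_of_mem (Finset.mem_insert_self _ _), ?_⟩ ?_
    · have h : ({⟨5*i+6, by omega⟩, ⟨5*i+5, by omega⟩, ⟨5*i+2, by omega⟩} :
          Finset (Fin (5*m+4))) =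
          ({⟨5*i+6, by omega⟩, ⟨5*i+1, by omega⟩, ⟨5*i+5, by omega⟩,
            ⟨5*i+2, by omega⟩} : Finset (Fin (5*m+4))).erase ⟨5*i+1, by omega⟩ := by
        ext x
        simp only [Finset.mem_insert, Finset.mem_singleton, Finset.mem_erase,
          ne_eq, Fin.ext_iff, Fin.val_mk]
        omega
      rw [h]
    -- step 11 : compute b'
    refine RBPReaches.cons (t := ⟨{⟨5*i+7, by omega⟩, ⟨5*i+6, by omega⟩,
      ⟨5*i+5, by omega⟩, ⟨5*i+2, by omega⟩}, insert ⟨5*i+1, by omega⟩ B,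
      insert ⟨5*i+7, by omega⟩ (insert ⟨5*i+6, by omega⟩
        (insert ⟨5*i+5, by omega⟩ (insert ⟨5*i+4, by omega⟩
          (insert ⟨5*i+3, by omega⟩ C))))⟩)
      ⟨hnsrc _ _ (by omega), ?_, ?_, cle4_4 _ _ _ _, rfl⟩ ?_
    · intro hx
      rcases Finset.mem_insert.mp hx with heq | hx
      · exact absurd (show 5*i+7 = 5*i+6 from congrArg Fin.val heq) (by omega)
      rcases Finset.mem_insert.mp hx with heq | hx
      · exact absurd (show 5*i+7 = 5*i+5 from congrArg Fin.val heq) (by omega)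
      rcases Finset.mem_insert.mp hx with heq | hx
      · exact absurd (show 5*i+7 = 5*i+4 from congrArg Fin.val heq) (by omega)
      rcases Finset.mem_insert.mp hx with heq | hx
      · exact absurd (show 5*i+7 = 5*i+3 from congrArg Fin.val heq) (by omega)
      · exact absurd (show 5*i+7 ≤ 5*i+2 from hC _ hx) (by omega)
    · intro u hu
      rcases (predB' hi).mp hu with hu' | hu'
      · have : u = (⟨5*i+2, by omega⟩ : Fin (5*m+4)) := Fin.ext hu'
        rw [this]; exact Finset.mem_insert_of_mem (Finset.mem_insert_of_mem (Finset.mem_singleton_self _))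
      · have : u = (⟨5*i+5, by omega⟩ : Fin (5*m+4)) := Fin.ext hu'
        rw [this]; exact Finset.mem_insert_of_mem (Finset.mem_insert_self _ _)
    -- step 12 : delete w3
    refine RBPReaches.cons (t := ⟨{⟨5*i+7, by omega⟩, ⟨5*i+6, by omega⟩,
      ⟨5*i+2, by omega⟩}, insert ⟨5*i+1, by omega⟩ B,
      insert ⟨5*i+7, by omega⟩ (insert ⟨5*i+6, by omega⟩
        (insert ⟨5*i+5, by omega⟩ (insert ⟨5*i+4, by omega⟩
          (insert ⟨5*i+3, by omega⟩ C))))⟩)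
      ⟨Finset.mem_insert_of_mem (Finset.mem_insert_of_mem (Finset.mem_insert_self _ _)), ?_⟩ ?_
    · have h : ({⟨5*i+7, by omega⟩, ⟨5*i+6, by omega⟩, ⟨5*i+2, by omega⟩} :
          Finset (Fin (5*m+4))) =
          ({⟨5*i+7, by omega⟩, ⟨5*i+6, by omega⟩, ⟨5*i+5, by omega⟩,
            ⟨5*i+2, by omega⟩} : Finset (Fin (5*m+4))).erase ⟨5*i+5, by omega⟩ := by
        ext x
        simp only [Finset.mem_insert, Finset.mem_singleton, Finset.mem_erase,
          ne_eq, Fin.ext_iff, Fin.val_mk]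
        omega
      rw [h]
    -- step 13 : delete b
    refine RBPReaches.cons (t := ⟨{⟨5*i+6, by omega⟩, ⟨5*i+7, by omega⟩},
      insert ⟨5*i+1, by omega⟩ B,
      insert ⟨5*i+7, by omega⟩ (insert ⟨5*i+6, by omega⟩
        (insert ⟨5*i+5, by omega⟩ (insert ⟨5*i+4, by omega⟩
          (insert ⟨5*i+3, by omega⟩ C))))⟩)
      ⟨Finset.mem_insert_of_mem (Finset.mem_insert_of_mem (Finset.mem_singleton_self _)), ?_⟩ (RBPReaches.nil _)
    · have h : ({⟨5*i+6, by omega⟩, ⟨5*i+7, by omega⟩} :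
          Finset (Fin (5*m+4))) =
          ({⟨5*i+7, by omega⟩, ⟨5*i+6, by omega⟩, ⟨5*i+2, by omega⟩} :
            Finset (Fin (5*m+4))).erase ⟨5*i+2, by omega⟩ := by
        ext x
        simp only [Finset.mem_insert, Finset.mem_singleton, Finset.mem_erase,
          ne_eq, Fin.ext_iff, Fin.val_mk]
        omega
      rw [h]

end LGF
namespace LGF

lemma rbp_run {m : ℕ} (hm : 0 < m) :
    ∀ i, ∀ hi : i ≤ m, ∃ (L : List (RBPMove (Fin (5*m+4))))
      (B C : Finset (Fin (5*m+4))),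
      RBPCost L ≤ 2*i+1 ∧ (∀ x ∈ C, x.val ≤ 5*i+2) ∧
      RBPReaches (Gm m) 4 (RBPInit (Gm m)) L
        ⟨{⟨5*i+1, by omega⟩, ⟨5*i+2, by omega⟩}, B, C⟩ := by
  have hnsrc : ∀ (x : ℕ) (h : x < 5*m+4), x ≠ 0 →
      ¬ (Gm m).IsSource (⟨x, h⟩ : Fin (5*m+4)) := fun x h hx hs =>
    hx ((isSource_iff hm _).mp hs)
  intro i
  induction i with
  | zero =>
      intro _
      refine ⟨[.load ⟨0, by omega⟩, .compute ⟨1, by omega⟩,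
        .compute ⟨2, by omega⟩, .delete ⟨0, by omega⟩],
        (RBPInit (Gm m)).blue, {⟨2, by omega⟩, ⟨1, by omega⟩},
        Nat.le_refl 1, ?_, ?_⟩
      · intro x hx
        rcases Finset.mem_insert.mp hx with rfl | hx
        · exact (by omega : 2 ≤ 5*0+2)
        · rw [Finset.mem_singleton.mp hx]
          exact (by omega : 1 ≤ 5*0+2)
      · -- load u0
        refine RBPReaches.cons
          (t := ⟨{⟨0, by omega⟩}, (RBPInit (Gm m)).blue, ∅⟩)
          ⟨Finset.mem_filter.mpr ⟨Finset.mem_univ _,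
            (isSource_iff hm _).mpr rfl⟩, cle4_1 _, rfl⟩ ?_
        -- compute A0
        refine RBPReaches.cons
          (t := ⟨{⟨1, by omega⟩, ⟨0, by omega⟩}, (RBPInit (Gm m)).blue,
            {⟨1, by omega⟩}⟩)
          ⟨hnsrc _ _ (by omega), Finset.notMem_empty _, ?_, cle4_2 _ _, rfl⟩ ?_
        · intro u hu
          have hu' : u.val = 0 := predA0.mp hu
          have : u = (⟨0, by omega⟩ : Fin (5*m+4)) := Fin.ext hu'
          rw [this]; exact Finset.mem_singleton_self _
        -- compute B0
        refine RBPReaches.cons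
          (t := ⟨{⟨2, by omega⟩, ⟨1, by omega⟩, ⟨0, by omega⟩},
            (RBPInit (Gm m)).blue, {⟨2, by omega⟩, ⟨1, by omega⟩}⟩)
          ⟨hnsrc _ _ (by omega), ?_, ?_, cle4_3 _ _ _, rfl⟩ ?_
        · intro hx
          exact absurd (show (2:ℕ) = 1 from congrArg Fin.val
            (Finset.mem_singleton.mp hx)) (by omega)
        · intro u hu
          have hu' : u.val = 0 := predB0.mp hu
          have : u = (⟨0, by omega⟩ : Fin (5*m+4)) := Fin.ext hu'
          rw [this]
          exact Finset.mem_insert_of_mem (Finset.mem_singleton_self _)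
        -- delete u0
        refine RBPReaches.cons
          (t := ⟨{⟨5*0+1, by omega⟩, ⟨5*0+2, by omega⟩},
            (RBPInit (Gm m)).blue, {⟨2, by omega⟩, ⟨1, by omega⟩}⟩)
          ⟨Finset.mem_insert_of_mem (Finset.mem_insert_of_mem
            (Finset.mem_singleton_self _)), ?_⟩ (RBPReaches.nil _)
        have h : ({⟨5*0+1, by omega⟩, ⟨5*0+2, by omega⟩} :
            Finset (Fin (5*m+4))) =
            ({⟨2, by omega⟩, ⟨1, by omega⟩, ⟨0, by omega⟩} :
              Finset (Fin (5*m+4))).erase ⟨0, by omega⟩ := by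
          ext x
          simp only [Finset.mem_insert, Finset.mem_singleton, Finset.mem_erase,
            ne_eq, Fin.ext_iff, Fin.val_mk]
          omega
        rw [h]
  | succ i ih =>
      intro hi1
      obtain ⟨L, B, C, hcost, hC, hreach⟩ := ih (by omega)
      obtain ⟨Lg, C', hcg, hC', hg⟩ := rbp_gadget (show i < m by omega) B C hC
      have hset : ({⟨5*i+6, by omega⟩, ⟨5*i+7, by omega⟩} :
          Finset (Fin (5*m+4))) =
          {⟨5*(i+1)+1, by omega⟩, ⟨5*(i+1)+2, by omega⟩} := by
        ext x
        simp only [Finset.mem_insert, Finset.mem_singleton, Fin.ext_iff,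
          Fin.val_mk]
        omega
      rw [hset] at hg
      refine ⟨L ++ Lg, insert ⟨5*i+1, by omega⟩ B, C', ?_, ?_, ?_⟩
      · rw [RBPCost_append, hcg]; omega
      · exact fun x hx => le_trans (hC' x hx) (by omega)
      · exact reaches_append hreach hg

lemma rbp_upper {m : ℕ} (hm : 0 < m) :
    ∃ L, RBPValid (Gm m) 4 L ∧ RBPCost L ≤ 2*m+2 := by
  obtain ⟨L, B, C, hcost, hC, hreach⟩ := rbp_run hm m le_rfl
  have hnsrc : ∀ (x : ℕ) (h : x < 5*m+4), x ≠ 0 →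
      ¬ (Gm m).IsSource (⟨x, h⟩ : Fin (5*m+4)) := fun x h hx hs =>
    hx ((isSource_iff hm _).mp hs)
  have htail : RBPReaches (Gm m) 4
      ⟨{⟨5*m+1, by omega⟩, ⟨5*m+2, by omega⟩}, B, C⟩
      [.compute ⟨5*m+3, by omega⟩, .save ⟨5*m+3, by omega⟩]
      ⟨{⟨5*m+3, by omega⟩, ⟨5*m+1, by omega⟩, ⟨5*m+2, by omega⟩},
        insert ⟨5*m+3, by omega⟩ B, insert ⟨5*m+3, by omega⟩ C⟩ := by
    refine RBPReaches.cons
      (t := ⟨{⟨5*m+3, by omega⟩, ⟨5*m+1, by omega⟩, ⟨5*m+2, by omega⟩}, B,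
        insert ⟨5*m+3, by omega⟩ C⟩)
      ⟨hnsrc _ _ (by omega), ?_, ?_, cle4_3 _ _ _, rfl⟩ ?_
    · exact fun hx => absurd (show 5*m+3 ≤ 5*m+2 from hC _ hx) (by omega)
    · intro u hu
      rcases predV0.mp hu with hu' | hu'
      · have : u = (⟨5*m+1, by omega⟩ : Fin (5*m+4)) := Fin.ext hu'
        rw [this]; exact Finset.mem_insert_self _ _
      · have : u = (⟨5*m+2, by omega⟩ : Fin (5*m+4)) := Fin.ext hu'
        rw [this]
        exact Finset.mem_insert_of_mem (Finset.mem_singleton_self _)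
    refine RBPReaches.cons
      (t := ⟨{⟨5*m+3, by omega⟩, ⟨5*m+1, by omega⟩, ⟨5*m+2, by omega⟩},
        insert ⟨5*m+3, by omega⟩ B, insert ⟨5*m+3, by omega⟩ C⟩)
      ⟨Finset.mem_insert_self _ _, rfl⟩ (RBPReaches.nil _)
  refine ⟨L ++ [.compute ⟨5*m+3, by omega⟩, .save ⟨5*m+3, by omega⟩],
    ⟨_, reaches_append hreach htail, ?_⟩, ?_⟩
  · intro v hv
    have : v.val = 5*m+3 := (isSink_iff hm v).mp hv
    have hveq : v = (⟨5*m+3, by omega⟩ : Fin (5*m+4)) := Fin.ext this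
    rw [hveq]
    exact Finset.mem_insert_self _ _
  · rw [RBPCost_append]
    have : RBPCost [RBPMove.compute (⟨5*m+3, by omega⟩ : Fin (5*m+4)),
      .save ⟨5*m+3, by omega⟩] = 1 := rfl
    omega

end LGF
namespace LGF

section PRBPInfra

variable {V : Type} [Fintype V] [DecidableEq V] {G : DirGraph V} {r : ℕ}

lemma preaches_append {s t u : PRBPState V} {L1 L2 : List (PRBPMove V)}
    (h1 : PRBPReaches G r s L1 t) (h2 : PRBPReaches G r t L2 u) :
    PRBPReaches G r s (L1 ++ L2) u := by
  induction h1 with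
  | nil => exact h2
  | cons st _ ih => exact PRBPReaches.cons st (ih h2)

lemma PRBPCost_append {W : Type} (L1 L2 : List (PRBPMove W)) :
    PRBPCost (L1 ++ L2) = PRBPCost L1 + PRBPCost L2 := by
  simp [PRBPCost]

lemma pstep_blue_insert {s t : PRBPState V} {mv : PRBPMove V} {v : V}
    (h : PRBPStep G r s mv t) (h1 : v ∈ t.blue) (h2 : v ∉ s.blue) :
    mv = .save v := by
  cases mv with
  | save w =>
      obtain ⟨hw, rfl⟩ := h
      rcases Finset.mem_insert.mp h1 with rfl | h1
      · rfl
      · exact absurd h1 h2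
  | load w => obtain ⟨_, _, rfl⟩ := h; exact absurd h1 h2
  | pcompute u w =>
      obtain ⟨_, _, _, _, _, _, rfl⟩ := h
      exact absurd (Finset.mem_of_mem_erase h1) h2
  | delete w =>
      rcases h with ⟨_, rfl⟩ | ⟨_, _, rfl⟩ <;> exact absurd h1 h2

lemma pstep_dred_stable {s t : PRBPState V} {mv : PRBPMove V} {v : V}
    (hv : ∀ u, ¬ G.E u v) (h : PRBPStep G r s mv t) (h2 : v ∉ s.dred) :
    v ∉ t.dred := by
  cases mv with
  | save w =>
      obtain ⟨hw, rfl⟩ := h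
      exact fun hc => h2 (Finset.mem_of_mem_erase hc)
  | load w => obtain ⟨_, _, rfl⟩ := h; exact h2
  | pcompute u w =>
      obtain ⟨he, _, _, _, _, _, rfl⟩ := h
      intro hc
      rcases Finset.mem_insert.mp hc with rfl | hc
      · exact hv u he
      · exact h2 hc
  | delete w =>
      rcases h with ⟨_, rfl⟩ | ⟨_, _, rfl⟩
      · exact h2
      · exact fun hc => h2 (Finset.mem_of_mem_erase hc)

lemma pstep_lred_insert {s t : PRBPState V} {mv : PRBPMove V} {v : V}
    (h : PRBPStep G r s mv t) (h1 : v ∈ t.lred) (h2 : v ∉ s.lred) :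
    mv = .load v ∨ (mv = .save v ∧ v ∈ s.dred) := by
  cases mv with
  | save w =>
      obtain ⟨hw, rfl⟩ := h
      rcases Finset.mem_insert.mp h1 with rfl | h1
      · exact Or.inr ⟨rfl, hw⟩
      · exact absurd h1 h2
  | load w =>
      obtain ⟨_, _, rfl⟩ := h
      rcases Finset.mem_insert.mp h1 with rfl | h1
      · exact Or.inl rfl
      · exact absurd h1 h2
  | pcompute u w =>
      obtain ⟨_, _, _, _, _, _, rfl⟩ := h
      exact absurd (Finset.mem_of_mem_erase h1) h2
  | delete w =>
      rcases h with ⟨_, rfl⟩ | ⟨_, _, rfl⟩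
      · exact absurd (Finset.mem_of_mem_erase h1) h2
      · exact absurd h1 h2

lemma pstep_marked_insert {s t : PRBPState V} {mv : PRBPMove V}
    {e : V × V} (h : PRBPStep G r s mv t) (h1 : e ∈ t.marked)
    (h2 : e ∉ s.marked) : mv = .pcompute e.1 e.2 ∧ e.1 ∈ s.red := by
  cases mv with
  | save w => obtain ⟨_, rfl⟩ := h; exact absurd h1 h2
  | load w => obtain ⟨_, _, rfl⟩ := h; exact absurd h1 h2
  | pcompute u w =>
      obtain ⟨_, _, _, hured, _, _, rfl⟩ := h
      rcases Finset.mem_insert.mp h1 with rfl | h1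
      · exact ⟨rfl, hured⟩
      · exact absurd h1 h2
  | delete w =>
      rcases h with ⟨_, rfl⟩ | ⟨_, _, rfl⟩ <;> exact absurd h1 h2

lemma psave_mem {v : V} {s L t} (h : PRBPReaches G r s L t)
    (h1 : v ∈ t.blue) (h2 : v ∉ s.blue) : (PRBPMove.save v) ∈ L := by
  induction h with
  | nil => exact absurd h1 h2
  | @cons s mid u mv L hstep hrest ih =>
      by_cases hm1 : v ∈ mid.blue
      · rw [pstep_blue_insert hstep hm1 h2]
        exact List.mem_cons_self
      · exact List.mem_cons_of_mem _ (ih h1 hm1)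

lemma psrc_load {v : V} (hv : ∀ u, ¬ G.E u v) {s L t}
    (h : PRBPReaches G r s L t) :
    v ∉ s.dred → v ∉ s.lred → ∀ u', (v, u') ∈ t.marked →
    (v, u') ∉ s.marked → (PRBPMove.load v) ∈ L := by
  induction h with
  | nil => intro _ _ u' h1 h2; exact absurd h1 h2
  | @cons s mid u mv L hstep hrest ih =>
      intro hd hl u' h1 h2
      by_cases hm1 : (v, u') ∈ mid.marked
      · obtain ⟨hmv, hred⟩ := pstep_marked_insert hstep hm1 h2
        rcases Finset.mem_union.mp hred with hx | hx
        · exact absurd hx hl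
        · exact absurd hx hd
      · by_cases hl1 : v ∈ mid.lred
        · rcases pstep_lred_insert hstep hl1 hl with heq | ⟨_, hvd⟩
          · rw [heq]; exact List.mem_cons_self
          · exact absurd hvd hd
        · exact List.mem_cons_of_mem _
            (ih (pstep_dred_stable hv hstep hd) hl1 u' h1 hm1)

end PRBPInfra

lemma prbp_lower {m : ℕ} (hm : 0 < m) {L : List (PRBPMove (Fin (5*m+4)))}
    (hL : PRBPValid (Gm m) 4 L) : 2 ≤ PRBPCost L := by
  obtain ⟨t, hreach, hsinks, hmarked⟩ := hL
  have hv0 : (5:ℕ)*m+3 < 5*m+4 := by omega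
  have h1lt : (1:ℕ) < 5*m+4 := by omega
  have h0lt : (0:ℕ) < 5*m+4 := by omega
  have hsave : (PRBPMove.save (⟨5*m+3, hv0⟩ : Fin (5*m+4))) ∈ L := by
    refine psave_mem hreach
      (hsinks _ ((isSink_iff hm _).mpr rfl)) ?_
    intro hc
    have := (Finset.mem_filter.mp hc).2
    exact absurd ((isSource_iff hm _).mp this) (show ¬(5*m+3 = 0) by omega)
  have hload : (PRBPMove.load (⟨0, h0lt⟩ : Fin (5*m+4))) ∈ L := by
    have hnoin : ∀ u : Fin (5*m+4), ¬ (Gm m).E u ⟨0, h0lt⟩ :=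
      fun u hu => pred0 hu
    have hedge : (Gm m).E (⟨0, h0lt⟩ : Fin (5*m+4)) ⟨1, h1lt⟩ :=
      Or.inl ⟨rfl, Or.inl rfl⟩
    refine psrc_load hnoin hreach ?_ ?_ ⟨1, h1lt⟩ (hmarked _ _ hedge) ?_
    · exact Finset.notMem_empty _
    · exact Finset.notMem_empty _
    · exact Finset.notMem_empty _
  have hcard : ({PRBPMove.save (⟨5*m+3, hv0⟩ : Fin (5*m+4)),
      PRBPMove.load ⟨0, h0lt⟩} : Finset (PRBPMove (Fin (5*m+4)))).card = 2 :=
    Finset.card_pair (by simp)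
  calc (2:ℕ) = _ := hcard.symm
    _ ≤ PRBPCost L := by
        apply card_le_sum
        intro x hx
        rcases Finset.mem_insert.mp hx with rfl | hx
        · exact ⟨hsave, rfl⟩
        · rw [Finset.mem_singleton.mp hx]
          exact ⟨hload, rfl⟩

end LGF
namespace LGF

lemma pair_ne {NN : ℕ} {a b c d : ℕ} (ha : a < NN) (hb : b < NN)
    (hc : c < NN) (hd : d < NN) (h : ¬(a = c ∧ b = d)) :
    ((⟨a,ha⟩ : Fin NN), (⟨b,hb⟩ : Fin NN)) ≠ ((⟨c,hc⟩ : Fin NN), ⟨d,hd⟩) := by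
  intro he
  exact h ⟨congrArg (fun e : Fin NN × Fin NN => e.1.val) he,
    congrArg (fun e : Fin NN × Fin NN => e.2.val) he⟩

lemma pstate_eq {W : Type} {l1 l2 d1 d2 b1 b2 : Finset W}
    {m1 m2 : Finset (W × W)} (hl : l1 = l2) (hd : d1 = d2) (hb : b1 = b2)
    (hm : m1 = m2) : (⟨l1, d1, b1, m1⟩ : PRBPState W) = ⟨l2, d2, b2, m2⟩ := by
  rw [hl, hd, hb, hm]

lemma card_empty_union {α : Type} [DecidableEq α] (v : α) (X : Finset α)
    (h : X.card ≤ 4) : (((∅ : Finset α).erase v) ∪ X).card ≤ 4 := by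
  rwa [Finset.erase_empty, Finset.empty_union]

set_option maxHeartbeats 2000000 in
lemma prbp_gadget {m i : ℕ} (hi : i < m)
    (M : Finset (Fin (5*m+4) × Fin (5*m+4)))
    (hM : ∀ e, e ∈ M ↔ (gE m e.1.val e.2.val ∧ e.2.val ≤ 5*i+2)) :
    ∃ (L : List (PRBPMove (Fin (5*m+4)))) (M' : Finset (Fin (5*m+4) × Fin (5*m+4))),
      PRBPCost L = 0 ∧
      (∀ e, e ∈ M' ↔ (gE m e.1.val e.2.val ∧ e.2.val ≤ 5*(i+1)+2)) ∧
      PRBPReaches (Gm m) 4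
        ⟨∅, {(⟨5*i+1, by omega⟩ : Fin (5*m+4)), (⟨5*i+2, by omega⟩ : Fin (5*m+4))}, (PRBPInit (Gm m)).blue, M⟩
        L
        ⟨∅, {(⟨5*i+6, by omega⟩ : Fin (5*m+4)), (⟨5*i+7, by omega⟩ : Fin (5*m+4))}, (PRBPInit (Gm m)).blue, M'⟩ := by
  have hm : 0 < m := by omega
  have hblue : ∀ (x : ℕ) (h : x < 5*m+4), x ≠ 0 →
      (⟨x, h⟩ : Fin (5*m+4)) ∉ (PRBPInit (Gm m)).blue := fun x h hx hc =>
    hx ((isSource_iff hm _).mp (Finset.mem_filter.mp hc).2)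
  have notM : ∀ (x y : ℕ) (hx : x < 5*m+4) (hy : y < 5*m+4), 5*i+2 < y →
      ((⟨x,hx⟩ : Fin (5*m+4)), (⟨y,hy⟩ : Fin (5*m+4))) ∉ M := by
    intro x y hx hy hgt hmem
    have hle : y ≤ 5*i+2 := ((hM _).mp hmem).2
    omega
  have inM : ∀ (e : Fin (5*m+4) × Fin (5*m+4)), gE m e.1.val e.2.val →
      e.2.val ≤ 5*i+2 → e ∈ M := fun e h1 h2 => (hM e).mpr ⟨h1, h2⟩

  refine ⟨[.pcompute (⟨5*i+1, by omega⟩ : Fin (5*m+4)) (⟨5*i+3, by omega⟩ : Fin (5*m+4)), .pcompute (⟨5*i+3, by omega⟩ : Fin (5*m+4)) (⟨5*i+5, by omega⟩ : Fin (5*m+4)), .delete (⟨5*i+3, by omega⟩ : Fin (5*m+4)), .pcompute (⟨5*i+1, by omega⟩ : Fin (5*m+4)) (⟨5*i+4, by omega⟩ : Fin (5*m+4)), .pcompute (⟨5*i+4, by omega⟩ : Fin (5*m+4)) (⟨5*i+5, by omega⟩ : Fin (5*m+4)), .delete (⟨5*i+4, by omega⟩ : Fin (5*m+4)), .pcompute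 (⟨5*i+5, by omega⟩ : Fin (5*m+4)) (⟨5*i+6, by omega⟩ : Fin (5*m+4)), .pcompute (⟨5*i+1, by omega⟩ : Fin (5*m+4)) (⟨5*i+6, by omega⟩ : Fin (5*m+4)), .delete (⟨5*i+1, by omega⟩ : Fin (5*m+4)), .pcompute (⟨5*i+5, by omega⟩ : Fin (5*m+4)) (⟨5*i+7, by omega⟩ : Fin (5*m+4)), .pcompute (⟨5*i+2, by omega⟩ : Fin (5*m+4)) (⟨5*i+7, by omega⟩ : Fin (5*m+4)), .delete (⟨5*i+5, by omega⟩ : Fin (5*m+4)), .delete (⟨5*i+2, by omega⟩ : Fin (5*m+4))],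
    insert ((⟨5*i+2, by omega⟩ : Fin (5*m+4)), (⟨5*i+7, by omega⟩ : Fin (5*m+4))) (insert ((⟨5*i+5, by omega⟩ : Fin (5*m+4)), (⟨5*i+7, by omega⟩ : Fin (5*m+4))) (insert ((⟨5*i+1, by omega⟩ : Fin (5*m+4)), (⟨5*i+6, by omega⟩ : Fin (5*m+4))) (insert ((⟨5*i+5, by omega⟩ : Fin (5*m+4)), (⟨5*i+6, by omega⟩ : Fin (5*m+4))) (insert ((⟨5*i+4, by omega⟩ : Fin (5*m+4)), (⟨5*i+5, by omega⟩ : Fin (5*m+4))) (insert ((⟨5*i+1, by omega⟩ : Fin (5*m+4)), (⟨5*i+4, by omega⟩ : Fin (5*m+4))) (insert ((⟨5*i+3, by omega⟩ : Fin (5*m+4)), (⟨5*i+5, by omega⟩ : Fin (5*m+4))) (insert ((⟨5*i+1, by omega⟩ : Fin (5*m+4)), (⟨5*i+3, by omega⟩ : Fin (5*m+4))) M))))))), rfl, ?_, ?_⟩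
  · intro e
    constructor
    · intro hmem
      rcases Finset.mem_insert.mp hmem with rfl | hmem
      · exact ⟨(predB' hi).mpr (Or.inl rfl), (by omega : 5*i+7 ≤ 5*(i+1)+2)⟩
      rcases Finset.mem_insert.mp hmem with rfl | hmem
      · exact ⟨(predB' hi).mpr (Or.inr rfl), (by omega : 5*i+7 ≤ 5*(i+1)+2)⟩
      rcases Finset.mem_insert.mp hmem with rfl | hmem
      · exact ⟨(predA' hi).mpr (Or.inl rfl), (by omega : 5*i+6 ≤ 5*(i+1)+2)⟩
      rcases Finset.mem_insert.mp hmem with rfl | hmem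
      · exact ⟨(predA' hi).mpr (Or.inr rfl), (by omega : 5*i+6 ≤ 5*(i+1)+2)⟩
      rcases Finset.mem_insert.mp hmem with rfl | hmem
      · exact ⟨(predW3 hi).mpr (Or.inr rfl), (by omega : 5*i+5 ≤ 5*(i+1)+2)⟩
      rcases Finset.mem_insert.mp hmem with rfl | hmem
      · exact ⟨(predW2 hi).mpr rfl, (by omega : 5*i+4 ≤ 5*(i+1)+2)⟩
      rcases Finset.mem_insert.mp hmem with rfl | hmem
      · exact ⟨(predW3 hi).mpr (Or.inl rfl), (by omega : 5*i+5 ≤ 5*(i+1)+2)⟩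
      rcases Finset.mem_insert.mp hmem with rfl | hmem
      · exact ⟨(predW1 hi).mpr rfl, (by omega : 5*i+3 ≤ 5*(i+1)+2)⟩
      · obtain ⟨h1, h2⟩ := (hM e).mp hmem
        exact ⟨h1, by omega⟩
    · rintro ⟨h1, h2⟩
      by_cases hle : e.2.val ≤ 5*i+2
      · exact Finset.mem_insert_of_mem (Finset.mem_insert_of_mem (Finset.mem_insert_of_mem (Finset.mem_insert_of_mem (Finset.mem_insert_of_mem (Finset.mem_insert_of_mem (Finset.mem_insert_of_mem (Finset.mem_insert_of_mem (inM e h1 hle))))))))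
      · push_neg at hle
        rcases h1 with hc | ⟨j, hj, hc⟩ | hc
        · exact absurd hc (by omega)
        · rcases hc with ⟨hx, hy | hy | hy⟩ | ⟨hx, hy⟩ | ⟨hx, hy⟩ | ⟨hx, hy | hy⟩ | ⟨hx, hy⟩
          · have he : e = ((⟨5*i+1, by omega⟩ : Fin (5*m+4)), (⟨5*i+3, by omega⟩ : Fin (5*m+4))) :=
              Prod.ext (Fin.ext (show e.1.val = 5*i+1 by omega)) (Fin.ext (show e.2.val = 5*i+3 by omega))
            rw [he]
            exact Finset.mem_insert_of_mem (Finset.mem_insert_of_mem (Finset.mem_insert_of_mem (Finset.mem_insert_of_mem (Finset.mem_insert_of_mem (Finset.mem_insert_of_mem (Finset.mem_insert_of_mem (Finset.mem_insert_self _ _)))))))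
          · have he : e = ((⟨5*i+1, by omega⟩ : Fin (5*m+4)), (⟨5*i+4, by omega⟩ : Fin (5*m+4))) :=
              Prod.ext (Fin.ext (show e.1.val = 5*i+1 by omega)) (Fin.ext (show e.2.val = 5*i+4 by omega))
            rw [he]
            exact Finset.mem_insert_of_mem (Finset.mem_insert_of_mem (Finset.mem_insert_of_mem (Finset.mem_insert_of_mem (Finset.mem_insert_of_mem (Finset.mem_insert_self _ _)))))
          · have he : e = ((⟨5*i+1, by omega⟩ : Fin (5*m+4)), (⟨5*i+6, by omega⟩ : Fin (5*m+4))) :=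
              Prod.ext (Fin.ext (show e.1.val = 5*i+1 by omega)) (Fin.ext (show e.2.val = 5*i+6 by omega))
            rw [he]
            exact Finset.mem_insert_of_mem (Finset.mem_insert_of_mem (Finset.mem_insert_self _ _))
          · have he : e = ((⟨5*i+3, by omega⟩ : Fin (5*m+4)), (⟨5*i+5, by omega⟩ : Fin (5*m+4))) :=
              Prod.ext (Fin.ext (show e.1.val = 5*i+3 by omega)) (Fin.ext (show e.2.val = 5*i+5 by omega))
            rw [he]
            exact Finset.mem_insert_of_mem (Finset.mem_insert_of_mem (Finset.mem_insert_of_mem (Finset.mem_insert_of_mem (Finset.mem_insert_of_mem (Finset.mem_insert_of_mem (Finset.mem_insert_self _ _))))))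
          · have he : e = ((⟨5*i+4, by omega⟩ : Fin (5*m+4)), (⟨5*i+5, by omega⟩ : Fin (5*m+4))) :=
              Prod.ext (Fin.ext (show e.1.val = 5*i+4 by omega)) (Fin.ext (show e.2.val = 5*i+5 by omega))
            rw [he]
            exact Finset.mem_insert_of_mem (Finset.mem_insert_of_mem (Finset.mem_insert_of_mem (Finset.mem_insert_of_mem (Finset.mem_insert_self _ _))))
          · have he : e = ((⟨5*i+5, by omega⟩ : Fin (5*m+4)), (⟨5*i+6, by omega⟩ : Fin (5*m+4))) :=
              Prod.ext (Fin.ext (show e.1.val = 5*i+5 by omega)) (Fin.ext (show e.2.val = 5*i+6 by omega))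
            rw [he]
            exact Finset.mem_insert_of_mem (Finset.mem_insert_of_mem (Finset.mem_insert_of_mem (Finset.mem_insert_self _ _)))
          · have he : e = ((⟨5*i+5, by omega⟩ : Fin (5*m+4)), (⟨5*i+7, by omega⟩ : Fin (5*m+4))) :=
              Prod.ext (Fin.ext (show e.1.val = 5*i+5 by omega)) (Fin.ext (show e.2.val = 5*i+7 by omega))
            rw [he]
            exact Finset.mem_insert_of_mem (Finset.mem_insert_self _ _)
          · have he : e = ((⟨5*i+2, by omega⟩ : Fin (5*m+4)), (⟨5*i+7, by omega⟩ : Fin (5*m+4))) :=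
              Prod.ext (Fin.ext (show e.1.val = 5*i+2 by omega)) (Fin.ext (show e.2.val = 5*i+7 by omega))
            rw [he]
            exact Finset.mem_insert_self _ _
        · exact absurd hc.2 (by omega)
  -- pcompute 5*i+1 5*i+3
  refine PRBPReaches.cons (t := ⟨∅, {(⟨5*i+3, by omega⟩ : Fin (5*m+4)), (⟨5*i+1, by omega⟩ : Fin (5*m+4)), (⟨5*i+2, by omega⟩ : Fin (5*m+4))},
      (PRBPInit (Gm m)).blue, insert ((⟨5*i+1, by omega⟩ : Fin (5*m+4)), (⟨5*i+3, by omega⟩ : Fin (5*m+4))) M⟩)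
    ⟨(predW1 hi).mpr rfl, ?_, ?_, ?_, ?_, ?_, ?_⟩ ?_
  · intro hmem
    exact notM _ _ (by omega) (by omega) (by omega) hmem
  · intro w hw
    exact inM _ hw (show 5*i+1 ≤ 5*i+2 by omega)
  · exact Finset.mem_union.mpr (Or.inr (Finset.mem_insert_self _ _))
  · refine Or.inr ⟨?_, hblue _ _ (by omega)⟩
    intro hc
    rcases Finset.mem_union.mp hc with hc | hc
    · exact absurd hc (Finset.notMem_empty _)
    · rcases Finset.mem_insert.mp hc with heq | hc
      · exact absurd (show 5*i+3 = 5*i+1 from congrArg Fin.val heq) (by omega)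
      exact absurd (show 5*i+3 = 5*i+2 from congrArg Fin.val (Finset.mem_singleton.mp hc)) (by omega)
  · exact card_empty_union _ _ (cle4_3 _ _ _)
  · exact pstate_eq (Finset.erase_empty _).symm rfl
      (Finset.erase_eq_of_notMem (hblue _ _ (by omega))).symm rfl
  -- pcompute 5*i+3 5*i+5
  refine PRBPReaches.cons (t := ⟨∅, {(⟨5*i+5, by omega⟩ : Fin (5*m+4)), (⟨5*i+3, by omega⟩ : Fin (5*m+4)), (⟨5*i+1, by omega⟩ : Fin (5*m+4)), (⟨5*i+2, by omega⟩ : Fin (5*m+4))},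
      (PRBPInit (Gm m)).blue, insert ((⟨5*i+3, by omega⟩ : Fin (5*m+4)), (⟨5*i+5, by omega⟩ : Fin (5*m+4))) (insert ((⟨5*i+1, by omega⟩ : Fin (5*m+4)), (⟨5*i+3, by omega⟩ : Fin (5*m+4))) M)⟩)
    ⟨(predW3 hi).mpr (Or.inl rfl), ?_, ?_, ?_, ?_, ?_, ?_⟩ ?_
  · intro hmem
    rcases Finset.mem_insert.mp hmem with heq | hmem
    · exact pair_ne (by omega) (by omega) (by omega) (by omega) (by omega) heq
    · exact notM _ _ (by omega) (by omega) (by omega) hmem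
  · intro w hw
    have hw' : w.val = 5*i+1 := (predW1 hi).mp hw
    have hww : w = (⟨5*i+1, by omega⟩ : Fin (5*m+4)) := Fin.ext hw'
    rw [hww]
    exact Finset.mem_insert_self _ _
  · exact Finset.mem_union.mpr (Or.inr (Finset.mem_insert_self _ _))
  · refine Or.inr ⟨?_, hblue _ _ (by omega)⟩
    intro hc
    rcases Finset.mem_union.mp hc with hc | hc
    · exact absurd hc (Finset.notMem_empty _)
    · rcases Finset.mem_insert.mp hc with heq | hc
      · exact absurd (show 5*i+5 = 5*i+3 from congrArg Fin.val heq) (by omega)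
      rcases Finset.mem_insert.mp hc with heq | hc
      · exact absurd (show 5*i+5 = 5*i+1 from congrArg Fin.val heq) (by omega)
      exact absurd (show 5*i+5 = 5*i+2 from congrArg Fin.val (Finset.mem_singleton.mp hc)) (by omega)
  · exact card_empty_union _ _ (cle4_4 _ _ _ _)
  · exact pstate_eq (Finset.erase_empty _).symm rfl
      (Finset.erase_eq_of_notMem (hblue _ _ (by omega))).symm rfl
  -- delete 5*i+3
  refine PRBPReaches.cons (t := ⟨∅, {(⟨5*i+5, by omega⟩ : Fin (5*m+4)), (⟨5*i+1, by omega⟩ : Fin (5*m+4)), (⟨5*i+2, by omega⟩ : Fin (5*m+4))},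
      (PRBPInit (Gm m)).blue, insert ((⟨5*i+3, by omega⟩ : Fin (5*m+4)), (⟨5*i+5, by omega⟩ : Fin (5*m+4))) (insert ((⟨5*i+1, by omega⟩ : Fin (5*m+4)), (⟨5*i+3, by omega⟩ : Fin (5*m+4))) M)⟩)
    (Or.inr ⟨Finset.mem_insert_of_mem (Finset.mem_insert_self _ _), ?_, ?_⟩) ?_
  · intro w hw
    have hw' : w.val = 5*i+5 := (succW1 hi).mp hw
    have hww : w = (⟨5*i+5, by omega⟩ : Fin (5*m+4)) := Fin.ext hw'
    rw [hww]
    exact Finset.mem_insert_self _ _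
  · refine pstate_eq rfl ?_ rfl rfl
    ext x
    simp only [Finset.mem_insert, Finset.mem_singleton, Finset.mem_erase,
      ne_eq, Fin.ext_iff, Fin.val_mk]
    omega
  -- pcompute 5*i+1 5*i+4
  refine PRBPReaches.cons (t := ⟨∅, {(⟨5*i+4, by omega⟩ : Fin (5*m+4)), (⟨5*i+5, by omega⟩ : Fin (5*m+4)), (⟨5*i+1, by omega⟩ : Fin (5*m+4)), (⟨5*i+2, by omega⟩ : Fin (5*m+4))},
      (PRBPInit (Gm m)).blue, insert ((⟨5*i+1, by omega⟩ : Fin (5*m+4)), (⟨5*i+4, by omega⟩ : Fin (5*m+4))) (insert ((⟨5*i+3, by omega⟩ : Fin (5*m+4)), (⟨5*i+5, by omega⟩ : Fin (5*m+4))) (insert ((⟨5*i+1, by omega⟩ : Fin (5*m+4)), (⟨5*i+3, by omega⟩ : Fin (5*m+4))) M))⟩)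
    ⟨(predW2 hi).mpr rfl, ?_, ?_, ?_, ?_, ?_, ?_⟩ ?_
  · intro hmem
    rcases Finset.mem_insert.mp hmem with heq | hmem
    · exact pair_ne (by omega) (by omega) (by omega) (by omega) (by omega) heq
    rcases Finset.mem_insert.mp hmem with heq | hmem
    · exact pair_ne (by omega) (by omega) (by omega) (by omega) (by omega) heq
    · exact notM _ _ (by omega) (by omega) (by omega) hmem
  · intro w hw
    exact Finset.mem_insert_of_mem (Finset.mem_insert_of_mem (inM _ hw (show 5*i+1 ≤ 5*i+2 by omega)))
  · exact Finset.mem_union.mpr (Or.inr (Finset.mem_insert_of_mem (Finset.mem_insert_self _ _)))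
  · refine Or.inr ⟨?_, hblue _ _ (by omega)⟩
    intro hc
    rcases Finset.mem_union.mp hc with hc | hc
    · exact absurd hc (Finset.notMem_empty _)
    · rcases Finset.mem_insert.mp hc with heq | hc
      · exact absurd (show 5*i+4 = 5*i+5 from congrArg Fin.val heq) (by omega)
      rcases Finset.mem_insert.mp hc with heq | hc
      · exact absurd (show 5*i+4 = 5*i+1 from congrArg Fin.val heq) (by omega)
      exact absurd (show 5*i+4 = 5*i+2 from congrArg Fin.val (Finset.mem_singleton.mp hc)) (by omega)
  · exact card_empty_union _ _ (cle4_4 _ _ _ _)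
  · exact pstate_eq (Finset.erase_empty _).symm rfl
      (Finset.erase_eq_of_notMem (hblue _ _ (by omega))).symm rfl
  -- pcompute 5*i+4 5*i+5
  refine PRBPReaches.cons (t := ⟨∅, {(⟨5*i+4, by omega⟩ : Fin (5*m+4)), (⟨5*i+5, by omega⟩ : Fin (5*m+4)), (⟨5*i+1, by omega⟩ : Fin (5*m+4)), (⟨5*i+2, by omega⟩ : Fin (5*m+4))},
      (PRBPInit (Gm m)).blue, insert ((⟨5*i+4, by omega⟩ : Fin (5*m+4)), (⟨5*i+5, by omega⟩ : Fin (5*m+4))) (insert ((⟨5*i+1, by omega⟩ : Fin (5*m+4)), (⟨5*i+4, by omega⟩ : Fin (5*m+4))) (insert ((⟨5*i+3, by omega⟩ : Fin (5*m+4)), (⟨5*i+5, by omega⟩ : Fin (5*m+4))) (insert ((⟨5*i+1, by omega⟩ : Fin (5*m+4)), (⟨5*i+3, by omega⟩ : Fin (5*m+4))) M)))⟩)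
    ⟨(predW3 hi).mpr (Or.inr rfl), ?_, ?_, ?_, ?_, ?_, ?_⟩ ?_
  · intro hmem
    rcases Finset.mem_insert.mp hmem with heq | hmem
    · exact pair_ne (by omega) (by omega) (by omega) (by omega) (by omega) heq
    rcases Finset.mem_insert.mp hmem with heq | hmem
    · exact pair_ne (by omega) (by omega) (by omega) (by omega) (by omega) heq
    rcases Finset.mem_insert.mp hmem with heq | hmem
    · exact pair_ne (by omega) (by omega) (by omega) (by omega) (by omega) heq
    · exact notM _ _ (by omega) (by omega) (by omega) hmem
  · intro w hw
    have hw' : w.val = 5*i+1 := (predW2 hi).mp hw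
    have hww : w = (⟨5*i+1, by omega⟩ : Fin (5*m+4)) := Fin.ext hw'
    rw [hww]
    exact Finset.mem_insert_self _ _
  · exact Finset.mem_union.mpr (Or.inr (Finset.mem_insert_self _ _))
  · exact Or.inl (Finset.mem_union.mpr (Or.inr (Finset.mem_insert_of_mem (Finset.mem_insert_self _ _))))
  · exact card_empty_union _ _ (by
      rw [Finset.insert_eq_self.mpr (Finset.mem_insert_of_mem (Finset.mem_insert_self _ _))]
      exact cle4_4 _ _ _ _)
  · exact pstate_eq (Finset.erase_empty _).symm (Finset.insert_eq_self.mpr (Finset.mem_insert_of_mem (Finset.mem_insert_self _ _))).symm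
      (Finset.erase_eq_of_notMem (hblue _ _ (by omega))).symm rfl
  -- delete 5*i+4
  refine PRBPReaches.cons (t := ⟨∅, {(⟨5*i+5, by omega⟩ : Fin (5*m+4)), (⟨5*i+1, by omega⟩ : Fin (5*m+4)), (⟨5*i+2, by omega⟩ : Fin (5*m+4))},
      (PRBPInit (Gm m)).blue, insert ((⟨5*i+4, by omega⟩ : Fin (5*m+4)), (⟨5*i+5, by omega⟩ : Fin (5*m+4))) (insert ((⟨5*i+1, by omega⟩ : Fin (5*m+4)), (⟨5*i+4, by omega⟩ : Fin (5*m+4))) (insert ((⟨5*i+3, by omega⟩ : Fin (5*m+4)), (⟨5*i+5, by omega⟩ : Fin (5*m+4))) (insert ((⟨5*i+1, by omega⟩ : Fin (5*m+4)), (⟨5*i+3, by omega⟩ : Fin (5*m+4))) M)))⟩)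
    (Or.inr ⟨Finset.mem_insert_self _ _, ?_, ?_⟩) ?_
  · intro w hw
    have hw' : w.val = 5*i+5 := (succW2 hi).mp hw
    have hww : w = (⟨5*i+5, by omega⟩ : Fin (5*m+4)) := Fin.ext hw'
    rw [hww]
    exact Finset.mem_insert_self _ _
  · refine pstate_eq rfl ?_ rfl rfl
    ext x
    simp only [Finset.mem_insert, Finset.mem_singleton, Finset.mem_erase,
      ne_eq, Fin.ext_iff, Fin.val_mk]
    omega
  -- pcompute 5*i+5 5*i+6
  refine PRBPReaches.cons (t := ⟨∅, {(⟨5*i+6, by omega⟩ : Fin (5*m+4)), (⟨5*i+5, by omega⟩ : Fin (5*m+4)), (⟨5*i+1, by omega⟩ : Fin (5*m+4)), (⟨5*i+2, by omega⟩ : Fin (5*m+4))},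
      (PRBPInit (Gm m)).blue, insert ((⟨5*i+5, by omega⟩ : Fin (5*m+4)), (⟨5*i+6, by omega⟩ : Fin (5*m+4))) (insert ((⟨5*i+4, by omega⟩ : Fin (5*m+4)), (⟨5*i+5, by omega⟩ : Fin (5*m+4))) (insert ((⟨5*i+1, by omega⟩ : Fin (5*m+4)), (⟨5*i+4, by omega⟩ : Fin (5*m+4))) (insert ((⟨5*i+3, by omega⟩ : Fin (5*m+4)), (⟨5*i+5, by omega⟩ : Fin (5*m+4))) (insert ((⟨5*i+1, by omega⟩ : Fin (5*m+4)), (⟨5*i+3, by omega⟩ : Fin (5*m+4))) M))))⟩)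
    ⟨(predA' hi).mpr (Or.inr rfl), ?_, ?_, ?_, ?_, ?_, ?_⟩ ?_
  · intro hmem
    rcases Finset.mem_insert.mp hmem with heq | hmem
    · exact pair_ne (by omega) (by omega) (by omega) (by omega) (by omega) heq
    rcases Finset.mem_insert.mp hmem with heq | hmem
    · exact pair_ne (by omega) (by omega) (by omega) (by omega) (by omega) heq
    rcases Finset.mem_insert.mp hmem with heq | hmem
    · exact pair_ne (by omega) (by omega) (by omega) (by omega) (by omega) heq
    rcases Finset.mem_insert.mp hmem with heq | hmem
    · exact pair_ne (by omega) (by omega) (by omega) (by omega) (by omega) heq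
    · exact notM _ _ (by omega) (by omega) (by omega) hmem
  · intro w hw
    rcases (predW3 hi).mp hw with hw' | hw'
    · have hww : w = (⟨5*i+3, by omega⟩ : Fin (5*m+4)) := Fin.ext hw'
      rw [hww]
      exact Finset.mem_insert_of_mem (Finset.mem_insert_of_mem (Finset.mem_insert_self _ _))
    · have hww : w = (⟨5*i+4, by omega⟩ : Fin (5*m+4)) := Fin.ext hw'
      rw [hww]
      exact Finset.mem_insert_self _ _
  · exact Finset.mem_union.mpr (Or.inr (Finset.mem_insert_self _ _))
  · refine Or.inr ⟨?_, hblue _ _ (by omega)⟩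
    intro hc
    rcases Finset.mem_union.mp hc with hc | hc
    · exact absurd hc (Finset.notMem_empty _)
    · rcases Finset.mem_insert.mp hc with heq | hc
      · exact absurd (show 5*i+6 = 5*i+5 from congrArg Fin.val heq) (by omega)
      rcases Finset.mem_insert.mp hc with heq | hc
      · exact absurd (show 5*i+6 = 5*i+1 from congrArg Fin.val heq) (by omega)
      exact absurd (show 5*i+6 = 5*i+2 from congrArg Fin.val (Finset.mem_singleton.mp hc)) (by omega)
  · exact card_empty_union _ _ (cle4_4 _ _ _ _)
  · exact pstate_eq (Finset.erase_empty _).symm rfl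
      (Finset.erase_eq_of_notMem (hblue _ _ (by omega))).symm rfl
  -- pcompute 5*i+1 5*i+6
  refine PRBPReaches.cons (t := ⟨∅, {(⟨5*i+6, by omega⟩ : Fin (5*m+4)), (⟨5*i+5, by omega⟩ : Fin (5*m+4)), (⟨5*i+1, by omega⟩ : Fin (5*m+4)), (⟨5*i+2, by omega⟩ : Fin (5*m+4))},
      (PRBPInit (Gm m)).blue, insert ((⟨5*i+1, by omega⟩ : Fin (5*m+4)), (⟨5*i+6, by omega⟩ : Fin (5*m+4))) (insert ((⟨5*i+5, by omega⟩ : Fin (5*m+4)), (⟨5*i+6, by omega⟩ : Fin (5*m+4))) (insert ((⟨5*i+4, by omega⟩ : Fin (5*m+4)), (⟨5*i+5, by omega⟩ : Fin (5*m+4))) (insert ((⟨5*i+1, by omega⟩ : Fin (5*m+4)), (⟨5*i+4, by omega⟩ : Fin (5*m+4))) (insert ((⟨5*i+3, by omega⟩ : Fin (5*m+4)), (⟨5*i+5, by omega⟩ : Fin (5*m+4))) (insert ((⟨5*i+1, by omega⟩ : Fin (5*m+4)), (⟨5*i+3, by omega⟩ : Fin (5*m+4))) M)))))⟩)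
    ⟨(predA' hi).mpr (Or.inl rfl), ?_, ?_, ?_, ?_, ?_, ?_⟩ ?_
  · intro hmem
    rcases Finset.mem_insert.mp hmem with heq | hmem
    · exact pair_ne (by omega) (by omega) (by omega) (by omega) (by omega) heq
    rcases Finset.mem_insert.mp hmem with heq | hmem
    · exact pair_ne (by omega) (by omega) (by omega) (by omega) (by omega) heq
    rcases Finset.mem_insert.mp hmem with heq | hmem
    · exact pair_ne (by omega) (by omega) (by omega) (by omega) (by omega) heq
    rcases Finset.mem_insert.mp hmem with heq | hmem
    · exact pair_ne (by omega) (by omega) (by omega) (by omega) (by omega) heq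
    rcases Finset.mem_insert.mp hmem with heq | hmem
    · exact pair_ne (by omega) (by omega) (by omega) (by omega) (by omega) heq
    · exact notM _ _ (by omega) (by omega) (by omega) hmem
  · intro w hw
    exact Finset.mem_insert_of_mem (Finset.mem_insert_of_mem (Finset.mem_insert_of_mem (Finset.mem_insert_of_mem (Finset.mem_insert_of_mem (inM _ hw (show 5*i+1 ≤ 5*i+2 by omega))))))
  · exact Finset.mem_union.mpr (Or.inr (Finset.mem_insert_of_mem (Finset.mem_insert_of_mem (Finset.mem_insert_self _ _))))
  · exact Or.inl (Finset.mem_union.mpr (Or.inr (Finset.mem_insert_self _ _)))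
  · exact card_empty_union _ _ (by
      rw [Finset.insert_eq_self.mpr (Finset.mem_insert_self _ _)]
      exact cle4_4 _ _ _ _)
  · exact pstate_eq (Finset.erase_empty _).symm (Finset.insert_eq_self.mpr (Finset.mem_insert_self _ _)).symm
      (Finset.erase_eq_of_notMem (hblue _ _ (by omega))).symm rfl
  -- delete 5*i+1
  refine PRBPReaches.cons (t := ⟨∅, {(⟨5*i+6, by omega⟩ : Fin (5*m+4)), (⟨5*i+5, by omega⟩ : Fin (5*m+4)), (⟨5*i+2, by omega⟩ : Fin (5*m+4))},
      (PRBPInit (Gm m)).blue, insert ((⟨5*i+1, by omega⟩ : Fin (5*m+4)), (⟨5*i+6, by omega⟩ : Fin (5*m+4))) (insert ((⟨5*i+5, by omega⟩ : Fin (5*m+4)), (⟨5*i+6, by omega⟩ : Fin (5*m+4))) (insert ((⟨5*i+4, by omega⟩ : Fin (5*m+4)), (⟨5*i+5, by omega⟩ : Fin (5*m+4))) (insert ((⟨5*i+1, by omega⟩ : Fin (5*m+4)), (⟨5*i+4, by omega⟩ : Fin (5*m+4))) (insert ((⟨5*i+3, by omega⟩ : Fin (5*m+4)), (⟨5*i+5,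 by omega⟩ : Fin (5*m+4))) (insert ((⟨5*i+1, by omega⟩ : Fin (5*m+4)), (⟨5*i+3, by omega⟩ : Fin (5*m+4))) M)))))⟩)
    (Or.inr ⟨Finset.mem_insert_of_mem (Finset.mem_insert_of_mem (Finset.mem_insert_self _ _)), ?_, ?_⟩) ?_
  · intro w hw
    rcases (succA hi).mp hw with hw' | hw' | hw'
    · have hww : w = (⟨5*i+3, by omega⟩ : Fin (5*m+4)) := Fin.ext hw'
      rw [hww]
      exact Finset.mem_insert_of_mem (Finset.mem_insert_of_mem (Finset.mem_insert_of_mem (Finset.mem_insert_of_mem (Finset.mem_insert_of_mem (Finset.mem_insert_self _ _)))))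
    · have hww : w = (⟨5*i+4, by omega⟩ : Fin (5*m+4)) := Fin.ext hw'
      rw [hww]
      exact Finset.mem_insert_of_mem (Finset.mem_insert_of_mem (Finset.mem_insert_of_mem (Finset.mem_insert_self _ _)))
    · have hww : w = (⟨5*i+6, by omega⟩ : Fin (5*m+4)) := Fin.ext hw'
      rw [hww]
      exact Finset.mem_insert_self _ _
  · refine pstate_eq rfl ?_ rfl rfl
    ext x
    simp only [Finset.mem_insert, Finset.mem_singleton, Finset.mem_erase,
      ne_eq, Fin.ext_iff, Fin.val_mk]
    omega
  -- pcompute 5*i+5 5*i+7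
  refine PRBPReaches.cons (t := ⟨∅, {(⟨5*i+7, by omega⟩ : Fin (5*m+4)), (⟨5*i+6, by omega⟩ : Fin (5*m+4)), (⟨5*i+5, by omega⟩ : Fin (5*m+4)), (⟨5*i+2, by omega⟩ : Fin (5*m+4))},
      (PRBPInit (Gm m)).blue, insert ((⟨5*i+5, by omega⟩ : Fin (5*m+4)), (⟨5*i+7, by omega⟩ : Fin (5*m+4))) (insert ((⟨5*i+1, by omega⟩ : Fin (5*m+4)), (⟨5*i+6, by omega⟩ : Fin (5*m+4))) (insert ((⟨5*i+5, by omega⟩ : Fin (5*m+4)), (⟨5*i+6, by omega⟩ : Fin (5*m+4))) (insert ((⟨5*i+4, by omega⟩ : Fin (5*m+4)), (⟨5*i+5, by omega⟩ : Fin (5*m+4))) (insert ((⟨5*i+1, by omega⟩ : Fin (5*m+4)), (⟨5*i+4, by omega⟩ : Fin (5*m+4))) (insert ((⟨5*i+3, by omega⟩ : Fin (5*m+4)), (⟨5*i+5, by omega⟩ : Fin (5*m+4))) (insert ((⟨5*i+1, by omega⟩ : Fin (5*m+4)), (⟨5*i+3, by omega⟩ : Fin (5*m+4))) M))))))⟩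)
    ⟨(predB' hi).mpr (Or.inr rfl), ?_, ?_, ?_, ?_, ?_, ?_⟩ ?_
  · intro hmem
    rcases Finset.mem_insert.mp hmem with heq | hmem
    · exact pair_ne (by omega) (by omega) (by omega) (by omega) (by omega) heq
    rcases Finset.mem_insert.mp hmem with heq | hmem
    · exact pair_ne (by omega) (by omega) (by omega) (by omega) (by omega) heq
    rcases Finset.mem_insert.mp hmem with heq | hmem
    · exact pair_ne (by omega) (by omega) (by omega) (by omega) (by omega) heq
    rcases Finset.mem_insert.mp hmem with heq | hmem
    · exact pair_ne (by omega) (by omega) (by omega) (by omega) (by omega) heq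
    rcases Finset.mem_insert.mp hmem with heq | hmem
    · exact pair_ne (by omega) (by omega) (by omega) (by omega) (by omega) heq
    rcases Finset.mem_insert.mp hmem with heq | hmem
    · exact pair_ne (by omega) (by omega) (by omega) (by omega) (by omega) heq
    · exact notM _ _ (by omega) (by omega) (by omega) hmem
  · intro w hw
    rcases (predW3 hi).mp hw with hw' | hw'
    · have hww : w = (⟨5*i+3, by omega⟩ : Fin (5*m+4)) := Fin.ext hw'
      rw [hww]
      exact Finset.mem_insert_of_mem (Finset.mem_insert_of_mem (Finset.mem_insert_of_mem (Finset.mem_insert_of_mem (Finset.mem_insert_self _ _))))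
    · have hww : w = (⟨5*i+4, by omega⟩ : Fin (5*m+4)) := Fin.ext hw'
      rw [hww]
      exact Finset.mem_insert_of_mem (Finset.mem_insert_of_mem (Finset.mem_insert_self _ _))
  · exact Finset.mem_union.mpr (Or.inr (Finset.mem_insert_of_mem (Finset.mem_insert_self _ _)))
  · refine Or.inr ⟨?_, hblue _ _ (by omega)⟩
    intro hc
    rcases Finset.mem_union.mp hc with hc | hc
    · exact absurd hc (Finset.notMem_empty _)
    · rcases Finset.mem_insert.mp hc with heq | hc
      · exact absurd (show 5*i+7 = 5*i+6 from congrArg Fin.val heq) (by omega)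
      rcases Finset.mem_insert.mp hc with heq | hc
      · exact absurd (show 5*i+7 = 5*i+5 from congrArg Fin.val heq) (by omega)
      exact absurd (show 5*i+7 = 5*i+2 from congrArg Fin.val (Finset.mem_singleton.mp hc)) (by omega)
  · exact card_empty_union _ _ (cle4_4 _ _ _ _)
  · exact pstate_eq (Finset.erase_empty _).symm rfl
      (Finset.erase_eq_of_notMem (hblue _ _ (by omega))).symm rfl
  -- pcompute 5*i+2 5*i+7
  refine PRBPReaches.cons (t := ⟨∅, {(⟨5*i+7, by omega⟩ : Fin (5*m+4)), (⟨5*i+6, by omega⟩ : Fin (5*m+4)), (⟨5*i+5, by omega⟩ : Fin (5*m+4)), (⟨5*i+2, by omega⟩ : Fin (5*m+4))},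
      (PRBPInit (Gm m)).blue, insert ((⟨5*i+2, by omega⟩ : Fin (5*m+4)), (⟨5*i+7, by omega⟩ : Fin (5*m+4))) (insert ((⟨5*i+5, by omega⟩ : Fin (5*m+4)), (⟨5*i+7, by omega⟩ : Fin (5*m+4))) (insert ((⟨5*i+1, by omega⟩ : Fin (5*m+4)), (⟨5*i+6, by omega⟩ : Fin (5*m+4))) (insert ((⟨5*i+5, by omega⟩ : Fin (5*m+4)), (⟨5*i+6, by omega⟩ : Fin (5*m+4))) (insert ((⟨5*i+4, by omega⟩ : Fin (5*m+4)), (⟨5*i+5, by omega⟩ : Fin (5*m+4))) (insert ((⟨5*i+1, by omega⟩ : Fin (5*m+4)), (⟨5*i+4, by omega⟩ : Fin (5*m+4))) (insert ((⟨5*i+3, by omega⟩ : Fin (5*m+4)), (⟨5*i+5, by omega⟩ : Fin (5*m+4))) (insert ((⟨5*i+1, by omega⟩ : Fin (5*m+4)), (⟨5*i+3, by omega⟩ : Fin (5*m+4))) M)))))))⟩)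
    ⟨(predB' hi).mpr (Or.inl rfl), ?_, ?_, ?_, ?_, ?_, ?_⟩ ?_
  · intro hmem
    rcases Finset.mem_insert.mp hmem with heq | hmem
    · exact pair_ne (by omega) (by omega) (by omega) (by omega) (by omega) heq
    rcases Finset.mem_insert.mp hmem with heq | hmem
    · exact pair_ne (by omega) (by omega) (by omega) (by omega) (by omega) heq
    rcases Finset.mem_insert.mp hmem with heq | hmem
    · exact pair_ne (by omega) (by omega) (by omega) (by omega) (by omega) heq
    rcases Finset.mem_insert.mp hmem with heq | hmem
    · exact pair_ne (by omega) (by omega) (by omega) (by omega) (by omega) heq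
    rcases Finset.mem_insert.mp hmem with heq | hmem
    · exact pair_ne (by omega) (by omega) (by omega) (by omega) (by omega) heq
    rcases Finset.mem_insert.mp hmem with heq | hmem
    · exact pair_ne (by omega) (by omega) (by omega) (by omega) (by omega) heq
    rcases Finset.mem_insert.mp hmem with heq | hmem
    · exact pair_ne (by omega) (by omega) (by omega) (by omega) (by omega) heq
    · exact notM _ _ (by omega) (by omega) (by omega) hmem
  · intro w hw
    exact Finset.mem_insert_of_mem (Finset.mem_insert_of_mem (Finset.mem_insert_of_mem (Finset.mem_insert_of_mem (Finset.mem_insert_of_mem (Finset.mem_insert_of_mem (Finset.mem_insert_of_mem (inM _ hw (show 5*i+2 ≤ 5*i+2 by omega))))))))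
  · exact Finset.mem_union.mpr (Or.inr (Finset.mem_insert_of_mem (Finset.mem_insert_of_mem (Finset.mem_insert_of_mem (Finset.mem_singleton_self _)))))
  · exact Or.inl (Finset.mem_union.mpr (Or.inr (Finset.mem_insert_self _ _)))
  · exact card_empty_union _ _ (by
      rw [Finset.insert_eq_self.mpr (Finset.mem_insert_self _ _)]
      exact cle4_4 _ _ _ _)
  · exact pstate_eq (Finset.erase_empty _).symm (Finset.insert_eq_self.mpr (Finset.mem_insert_self _ _)).symm
      (Finset.erase_eq_of_notMem (hblue _ _ (by omega))).symm rfl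
  -- delete 5*i+5
  refine PRBPReaches.cons (t := ⟨∅, {(⟨5*i+7, by omega⟩ : Fin (5*m+4)), (⟨5*i+6, by omega⟩ : Fin (5*m+4)), (⟨5*i+2, by omega⟩ : Fin (5*m+4))},
      (PRBPInit (Gm m)).blue, insert ((⟨5*i+2, by omega⟩ : Fin (5*m+4)), (⟨5*i+7, by omega⟩ : Fin (5*m+4))) (insert ((⟨5*i+5, by omega⟩ : Fin (5*m+4)), (⟨5*i+7, by omega⟩ : Fin (5*m+4))) (insert ((⟨5*i+1, by omega⟩ : Fin (5*m+4)), (⟨5*i+6, by omega⟩ : Fin (5*m+4))) (insert ((⟨5*i+5, by omega⟩ : Fin (5*m+4)), (⟨5*i+6, by omega⟩ : Fin (5*m+4))) (insert ((⟨5*i+4, by omega⟩ : Fin (5*m+4)), (⟨5*i+5, by omega⟩ : Fin (5*m+4))) (insert ((⟨5*i+1, by omega⟩ : Fin (5*m+4)), (⟨5*i+4, by omega⟩ : Fin (5*m+4))) (insert ((⟨5*i+3, by omega⟩ : Fin (5*m+4)), (⟨5*i+5, by omega⟩ : Fin (5*m+4))) (insert ((⟨5*i+1, by omega⟩ : Fin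 (5*m+4)), (⟨5*i+3, by omega⟩ : Fin (5*m+4))) M)))))))⟩)
    (Or.inr ⟨Finset.mem_insert_of_mem (Finset.mem_insert_of_mem (Finset.mem_insert_self _ _)), ?_, ?_⟩) ?_
  · intro w hw
    rcases (succW3 hi).mp hw with hw' | hw'
    · have hww : w = (⟨5*i+6, by omega⟩ : Fin (5*m+4)) := Fin.ext hw'
      rw [hww]
      exact Finset.mem_insert_of_mem (Finset.mem_insert_of_mem (Finset.mem_insert_of_mem (Finset.mem_insert_self _ _)))
    · have hww : w = (⟨5*i+7, by omega⟩ : Fin (5*m+4)) := Fin.ext hw'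
      rw [hww]
      exact Finset.mem_insert_of_mem (Finset.mem_insert_self _ _)
  · refine pstate_eq rfl ?_ rfl rfl
    ext x
    simp only [Finset.mem_insert, Finset.mem_singleton, Finset.mem_erase,
      ne_eq, Fin.ext_iff, Fin.val_mk]
    omega
  -- delete 5*i+2
  refine PRBPReaches.cons (t := ⟨∅, {(⟨5*i+6, by omega⟩ : Fin (5*m+4)), (⟨5*i+7, by omega⟩ : Fin (5*m+4))},
      (PRBPInit (Gm m)).blue, insert ((⟨5*i+2, by omega⟩ : Fin (5*m+4)), (⟨5*i+7, by omega⟩ : Fin (5*m+4))) (insert ((⟨5*i+5, by omega⟩ : Fin (5*m+4)), (⟨5*i+7, by omega⟩ : Fin (5*m+4))) (insert ((⟨5*i+1, by omega⟩ : Fin (5*m+4)), (⟨5*i+6, by omega⟩ : Fin (5*m+4))) (insert ((⟨5*i+5, by omega⟩ : Fin (5*m+4)), (⟨5*i+6, by omega⟩ : Fin (5*m+4))) (insert ((⟨5*i+4, by omega⟩ : Fin (5*m+4)), (⟨5*i+5, by omega⟩ : Fin (5*m+4))) (insert ((⟨5*i+1, by omega⟩ : Fin (5*m+4)), (⟨5*i+4,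 by omega⟩ : Fin (5*m+4))) (insert ((⟨5*i+3, by omega⟩ : Fin (5*m+4)), (⟨5*i+5, by omega⟩ : Fin (5*m+4))) (insert ((⟨5*i+1, by omega⟩ : Fin (5*m+4)), (⟨5*i+3, by omega⟩ : Fin (5*m+4))) M)))))))⟩)
    (Or.inr ⟨Finset.mem_insert_of_mem (Finset.mem_insert_of_mem (Finset.mem_singleton_self _)), ?_, ?_⟩) (PRBPReaches.nil _)
  · intro w hw
    have hw' : w.val = 5*i+7 := (succB hi).mp hw
    have hww : w = (⟨5*i+7, by omega⟩ : Fin (5*m+4)) := Fin.ext hw'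
    rw [hww]
    exact Finset.mem_insert_self _ _
  · refine pstate_eq rfl ?_ rfl rfl
    ext x
    simp only [Finset.mem_insert, Finset.mem_singleton, Finset.mem_erase,
      ne_eq, Fin.ext_iff, Fin.val_mk]
    omega

end LGF
namespace LGF

lemma card_union_le_4 {α : Type} [DecidableEq α] {s t : Finset α}
    (hs : s.card ≤ 2) (ht : t.card ≤ 2) : (s ∪ t).card ≤ 4 :=
  le_trans (Finset.card_union_le _ _) (by omega)

set_option maxHeartbeats 1000000 in
lemma prbp_run {m : ℕ} (hm : 0 < m) :
    ∀ i, ∀ _ : i ≤ m, ∃ (L : List (PRBPMove (Fin (5*m+4))))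
      (M : Finset (Fin (5*m+4) × Fin (5*m+4))),
      PRBPCost L = 1 ∧
      (∀ e, e ∈ M ↔ (gE m e.1.val e.2.val ∧ e.2.val ≤ 5*i+2)) ∧
      PRBPReaches (Gm m) 4 (PRBPInit (Gm m)) L
        ⟨∅, {⟨5*i+1, by omega⟩, ⟨5*i+2, by omega⟩}, (PRBPInit (Gm m)).blue,
          M⟩ := by
  have hblue : ∀ (x : ℕ) (h : x < 5*m+4), x ≠ 0 →
      (⟨x, h⟩ : Fin (5*m+4)) ∉ (PRBPInit (Gm m)).blue := fun x h hx hc =>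
    hx ((isSource_iff hm _).mp (Finset.mem_filter.mp hc).2)
  intro i
  induction i with
  | zero =>
      intro _
      refine ⟨[.load ⟨0, by omega⟩, .pcompute ⟨0, by omega⟩ ⟨1, by omega⟩,
        .pcompute ⟨0, by omega⟩ ⟨2, by omega⟩, .delete ⟨0, by omega⟩],
        insert ((⟨0, by omega⟩ : Fin (5*m+4)), (⟨2, by omega⟩ : Fin (5*m+4)))
          {((⟨0, by omega⟩ : Fin (5*m+4)), (⟨1, by omega⟩ : Fin (5*m+4)))},
        rfl, ?_, ?_⟩
      · intro e
        constructor
        · intro hmem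
          rcases Finset.mem_insert.mp hmem with rfl | hmem
          · exact ⟨Or.inl ⟨rfl, Or.inr rfl⟩, (by omega : (2:ℕ) ≤ 5*0+2)⟩
          · rw [Finset.mem_singleton.mp hmem]
            exact ⟨Or.inl ⟨rfl, Or.inl rfl⟩, (by omega : (1:ℕ) ≤ 5*0+2)⟩
        · rintro ⟨h1, h2⟩
          rcases h1 with ⟨hx, hy | hy⟩ | ⟨j, hj, hc⟩ | hc
          · have he : e = ((⟨0, by omega⟩ : Fin (5*m+4)), ⟨1, by omega⟩) :=
              Prod.ext (Fin.ext (show e.1.val = 0 by omega))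
                (Fin.ext (show e.2.val = 1 by omega))
            rw [he]
            exact Finset.mem_insert_of_mem (Finset.mem_singleton_self _)
          · have he : e = ((⟨0, by omega⟩ : Fin (5*m+4)), ⟨2, by omega⟩) :=
              Prod.ext (Fin.ext (show e.1.val = 0 by omega))
                (Fin.ext (show e.2.val = 2 by omega))
            rw [he]
            exact Finset.mem_insert_self _ _
          · exact absurd h2 (by omega)
          · exact absurd h2 (by omega)
      · -- load u0
        refine PRBPReaches.cons
          (t := ⟨{⟨0, by omega⟩}, ∅, (PRBPInit (Gm m)).blue, ∅⟩)
          ⟨Finset.mem_filter.mpr ⟨Finset.mem_univ _,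
            (isSource_iff hm _).mpr rfl⟩, ?_, rfl⟩ ?_
        · exact (by rw [Finset.union_empty]; exact cle4_1 _ :
            ((insert (⟨0, by omega⟩ : Fin (5*m+4)) (∅ : Finset (Fin (5*m+4))))
              ∪ (∅ : Finset (Fin (5*m+4)))).card ≤ 4)
        -- pcompute 0 1
        refine PRBPReaches.cons
          (t := ⟨{⟨0, by omega⟩}, {⟨1, by omega⟩}, (PRBPInit (Gm m)).blue,
            insert ((⟨0, by omega⟩ : Fin (5*m+4)), (⟨1, by omega⟩ : Fin (5*m+4)))
              ∅⟩)
          ⟨Or.inl ⟨rfl, Or.inl rfl⟩, Finset.notMem_empty _,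
           fun w hw => absurd hw pred0,
           Finset.mem_union.mpr (Or.inl (Finset.mem_singleton_self _)),
           ?_, ?_, ?_⟩ ?_
        · refine Or.inr ⟨?_, hblue _ _ (by omega)⟩
          intro hc
          rcases Finset.mem_union.mp hc with hc | hc
          · exact absurd (show (1:ℕ) = 0 from congrArg Fin.val
              (Finset.mem_singleton.mp hc)) (by omega)
          · exact absurd hc (Finset.notMem_empty _)
        · refine card_union_le_4 (le_trans Finset.card_erase_le ?_) ?_
          · exact le_trans (cle_1 _) (by omega)
          · exact le_trans (cle_1 _) (by omega)
        · exact pstate_eq (Finset.erase_eq_of_notMem (fun hc =>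
            absurd (show (1:ℕ) = 0 from congrArg Fin.val
              (Finset.mem_singleton.mp hc)) (by omega))).symm rfl
            (Finset.erase_eq_of_notMem (hblue _ _ (by omega))).symm rfl
        -- pcompute 0 2
        refine PRBPReaches.cons
          (t := ⟨{⟨0, by omega⟩}, {⟨2, by omega⟩, ⟨1, by omega⟩},
            (PRBPInit (Gm m)).blue,
            insert ((⟨0, by omega⟩ : Fin (5*m+4)), (⟨2, by omega⟩ : Fin (5*m+4)))
              (insert ((⟨0, by omega⟩ : Fin (5*m+4)),
                (⟨1, by omega⟩ : Fin (5*m+4))) ∅)⟩)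
          ⟨Or.inl ⟨rfl, Or.inr rfl⟩, ?_,
           fun w hw => absurd hw pred0,
           Finset.mem_union.mpr (Or.inl (Finset.mem_singleton_self _)),
           ?_, ?_, ?_⟩ ?_
        · intro hmem
          exact pair_ne (by omega) (by omega) (by omega) (by omega) (by omega)
            (Finset.mem_singleton.mp hmem)
        · refine Or.inr ⟨?_, hblue _ _ (by omega)⟩
          intro hc
          rcases Finset.mem_union.mp hc with hc | hc
          · exact absurd (show (2:ℕ) = 0 from congrArg Fin.val
              (Finset.mem_singleton.mp hc)) (by omega)
          · exact absurd (show (2:ℕ) = 1 from congrArg Fin.val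
              (Finset.mem_singleton.mp hc)) (by omega)
        · refine card_union_le_4 (le_trans Finset.card_erase_le ?_) ?_
          · exact le_trans (cle_1 _) (by omega)
          · exact cle_2 _ _
        · exact pstate_eq (Finset.erase_eq_of_notMem (fun hc =>
            absurd (show (2:ℕ) = 0 from congrArg Fin.val
              (Finset.mem_singleton.mp hc)) (by omega))).symm rfl
            (Finset.erase_eq_of_notMem (hblue _ _ (by omega))).symm rfl
        -- delete 0
        refine PRBPReaches.cons
          (t := ⟨∅, {⟨5*0+1, by omega⟩, ⟨5*0+2, by omega⟩},
            (PRBPInit (Gm m)).blue,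
            insert ((⟨0, by omega⟩ : Fin (5*m+4)), (⟨2, by omega⟩ : Fin (5*m+4)))
              {((⟨0, by omega⟩ : Fin (5*m+4)), (⟨1, by omega⟩ : Fin (5*m+4)))}⟩)
          (Or.inl ⟨Finset.mem_singleton_self _, ?_⟩) (PRBPReaches.nil _)
        refine pstate_eq (Finset.erase_singleton _).symm ?_ rfl ?_
        · ext x
          simp only [Finset.mem_insert, Finset.mem_singleton, Fin.ext_iff,
            Fin.val_mk]
          omega
        · ext e
          simp
  | succ i ih =>
      intro hi1
      obtain ⟨L, M, hcost, hM, hreach⟩ := ih (by omega)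
      obtain ⟨Lg, M', hcg, hM', hg⟩ := prbp_gadget (show i < m by omega) M hM
      have hset : ({⟨5*i+6, by omega⟩, ⟨5*i+7, by omega⟩} :
          Finset (Fin (5*m+4))) =
          {⟨5*(i+1)+1, by omega⟩, ⟨5*(i+1)+2, by omega⟩} := by
        ext x
        simp only [Finset.mem_insert, Finset.mem_singleton, Fin.ext_iff,
          Fin.val_mk]
        omega
      rw [hset] at hg
      refine ⟨L ++ Lg, M', ?_, hM', preaches_append hreach hg⟩
      rw [PRBPCost_append, hcost, hcg]

lemma prbp_upper {m : ℕ} (hm : 0 < m) :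
    ∃ L, PRBPValid (Gm m) 4 L ∧ PRBPCost L = 2 := by
  obtain ⟨L, M, hcost, hM, hreach⟩ := prbp_run hm m le_rfl
  have hblue : ∀ (x : ℕ) (h : x < 5*m+4), x ≠ 0 →
      (⟨x, h⟩ : Fin (5*m+4)) ∉ (PRBPInit (Gm m)).blue := fun x h hx hc =>
    hx ((isSource_iff hm _).mp (Finset.mem_filter.mp hc).2)
  have htail : PRBPReaches (Gm m) 4
      ⟨∅, {⟨5*m+1, by omega⟩, ⟨5*m+2, by omega⟩}, (PRBPInit (Gm m)).blue, M⟩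
      [.pcompute ⟨5*m+1, by omega⟩ ⟨5*m+3, by omega⟩,
       .pcompute ⟨5*m+2, by omega⟩ ⟨5*m+3, by omega⟩,
       .save ⟨5*m+3, by omega⟩]
      ⟨{⟨5*m+3, by omega⟩}, {⟨5*m+1, by omega⟩, ⟨5*m+2, by omega⟩},
        insert ⟨5*m+3, by omega⟩ (PRBPInit (Gm m)).blue,
        insert ((⟨5*m+2, by omega⟩ : Fin (5*m+4)), (⟨5*m+3, by omega⟩ : Fin (5*m+4)))
          (insert ((⟨5*m+1, by omega⟩ : Fin (5*m+4)),
            (⟨5*m+3, by omega⟩ : Fin (5*m+4))) M)⟩ := by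
    -- pcompute Am v0
    refine PRBPReaches.cons
      (t := ⟨∅, {⟨5*m+3, by omega⟩, ⟨5*m+1, by omega⟩, ⟨5*m+2, by omega⟩},
        (PRBPInit (Gm m)).blue,
        insert ((⟨5*m+1, by omega⟩ : Fin (5*m+4)),
          (⟨5*m+3, by omega⟩ : Fin (5*m+4))) M⟩)
      ⟨predV0.mpr (Or.inl rfl), ?_, ?_, ?_, ?_, ?_, ?_⟩ ?_
    · intro hmem
      exact absurd (show (5*m+3 : ℕ) ≤ 5*m+2 from ((hM _).mp hmem).2) (by omega)
    · intro w hw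
      exact (hM _).mpr ⟨hw, (show (5*m+1:ℕ) ≤ 5*m+2 by omega)⟩
    · exact Finset.mem_union.mpr (Or.inr (Finset.mem_insert_self _ _))
    · refine Or.inr ⟨?_, hblue _ _ (by omega)⟩
      intro hc
      rcases Finset.mem_union.mp hc with hc | hc
      · exact absurd hc (Finset.notMem_empty _)
      · rcases Finset.mem_insert.mp hc with heq | hc
        · exact absurd (show (5*m+3:ℕ) = 5*m+1 from congrArg Fin.val heq)
            (by omega)
        exact absurd (show (5*m+3:ℕ) = 5*m+2 from congrArg Fin.val
          (Finset.mem_singleton.mp hc)) (by omega)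
    · exact card_empty_union _ _ (cle4_3 _ _ _)
    · exact pstate_eq (Finset.erase_empty _).symm rfl
        (Finset.erase_eq_of_notMem (hblue _ _ (by omega))).symm rfl
    -- pcompute Bm v0
    refine PRBPReaches.cons
      (t := ⟨∅, {⟨5*m+3, by omega⟩, ⟨5*m+1, by omega⟩, ⟨5*m+2, by omega⟩},
        (PRBPInit (Gm m)).blue,
        insert ((⟨5*m+2, by omega⟩ : Fin (5*m+4)),
          (⟨5*m+3, by omega⟩ : Fin (5*m+4)))
          (insert ((⟨5*m+1, by omega⟩ : Fin (5*m+4)),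
            (⟨5*m+3, by omega⟩ : Fin (5*m+4))) M)⟩)
      ⟨predV0.mpr (Or.inr rfl), ?_, ?_, ?_, ?_, ?_, ?_⟩ ?_
    · intro hmem
      rcases Finset.mem_insert.mp hmem with heq | hmem
      · exact pair_ne (by omega) (by omega) (by omega) (by omega) (by omega) heq
      · exact absurd (show (5*m+3 : ℕ) ≤ 5*m+2 from ((hM _).mp hmem).2)
          (by omega)
    · intro w hw
      exact Finset.mem_insert_of_mem
        ((hM _).mpr ⟨hw, (show (5*m+2:ℕ) ≤ 5*m+2 by omega)⟩)
    · exact Finset.mem_union.mpr (Or.inr (Finset.mem_insert_of_mem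
        (Finset.mem_insert_of_mem (Finset.mem_singleton_self _))))
    · exact Or.inl (Finset.mem_union.mpr (Or.inr (Finset.mem_insert_self _ _)))
    · exact card_empty_union _ _ (by
        rw [Finset.insert_eq_self.mpr (Finset.mem_insert_self _ _)]
        exact cle4_3 _ _ _)
    · exact pstate_eq (Finset.erase_empty _).symm
        (Finset.insert_eq_self.mpr (Finset.mem_insert_self _ _)).symm
        (Finset.erase_eq_of_notMem (hblue _ _ (by omega))).symm rfl
    -- save v0
    refine PRBPReaches.cons
      (t := ⟨{⟨5*m+3, by omega⟩}, {⟨5*m+1, by omega⟩, ⟨5*m+2, by omega⟩},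
        insert ⟨5*m+3, by omega⟩ (PRBPInit (Gm m)).blue,
        insert ((⟨5*m+2, by omega⟩ : Fin (5*m+4)),
          (⟨5*m+3, by omega⟩ : Fin (5*m+4)))
          (insert ((⟨5*m+1, by omega⟩ : Fin (5*m+4)),
            (⟨5*m+3, by omega⟩ : Fin (5*m+4))) M)⟩)
      ⟨Finset.mem_insert_self _ _, ?_⟩ (PRBPReaches.nil _)
    refine pstate_eq rfl ?_ rfl rfl
    ext x
    simp only [Finset.mem_insert, Finset.mem_singleton, Finset.mem_erase,
      ne_eq, Fin.ext_iff, Fin.val_mk]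
    omega
  refine ⟨L ++ [.pcompute ⟨5*m+1, by omega⟩ ⟨5*m+3, by omega⟩,
    .pcompute ⟨5*m+2, by omega⟩ ⟨5*m+3, by omega⟩, .save ⟨5*m+3, by omega⟩],
    ⟨_, preaches_append hreach htail, ?_, ?_⟩, ?_⟩
  · intro v hv
    have hveq : v = (⟨5*m+3, by omega⟩ : Fin (5*m+4)) :=
      Fin.ext ((isSink_iff hm v).mp hv)
    rw [hveq]
    exact Finset.mem_insert_self _ _
  · intro u v huv
    by_cases hle : v.val ≤ 5*m+2
    · exact Finset.mem_insert_of_mem (Finset.mem_insert_of_mem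
        ((hM _).mpr ⟨huv, hle⟩))
    · push_neg at hle
      rcases huv with hc | ⟨j, hj, hc⟩ | ⟨hx, hy⟩
      · exact absurd hc (by omega)
      · exact absurd hc (by omega)
      · rcases hx with hx | hx
        · have he : (u, v) = ((⟨5*m+1, by omega⟩ : Fin (5*m+4)),
              ⟨5*m+3, by omega⟩) :=
            Prod.ext (Fin.ext (show u.val = 5*m+1 from hx))
              (Fin.ext (show v.val = 5*m+3 from hy))
          rw [he]
          exact Finset.mem_insert_of_mem (Finset.mem_insert_self _ _)
        · have he : (u, v) = ((⟨5*m+2, by omega⟩ : Fin (5*m+4)),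
              ⟨5*m+3, by omega⟩) :=
            Prod.ext (Fin.ext (show u.val = 5*m+2 from hx))
              (Fin.ext (show v.val = 5*m+3 from hy))
          rw [he]
          exact Finset.mem_insert_self _ _
  · rw [PRBPCost_append, hcost]
    rfl

end LGF
/-- there is an infinite family of DAGs with maximum in-degree `2`
and maximum out-degree `3` on `n` nodes such that, with `r = 4`, the optimal
one-shot RBP cost is `Θ(n)` while the optimal PRBP cost is exactly `2`. -/
theorem linear_gap_family :
    ∃ (f : ℕ → ℕ) (G : (k : ℕ) → DirGraph (Fin (f k))),
      StrictMono f ∧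
      (∀ k, (G k).Acyclic ∧ (G k).NoIsolated ∧
        (G k).maxInDeg = 2 ∧ (G k).maxOutDeg = 3) ∧
      ∃ c₁ c₂ : ℕ, 0 < c₁ ∧ 0 < c₂ ∧
        ∀ k, ((f k : ℕ∞) ≤ (c₁ : ℕ∞) * optRBP (G k) 4) ∧
          (optRBP (G k) 4 ≤ ((c₂ * f k : ℕ) : ℕ∞)) ∧
          optPRBP (G k) 4 = ((2 : ℕ) : ℕ∞) := by
  refine ⟨fun k => 5*(k+1)+4, fun k => LGF.Gm (k+1), ?_, ?_,
    9, 1, by omega, by omega, ?_⟩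
  · intro a b h
    dsimp only
    omega
  · intro k
    exact ⟨LGF.acyclic_Gm _, LGF.noIsolated_Gm (by omega),
      LGF.maxInDeg_Gm (by omega), LGF.maxOutDeg_Gm (by omega)⟩
  · intro k
    have hm : 0 < k+1 := by omega
    refine ⟨?_, ?_, ?_⟩
    · show ((5*(k+1)+4 : ℕ) : ℕ∞) ≤ ((9:ℕ) : ℕ∞) * optRBP (LGF.Gm (k+1)) 4
      have h1 : ((k+1 : ℕ) : ℕ∞) ≤ optRBP (LGF.Gm (k+1)) 4 := by
        apply le_sInf
        rintro x ⟨L, hL, rfl⟩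
        exact Nat.cast_le.mpr (LGF.rbp_lower hm hL)
      calc ((5*(k+1)+4 : ℕ) : ℕ∞) ≤ ((9*(k+1) : ℕ) : ℕ∞) :=
            Nat.cast_le.mpr (by omega)
        _ = ((9:ℕ) : ℕ∞) * ((k+1 : ℕ) : ℕ∞) := Nat.cast_mul 9 (k+1)
        _ ≤ ((9:ℕ) : ℕ∞) * optRBP (LGF.Gm (k+1)) 4 := mul_le_mul_right h1 _
    · obtain ⟨L, hval, hcost⟩ := LGF.rbp_upper (m := k+1) hm
      refine le_trans (sInf_le ⟨L, hval, rfl⟩) ?_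
      refine Nat.cast_le.mpr ?_
      show RBPCost L ≤ 1*(5*(k+1)+4)
      omega
    · obtain ⟨L, hval, hcost⟩ := LGF.prbp_upper (m := k+1) hm
      apply le_antisymm
      · exact sInf_le ⟨L, hval, congrArg Nat.cast hcost⟩
      · apply le_sInf
        rintro x ⟨L', hL', rfl⟩
        exact Nat.cast_le.mpr (LGF.prbp_lower hm hL')
end

section
/- Given a DAG G, a capacity r, and a valid PRBP pebbling strategy of I/O cost C, there exists a (2r)-dominator partition of the node set V into k = ⌈C/r⌉ classes (so r·k ≥ C ≥ r·(k−1)). Consequently, OPT_PRBP(G,r) ≥ r · (MIN_dom(2r) − 1), where MIN_dom(S) is the minimum number of classes over all S-dominator partitions of G. -/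
open scoped Classical

variable {V : Type} [Fintype V] [DecidableEq V]

/-
Cut the pebbling after every `r`-th I/O operation into blocks. A source goes to the block of
its first load, a non-source sink to the block of its first save after its last in-edge is
marked, and every other node to the block of the move marking its last in-edge; along an edge
these times increase, so there is no cyclic dependency between the classes.

Block `i` is dominated by the at most `r` nodes red at its start together with the at most `r`
nodes loaded or saved during it. Walk back along a source path from a node of the class: a node
whose value is lost at the start of the block (neither red nor blue, though still needed) has
its path predecessor used only inside the block, and sources never lose their value, so some
node on the path still holds its value at the start and is used inside the block. If it is
not red at the start, it is blue, and a node that is blue but not red becomes usable only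
through a load.
-/

section Step

variable {V : Type} [DecidableEq V] {G : DirGraph V} {r : ℕ} {s t : PRBPState V}
  {m : PRBPMove V} {v : V}

/-- Once `v` has a marked in-edge this stays true: a dark red pebble may only be deleted after
all out-edges of its node are marked. -/
def KeepsValue (G : DirGraph V) (s : PRBPState V) (v : V) : Prop :=
  v ∈ s.red ∨ v ∈ s.blue ∨ ∀ z, G.E v z → (v, z) ∈ s.marked

lemma KeepsValue.mem_red_or_mem_blue {z : V} (h : KeepsValue G s v) (hE : G.E v z)
    (hz : (v, z) ∉ s.marked) : v ∈ s.red ∨ v ∈ s.blue := by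
  rcases h with h | h | h
  exacts [Or.inl h, Or.inr h, absurd (h z hE) hz]

namespace PRBPStep

lemma marked_subset (h : PRBPStep G r s m t) : s.marked ⊆ t.marked := by
  cases m <;> simp only [PRBPStep] at h <;> aesop

lemma lred_subset_blue (h : PRBPStep G r s m t) (hs : s.lred ⊆ s.blue) : t.lred ⊆ t.blue := by
  cases m <;> simp only [PRBPStep] at h <;> aesop (add norm Finset.subset_iff)

lemma eq_load_or_pcompute (h : PRBPStep G r s m t) (h1 : v ∉ s.red) (h2 : v ∈ t.red) :
    m = .load v ∨ ∃ q, m = .pcompute q v := by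
  cases m <;> simp only [PRBPStep] at h <;> aesop (add norm PRBPState.red)

lemma eq_save (h : PRBPStep G r s m t) (h1 : v ∉ s.blue) (h2 : v ∈ t.blue) : m = .save v := by
  cases m <;> simp only [PRBPStep] at h <;> aesop

lemma eq_pcompute {e : V × V} (h : PRBPStep G r s m t) (h1 : e ∉ s.marked)
    (h2 : e ∈ t.marked) : m = .pcompute e.1 e.2 := by
  cases m <;> simp only [PRBPStep] at h <;> aesop

lemma eq_load (h : PRBPStep G r s m t) (h1 : v ∉ s.red) (h2 : v ∈ s.blue)
    (h3 : v ∈ t.red ∨ v ∉ t.blue) : m = .load v := by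
  cases m <;> simp only [PRBPStep] at h <;> aesop (add norm PRBPState.red)

lemma keepsValue (h : PRBPStep G r s m t) (hs : s.lred ⊆ s.blue) (hv : KeepsValue G s v) :
    KeepsValue G t v := by
  unfold KeepsValue PRBPState.red at *
  cases m with
  | save w => obtain ⟨hw, rfl⟩ := h; by_cases hvw : v = w <;> simp_all
  | load w => obtain ⟨-, -, rfl⟩ := h; by_cases hvw : v = w <;> simp_all
  | pcompute u w =>
    obtain ⟨-, -, -, -, -, -, rfl⟩ := h
    by_cases hvw : v = w
    · simp [hvw]
    · simp only [Finset.mem_union, Finset.mem_erase, Finset.mem_insert, hvw] at hv ⊢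
      aesop
  | delete w =>
    rcases h with ⟨hw, rfl⟩ | ⟨-, hw, rfl⟩ <;> by_cases hvw : v = w
    · subst hvw; exact Or.inr (Or.inl (hs hw))
    all_goals simp_all

lemma red_card_le (h : PRBPStep G r s m t) (hs : s.red.card ≤ r) : t.red.card ≤ r := by
  unfold PRBPState.red at *
  cases m with
  | save w =>
    obtain ⟨hw, rfl⟩ := h
    refine le_trans (Finset.card_le_card fun x hx => ?_) hs
    by_cases hxw : x = w <;> simp_all
  | load w => obtain ⟨-, hc, rfl⟩ := h; exact hc
  | pcompute u w => obtain ⟨-, -, -, -, -, hc, rfl⟩ := h; exact hc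
  | delete w =>
    rcases h with ⟨-, rfl⟩ | ⟨-, -, rfl⟩ <;> refine le_trans (Finset.card_le_card ?_) hs
    exacts [Finset.union_subset_union (Finset.erase_subset _ _) subset_rfl,
      Finset.union_subset_union subset_rfl (Finset.erase_subset _ _)]

end PRBPStep
end Step

/-- The index of the move that first makes `f` true. -/
noncomputable def entryTime (f : ℕ → Prop) : ℕ := sInf {j | f (j + 1)}

section EntryTime

variable {f : ℕ → Prop}

lemma entryTime_lt (h0 : ¬ f 0) {j : ℕ} (hj : f j) : entryTime f < j := by
  obtain ⟨j, rfl⟩ := Nat.exists_eq_add_one_of_ne_zero (fun h => h0 (h ▸ hj))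
  exact Nat.lt_succ_of_le (Nat.sInf_le hj)

lemma not_entryTime_and_succ (h0 : ¬ f 0) {n : ℕ} (hn : f n) :
    ¬ f (entryTime f) ∧ f (entryTime f + 1) := by
  obtain ⟨n, rfl⟩ := Nat.exists_eq_add_one_of_ne_zero (fun h => h0 (h ▸ hn))
  exact ⟨fun h => (entryTime_lt h0 h).false, Nat.sInf_mem (s := {j | f (j + 1)}) ⟨n, hn⟩⟩

lemma entryTime_lt_iff (hf : Monotone f) (h0 : ¬ f 0) {n : ℕ} (hn : f n) {j : ℕ} :
    entryTime f < j ↔ f j :=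
  ⟨fun h => hf (Nat.succ_le_of_lt h) (not_entryTime_and_succ h0 hn).2, entryTime_lt h0⟩

end EntryTime

lemma Nat.exists_not_and_succ_of_le {f : ℕ → Prop} {a b : ℕ} (hab : a ≤ b) (ha : ¬ f a)
    (hb : f b) : ∃ j, a ≤ j ∧ j < b ∧ ¬ f j ∧ f (j + 1) := by
  obtain ⟨n, hn, hn1⟩ := Nat.exists_not_and_succ_of_not_zero_of_exists
    (p := fun n => f (a + n) ∧ a + n ≤ b) (by simp [ha]) ⟨b - a, by simp [hab, hb]⟩
  exact ⟨a + n, by omega, by omega, fun h => hn ⟨h, by omega⟩, hn1.1⟩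

section Trace

variable {V : Type} [DecidableEq V] {G : DirGraph V} {r : ℕ} {L : List (PRBPMove V)}
  {st : ℕ → PRBPState V}

structure IsTrace (G : DirGraph V) (r : ℕ) (L : List (PRBPMove V)) (st : ℕ → PRBPState V) :
    Prop where
  step : ∀ j m, L[j]? = some m → PRBPStep G r (st j) m (st (j + 1))
  stay : ∀ j, L[j]? = none → st (j + 1) = st j

lemma PRBPReaches.exists_isTrace {s t : PRBPState V} (h : PRBPReaches G r s L t) :
    ∃ st, IsTrace G r L st ∧ st 0 = s ∧ st L.length = t := by
  induction h with
  | nil s => exact ⟨fun _ => s, ⟨fun j m h => by simp at h, fun _ _ => rfl⟩, rfl, rfl⟩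
  | @cons s _ _ m _ hstep _ ih =>
    obtain ⟨st, hst, h0, hlen⟩ := ih
    refine ⟨fun | 0 => s | j + 1 => st j, ⟨fun j m' hj => ?_, fun j hj => ?_⟩, rfl, hlen⟩
    · cases j with
      | zero => simp only [List.getElem?_cons_zero, Option.some.injEq] at hj; simpa [← hj, h0]
      | succ j => exact hst.step j m' (by simpa using hj)
    · cases j with
      | zero => simp at hj
      | succ j => exact hst.stay j (by simpa using hj)

namespace IsTrace

lemma le_induction (hst : IsTrace G r L st) (P : PRBPState V → Prop) {a b : ℕ} (hab : a ≤ b)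
    (ha : P (st a))
    (hstep : ∀ j m, a ≤ j → PRBPStep G r (st j) m (st (j + 1)) → P (st j) →
      P (st (j + 1))) :
    P (st b) := by
  induction b, hab using Nat.le_induction with
  | base => exact ha
  | succ j haj ih =>
    cases hj : L[j]? with
    | none => rwa [hst.stay j hj]
    | some m => exact hstep j m haj (hst.step j m hj) ih

lemma exists_step_of_not_of_succ (hst : IsTrace G r L st) (P : PRBPState V → Prop) {j : ℕ}
    (h1 : ¬ P (st j)) (h2 : P (st (j + 1))) :
    ∃ m, L[j]? = some m ∧ PRBPStep G r (st j) m (st (j + 1)) := by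
  cases hj : L[j]? with
  | none => exact absurd (hst.stay j hj ▸ h2) h1
  | some m => exact ⟨m, rfl, hst.step j m hj⟩

lemma marked_mono (hst : IsTrace G r L st) {a b : ℕ} (hab : a ≤ b) :
    (st a).marked ⊆ (st b).marked := fun e he =>
  hst.le_induction (fun s => e ∈ s.marked) hab he fun _ _ _ h he => h.marked_subset he

/-- Leaving the state "blue but not red" takes a load. -/
lemma mem_red_or_exists_load (hst : IsTrace G r L st) {y : V} {σ t : ℕ}
    (hσt : σ ≤ t) (hσ : y ∈ (st σ).red ∨ y ∈ (st σ).blue)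
    (ht : y ∈ (st t).red ∨ y ∉ (st t).blue) :
    y ∈ (st σ).red ∨ ∃ j, σ ≤ j ∧ j < t ∧ L[j]? = some (.load y) := by
  by_cases hred : y ∈ (st σ).red
  · exact Or.inl hred
  obtain ⟨j, hσj, hjt, hj, hj1⟩ := Nat.exists_not_and_succ_of_le
    (f := fun j => y ∈ (st j).red ∨ y ∉ (st j).blue) hσt (by tauto) ht
  obtain ⟨m, hm, hstep⟩ :=
    hst.exists_step_of_not_of_succ (fun s => y ∈ s.red ∨ y ∉ s.blue) hj hj1
  simp only [not_or, not_not] at hj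
  exact Or.inr ⟨j, hσj, hjt, hstep.eq_load hj.1 hj.2 hj1 ▸ hm⟩

end IsTrace
end Trace

lemma IsSourcePath.of_append_singleton {V : Type} {G : DirGraph V} {l : List V} {u v : V}
    (h : IsSourcePath G (l ++ [u] ++ [v])) : IsSourcePath G (l ++ [u]) ∧ G.E u v := by
  obtain ⟨-, hc, hs⟩ := h
  obtain ⟨hc, -, hlast⟩ := List.isChain_append.1 hc
  refine ⟨⟨by simp, hc, fun hne => ?_⟩, hlast u (by simp) v (by simp)⟩
  cases l <;> simpa using hs (by simp)

section IOCount

variable {V : Type} {L : List (PRBPMove V)} {r i j k : ℕ} {m : PRBPMove V}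

def ioBefore (L : List (PRBPMove V)) (j : ℕ) : ℕ := PRBPCost (L.take j)

lemma ioBefore_succ (h : L[j]? = some m) : ioBefore L (j + 1) = ioBefore L j + m.ioCost := by
  simp [ioBefore, PRBPCost, List.take_add_one, h]

lemma ioBefore_mono : Monotone (ioBefore L) :=
  monotone_nat_of_le_succ fun j => by simp [ioBefore, PRBPCost, List.take_add_one]

lemma ioBefore_le_cost (j : ℕ) : ioBefore L j ≤ PRBPCost L := by
  unfold ioBefore PRBPCost
  conv_rhs => rw [← List.take_append_drop j L]
  rw [List.map_append, List.sum_append]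
  exact Nat.le_add_right _ _

lemma ioBefore_lt_of_lt (h : L[j]? = some m) (hm : m.ioCost = 1) (hjk : j < k) :
    ioBefore L j < ioBefore L k := by
  have := ioBefore_mono (L := L) (Nat.succ_le_of_lt hjk)
  rw [ioBefore_succ h, hm] at this
  omega

lemma ioBefore_lt_cost (h : L[j]? = some m) (hm : m.ioCost = 1) : ioBefore L j < PRBPCost L :=
  (ioBefore_lt_of_lt h hm (Nat.lt_succ_self j)).trans_le (ioBefore_le_cost _)

lemma le_mul_ceil_div (C : ℕ) (hr : 0 < r) : C ≤ r * ((C + r - 1) / r) := by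
  have := Nat.div_add_mod (C + r - 1) r
  have := Nat.mod_lt (C + r - 1) hr
  omega

lemma mul_ceil_div_sub_one_le (C : ℕ) (hr : 0 < r) : r * ((C + r - 1) / r - 1) ≤ C := by
  have := Nat.div_add_mod (C + r - 1) r
  rw [Nat.mul_sub_one]
  omega

/-- The `min` keeps the moves after the last I/O operation in the last block when `r ∣ C`. -/
def ioBlock (L : List (PRBPMove V)) (r j : ℕ) : ℕ :=
  min (ioBefore L j / r) ((PRBPCost L + r - 1) / r - 1)

lemma ioBlock_mono : Monotone (ioBlock L r) := fun _ _ h =>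
  min_le_min_right _ (Nat.div_le_div_right (ioBefore_mono h))

lemma ioBlock_lt (hr : 0 < r) (hC : 0 < PRBPCost L) (j : ℕ) :
    ioBlock L r j < (PRBPCost L + r - 1) / r := by
  have : 0 < (PRBPCost L + r - 1) / r := Nat.div_pos (by omega) hr
  exact (min_le_right _ _).trans_lt (by omega)

noncomputable def ioBlockStart (L : List (PRBPMove V)) (r i : ℕ) : ℕ :=
  sInf {j | i ≤ ioBlock L r j}

lemma ioBlockStart_le {N : ℕ} (hN : ioBlock L r N = i) : ioBlockStart L r i ≤ N :=
  Nat.sInf_le hN.ge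

lemma ioBlock_eq_of_ioBlockStart_le {N : ℕ} (hj : ioBlockStart L r i ≤ j) (hjN : j ≤ N)
    (hN : ioBlock L r N = i) : ioBlock L r j = i :=
  le_antisymm (hN ▸ ioBlock_mono hjN)
    ((Nat.sInf_mem (s := {j | i ≤ ioBlock L r j}) ⟨N, hN.ge⟩).trans (ioBlock_mono hj))

def ioBlockNodes (L : List (PRBPMove V)) (r i : ℕ) : Set V :=
  {x | ∃ j, ioBlock L r j = i ∧ (L[j]? = some (.load x) ∨ L[j]? = some (.save x))}

lemma ioBefore_mem_Ico (hr : 0 < r) (hblk : ioBlock L r j = i) (h : L[j]? = some m)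
    (hm : m.ioCost = 1) : ioBefore L j ∈ Finset.Ico (i * r) (i * r + r) := by
  have hC := ioBefore_lt_cost h hm
  have hceil := le_mul_ceil_div (PRBPCost L) hr
  unfold ioBlock at hblk
  rw [Finset.mem_Ico, ← Nat.le_div_iff_mul_le hr, ← Nat.succ_mul, ← Nat.div_lt_iff_lt_mul hr]
  refine ⟨hblk ▸ min_le_left _ _, ?_⟩
  by_contra! hi
  have hk : (PRBPCost L + r - 1) / r ≤ i + 1 := by omega
  have h1 := (Nat.le_div_iff_mul_le hr).1 hi
  have h2 := Nat.mul_le_mul_left r hk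
  linarith [Nat.mul_comm (i + 1) r]

lemma ncard_ioBlockNodes_le (hr : 0 < r) (i : ℕ) : (ioBlockNodes L r i).ncard ≤ r := by
  set idx : V → ℕ := fun x => sInf {j | ioBlock L r j = i ∧
    (L[j]? = some (.load x) ∨ L[j]? = some (.save x))}
  have hidx : ∀ x ∈ ioBlockNodes L r i, ioBlock L r (idx x) = i ∧
      (L[idx x]? = some (.load x) ∨ L[idx x]? = some (.save x)) := fun _ hx => Nat.sInf_mem hx
  have hio : ∀ x ∈ ioBlockNodes L r i, ∃ m, L[idx x]? = some m ∧ m.ioCost = 1 := by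
    intro x hx
    rcases (hidx x hx).2 with h | h <;> exact ⟨_, h, rfl⟩
  calc (ioBlockNodes L r i).ncard ≤ (↑(Finset.Ico (i * r) (i * r + r)) : Set ℕ).ncard := by
        refine Set.ncard_le_ncard_of_injOn (fun x => ioBefore L (idx x)) (fun x hx => ?_)
          (fun x hx y hy hxy => ?_) (Finset.finite_toSet _)
        · obtain ⟨m, hm, hm1⟩ := hio x hx
          exact ioBefore_mem_Ico hr (hidx x hx).1 hm hm1
        · have hidx_eq : idx x = idx y := by
            by_contra hne
            rcases Nat.lt_or_gt_of_ne hne with hlt | hlt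
            · obtain ⟨m, hm, hm1⟩ := hio x hx
              exact (ioBefore_lt_of_lt hm hm1 hlt).ne hxy
            · obtain ⟨m, hm, hm1⟩ := hio y hy
              exact (ioBefore_lt_of_lt hm hm1 hlt).ne hxy.symm
          have hx' := (hidx x hx).2
          rw [hidx_eq] at hx'
          rcases hx' with h | h <;> rcases (hidx y hy).2 with h' | h' <;> simp_all
    _ = r := by simp

end IOCount

section Times

variable {V : Type} [DecidableEq V]

noncomputable def markTime (st : ℕ → PRBPState V) (e : V × V) : ℕ :=
  entryTime fun j => e ∈ (st j).marked

noncomputable def finishTime (G : DirGraph V) (st : ℕ → PRBPState V) (v : V) : ℕ :=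
  entryTime fun j => ∀ q, G.E q v → (q, v) ∈ (st j).marked

noncomputable def loadTime (st : ℕ → PRBPState V) (v : V) : ℕ :=
  entryTime fun j => v ∈ (st j).red

noncomputable def saveTime (G : DirGraph V) (st : ℕ → PRBPState V) (v : V) : ℕ :=
  entryTime fun j => finishTime G st v < j ∧ v ∈ (st j).blue

noncomputable def nodeTime (G : DirGraph V) (st : ℕ → PRBPState V) (v : V) : ℕ :=
  if G.IsSource v then loadTime st v
  else if G.IsSink v then saveTime G st v
  else finishTime G st v

end Times

section ValidRun

variable {V : Type} [Fintype V] [DecidableEq V] {G : DirGraph V} {r : ℕ}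
  {L : List (PRBPMove V)} {st : ℕ → PRBPState V}

structure IsValidRun (G : DirGraph V) (r : ℕ) (L : List (PRBPMove V))
    (st : ℕ → PRBPState V) : Prop extends IsTrace G r L st where
  init : st 0 = PRBPInit G
  sink_mem_blue : ∀ v, G.IsSink v → v ∈ (st L.length).blue
  edge_mem_marked : ∀ u v, G.E u v → (u, v) ∈ (st L.length).marked

lemma PRBPValid.exists_isValidRun (h : PRBPValid G r L) : ∃ st, IsValidRun G r L st := by
  obtain ⟨t, hreach, hsink, hmarked⟩ := h
  obtain ⟨st, hst, h0, rfl⟩ := hreach.exists_isTrace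
  exact ⟨st, hst, h0, hsink, hmarked⟩

namespace IsValidRun

lemma red_card_le (hrun : IsValidRun G r L st) (j : ℕ) : (st j).red.card ≤ r :=
  hrun.le_induction (fun s => s.red.card ≤ r) (Nat.zero_le j)
    (by simp [hrun.init, PRBPInit, PRBPState.red]) fun _ _ _ h => h.red_card_le

lemma lred_subset_blue (hrun : IsValidRun G r L st) (j : ℕ) : (st j).lred ⊆ (st j).blue :=
  hrun.le_induction (fun s => s.lred ⊆ s.blue) (Nat.zero_le j)
    (by simp [hrun.init, PRBPInit]) fun _ _ _ h => h.lred_subset_blue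

lemma keepsValue_mono (hrun : IsValidRun G r L st) {v : V} {a b : ℕ} (hab : a ≤ b)
    (ha : KeepsValue G (st a) v) : KeepsValue G (st b) v :=
  hrun.le_induction (KeepsValue G · v) hab ha fun j _ _ h =>
    h.keepsValue (hrun.lred_subset_blue j)

lemma keepsValue_of_isSource (hrun : IsValidRun G r L st) {v : V} (hv : G.IsSource v) (j : ℕ) :
    KeepsValue G (st j) v :=
  hrun.keepsValue_mono (Nat.zero_le j) (Or.inr (Or.inl (by simp [hrun.init, PRBPInit, hv])))

lemma mem_marked_iff (hrun : IsValidRun G r L st) {u v : V} (hE : G.E u v) {j : ℕ} :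
    (u, v) ∈ (st j).marked ↔ markTime st (u, v) < j :=
  (entryTime_lt_iff (fun _ _ h he => hrun.marked_mono h he) (by simp [hrun.init, PRBPInit])
    (hrun.edge_mem_marked u v hE)).symm

lemma markTime_step (hrun : IsValidRun G r L st) {u v : V} (hE : G.E u v) :
    PRBPStep G r (st (markTime st (u, v))) (.pcompute u v) (st (markTime st (u, v) + 1)) := by
  obtain ⟨h1, h2⟩ := not_entryTime_and_succ (f := fun j => (u, v) ∈ (st j).marked)
    (by simp [hrun.init, PRBPInit]) (hrun.edge_mem_marked u v hE)
  obtain ⟨m, -, hstep⟩ := hrun.exists_step_of_not_of_succ (fun s => (u, v) ∈ s.marked) h1 h2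
  rwa [hstep.eq_pcompute h1 h2] at hstep

lemma not_forall_mem_marked_init (hrun : IsValidRun G r L st) {v : V} (hv : ¬ G.IsSource v) :
    ¬ ∀ q, G.E q v → (q, v) ∈ (st 0).marked := by
  obtain ⟨q, hq⟩ := not_forall_not.1 hv
  simpa [hrun.init, PRBPInit] using ⟨q, hq⟩

lemma forall_mem_marked_iff (hrun : IsValidRun G r L st) {v : V} (hv : ¬ G.IsSource v)
    {j : ℕ} : (∀ q, G.E q v → (q, v) ∈ (st j).marked) ↔ finishTime G st v < j :=
  (entryTime_lt_iff (f := fun j => ∀ q, G.E q v → (q, v) ∈ (st j).marked)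
    (fun _ _ h hall q hq => hrun.marked_mono h (hall q hq))
    (hrun.not_forall_mem_marked_init hv) fun q hq => hrun.edge_mem_marked q v hq).symm

lemma finishTime_step (hrun : IsValidRun G r L st) {v : V} (hv : ¬ G.IsSource v) :
    ∃ q, G.E q v ∧ PRBPStep G r (st (finishTime G st v)) (.pcompute q v)
      (st (finishTime G st v + 1)) := by
  obtain ⟨h1, h2⟩ :=
    not_entryTime_and_succ (f := fun j => ∀ q, G.E q v → (q, v) ∈ (st j).marked)
    (hrun.not_forall_mem_marked_init hv) fun q hq => hrun.edge_mem_marked q v hq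
  obtain ⟨q, hq, hqF⟩ : ∃ q, G.E q v ∧ (q, v) ∉ (st (finishTime G st v)).marked := by
    simpa [finishTime] using h1
  obtain ⟨m, -, hstep⟩ :=
    hrun.exists_step_of_not_of_succ (fun s => (q, v) ∈ s.marked) hqF (h2 q hq)
  exact ⟨q, hq, by rwa [hstep.eq_pcompute hqF (h2 q hq)] at hstep⟩

lemma markTime_le_finishTime (hrun : IsValidRun G r L st) {u v : V} (hE : G.E u v) :
    markTime st (u, v) ≤ finishTime G st v := by
  have hv : ¬ G.IsSource v := fun h => h u hE
  have := (hrun.forall_mem_marked_iff hv).2 (Nat.lt_succ_self _) u hE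
  exact Nat.lt_succ_iff.1 ((hrun.mem_marked_iff hE).1 this)

lemma finishTime_lt_markTime (hrun : IsValidRun G r L st) {u v : V} (hu : ¬ G.IsSource u)
    (hE : G.E u v) : finishTime G st u < markTime st (u, v) :=
  (hrun.forall_mem_marked_iff hu).1 (hrun.markTime_step hE).2.2.1

lemma loadTime_lt_markTime (hrun : IsValidRun G r L st) {u v : V} (hE : G.E u v) :
    loadTime st u < markTime st (u, v) :=
  entryTime_lt (by simp [hrun.init, PRBPInit, PRBPState.red]) (hrun.markTime_step hE).2.2.2.1

lemma getElem?_loadTime (hrun : IsValidRun G r L st) {v z : V} (hv : G.IsSource v)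
    (hE : G.E v z) : L[loadTime st v]? = some (.load v) := by
  obtain ⟨h1, h2⟩ := not_entryTime_and_succ (f := fun j => v ∈ (st j).red)
    (by simp [hrun.init, PRBPInit, PRBPState.red]) (hrun.markTime_step hE).2.2.2.1
  obtain ⟨m, hm, hstep⟩ := hrun.exists_step_of_not_of_succ (fun s => v ∈ s.red) h1 h2
  rcases hstep.eq_load_or_pcompute h1 h2 with rfl | ⟨q, rfl⟩
  · exact hm
  · exact absurd hstep.1 (hv q)

lemma saveTime_spec (hrun : IsValidRun G r L st) {v : V} (hv : ¬ G.IsSource v)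
    (hsink : G.IsSink v) :
    ¬ (finishTime G st v < saveTime G st v ∧ v ∈ (st (saveTime G st v)).blue) ∧
      finishTime G st v < saveTime G st v + 1 ∧ v ∈ (st (saveTime G st v + 1)).blue :=
  not_entryTime_and_succ (f := fun j => finishTime G st v < j ∧ v ∈ (st j).blue) (by simp)
    ⟨(hrun.forall_mem_marked_iff hv).1 fun q hq => hrun.edge_mem_marked q v hq,
      hrun.sink_mem_blue v hsink⟩

lemma finishTime_le_saveTime (hrun : IsValidRun G r L st) {v : V} (hv : ¬ G.IsSource v)
    (hsink : G.IsSink v) : finishTime G st v ≤ saveTime G st v :=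
  Nat.lt_succ_iff.1 (hrun.saveTime_spec hv hsink).2.1

lemma getElem?_saveTime (hrun : IsValidRun G r L st) {v : V} (hv : ¬ G.IsSource v)
    (hsink : G.IsSink v) : L[saveTime G st v]? = some (.save v) := by
  obtain ⟨h1, hF, h2⟩ := hrun.saveTime_spec hv hsink
  have h1 : v ∉ (st (saveTime G st v)).blue := by
    rcases (Nat.lt_succ_iff.1 hF).lt_or_eq with hlt | heq
    · exact fun h => h1 ⟨hlt, h⟩
    · obtain ⟨q, -, -, -, -, -, -, -, hst⟩ := hrun.finishTime_step hv
      rw [← heq, hst] at h2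
      simp at h2
  obtain ⟨m, hm, hstep⟩ := hrun.exists_step_of_not_of_succ (fun s => v ∈ s.blue) h1 h2
  rwa [← hstep.eq_save h1 h2]

lemma keepsValue_of_mem_marked (hrun : IsValidRun G r L st) {q v : V} {j : ℕ} (hE : G.E q v)
    (h : (q, v) ∈ (st j).marked) : KeepsValue G (st j) v := by
  refine hrun.keepsValue_mono ((hrun.mem_marked_iff hE).1 h) (Or.inl ?_)
  obtain ⟨-, -, -, -, -, -, hst⟩ := hrun.markTime_step hE
  simp [hst, PRBPState.red]

lemma nodeTime_lt_markTime (hrun : IsValidRun G r L st) {u v : V} (hE : G.E u v) :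
    nodeTime G st u < markTime st (u, v) := by
  have hu : ¬ G.IsSink u := fun h => h v hE
  unfold nodeTime
  split_ifs with hs
  · exact hrun.loadTime_lt_markTime hE
  · exact hrun.finishTime_lt_markTime hs hE

lemma markTime_le_nodeTime (hrun : IsValidRun G r L st) {u v : V} (hE : G.E u v) :
    markTime st (u, v) ≤ nodeTime G st v := by
  have hv : ¬ G.IsSource v := fun h => h u hE
  unfold nodeTime
  split_ifs with hsink
  · exact (hrun.markTime_le_finishTime hE).trans (hrun.finishTime_le_saveTime hv hsink)
  · exact hrun.markTime_le_finishTime hE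

lemma nodeTime_le_nodeTime (hrun : IsValidRun G r L st) {u v : V} (hE : G.E u v) :
    nodeTime G st u ≤ nodeTime G st v :=
  (hrun.nodeTime_lt_markTime hE).le.trans (hrun.markTime_le_nodeTime hE)

lemma one_le_cost (hrun : IsValidRun G r L st) {u v : V} (hE : G.E u v) : 1 ≤ PRBPCost L := by
  have h0 : ¬ (st 0).red.Nonempty := by simp [hrun.init, PRBPInit, PRBPState.red]
  obtain ⟨j, -, -, hj, hj1⟩ :=
    Nat.exists_not_and_succ_of_le (f := fun j => (st j).red.Nonempty) (Nat.zero_le _) h0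
      ⟨u, (hrun.markTime_step hE).2.2.2.1⟩
  obtain ⟨m, hm, hstep⟩ := hrun.exists_step_of_not_of_succ (fun s => s.red.Nonempty) hj hj1
  rw [Finset.not_nonempty_iff_eq_empty] at hj
  obtain ⟨x, hx⟩ := hj1
  rcases hstep.eq_load_or_pcompute (by simp [hj]) hx with rfl | ⟨q, rfl⟩
  · have := ioBefore_lt_cost hm rfl
    omega
  · exact absurd hstep.2.2.2.1 (by simp [hj])

/-- If `v` no longer keeps its value at `σ`, the edge from its path predecessor is marked
inside `[σ, N]`, so the predecessor is used there in turn; sources always keep their value. -/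
lemma exists_mem_red_or_load_of_isSourcePath (hrun : IsValidRun G r L st) {σ N : ℕ}
    (l : List V) (v : V) (hp : IsSourcePath G (l ++ [v]))
    (hout : ∃ z, G.E v z ∧ (v, z) ∉ (st σ).marked)
    (hused : ∃ t, σ ≤ t ∧ t ≤ N ∧ (v ∈ (st t).red ∨ v ∉ (st t).blue))
    (hin : ∀ q, G.E q v → (q, v) ∈ (st (N + 1)).marked) :
    ∃ y ∈ l ++ [v], y ∈ (st σ).red ∨
      ∃ j, σ ≤ j ∧ j ≤ N ∧ L[j]? = some (.load y) := by
  have hkept : ∀ v, KeepsValue G (st σ) v → (∃ z, G.E v z ∧ (v, z) ∉ (st σ).marked) →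
      (∃ t, σ ≤ t ∧ t ≤ N ∧ (v ∈ (st t).red ∨ v ∉ (st t).blue)) →
      v ∈ (st σ).red ∨ ∃ j, σ ≤ j ∧ j ≤ N ∧ L[j]? = some (.load v) := by
    rintro v hkeep ⟨z, hz, hzσ⟩ ⟨t, hσt, htN, ht⟩
    rcases hrun.mem_red_or_exists_load hσt (hkeep.mem_red_or_mem_blue hz hzσ) ht with
      h | ⟨j, hσj, hjt, hj⟩
    exacts [Or.inl h, Or.inr ⟨j, hσj, by omega, hj⟩]
  induction l using List.reverseRecOn generalizing v with
  | nil =>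
    have hv : G.IsSource v := by simpa using hp.2.2 (by simp)
    exact ⟨v, by simp, hkept v (hrun.keepsValue_of_isSource hv σ) hout hused⟩
  | append_singleton l u ih =>
    by_cases hkeep : KeepsValue G (st σ) v
    · exact ⟨v, by simp, hkept v hkeep hout hused⟩
    obtain ⟨hpu, hE⟩ := hp.of_append_singleton
    have huv : (u, v) ∉ (st σ).marked := fun h => hkeep (hrun.keepsValue_of_mem_marked hE h)
    have hσ : σ ≤ markTime st (u, v) := not_lt.1 ((hrun.mem_marked_iff hE).not.1 huv)
    have hN : markTime st (u, v) ≤ N :=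
      Nat.lt_succ_iff.1 ((hrun.mem_marked_iff hE).1 (hin u hE))
    have hstep := hrun.markTime_step hE
    obtain ⟨y, hy, h⟩ := ih u hpu ⟨v, hE, huv⟩ ⟨_, hσ, hN, Or.inl hstep.2.2.2.1⟩
      fun q hq => hrun.marked_mono (by omega) (hstep.2.2.1 q hq)
    exact ⟨y, List.mem_append_left _ hy, h⟩

lemma dominates (hrun : IsValidRun G r L st) (hiso : G.NoIsolated) (i : ℕ) :
    Dominates G (↑(st (ioBlockStart L r i)).red ∪ ioBlockNodes L r i)
      {v | ioBlock L r (nodeTime G st v) = i} := by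
  intro p hp hne hw
  set w := p.getLast hne
  have hwp : w ∈ p := List.getLast_mem hne
  simp only [Set.mem_ofPred_eq, nodeTime] at hw
  split_ifs at hw with hsrc hsink
  · obtain ⟨z, hz⟩ : ∃ z, G.E w z := (hiso w).resolve_left fun ⟨u, hu⟩ => hsrc u hu
    exact ⟨w, Or.inr ⟨_, hw, Or.inl (hrun.getElem?_loadTime hsrc hz)⟩, hwp⟩
  · exact ⟨w, Or.inr ⟨_, hw, Or.inr (hrun.getElem?_saveTime hsrc hsink)⟩, hwp⟩
  obtain ⟨z, hz⟩ : ∃ z, G.E w z := by simpa [DirGraph.IsSink] using hsink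
  have hσN := ioBlockStart_le hw
  have hz' : (w, z) ∉ (st (ioBlockStart L r i)).marked := fun h => by
    have h1 := (hrun.mem_marked_iff hz).1 h
    have h2 := hrun.finishTime_lt_markTime hsrc hz
    omega
  have hused : w ∈ (st (finishTime G st w)).red ∨ w ∉ (st (finishTime G st w)).blue := by
    obtain ⟨q, -, -, -, -, -, hpre, -⟩ := hrun.finishTime_step hsrc
    tauto
  have hp' : IsSourcePath G (p.dropLast ++ [w]) := by rwa [List.dropLast_append_getLast hne]
  obtain ⟨y, hy, h⟩ := hrun.exists_mem_red_or_load_of_isSourcePath _ _ hp' ⟨z, hz, hz'⟩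
    ⟨_, hσN, le_rfl, hused⟩
    fun q hq => (hrun.forall_mem_marked_iff hsrc).2 (Nat.lt_succ_self _) q hq
  rw [List.dropLast_append_getLast hne] at hy
  refine ⟨y, ?_, hy⟩
  rcases h with h | ⟨j, hσj, hjN, hj⟩
  · exact Or.inl h
  · exact Or.inr ⟨j, ioBlock_eq_of_ioBlockStart_le hσj hjN hw, Or.inl hj⟩

end IsValidRun

theorem PRBPValid.exists_isSDomPartition (hiso : G.NoIsolated) (hr : 0 < r)
    (hL : PRBPValid G r L) :
    ∃ P : Fin ((PRBPCost L + r - 1) / r) → Set V,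
      IsSDomPartition G (2 * r) ((PRBPCost L + r - 1) / r) P := by
  obtain ⟨st, hrun⟩ := hL.exists_isValidRun
  refine ⟨fun i => {v | ioBlock L r (nodeTime G st v) = i}, fun v => ?_,
    fun i j hji u v hu hv hE => ?_, fun i => ⟨_, ?_, hrun.dominates hiso i⟩⟩
  · obtain ⟨a, b, hab⟩ : ∃ a b, G.E a b := by
      rcases hiso v with ⟨u, hu⟩ | ⟨u, hu⟩
      exacts [⟨u, v, hu⟩, ⟨v, u, hu⟩]
    exact ⟨⟨_, ioBlock_lt hr (hrun.one_le_cost hab) _⟩, rfl, fun i hi => Fin.ext hi.symm⟩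
  · have := ioBlock_mono (L := L) (r := r) (hrun.nodeTime_le_nodeTime hE)
    simp only [Set.mem_ofPred_eq] at hu hv
    exact absurd hji (not_lt.2 (Fin.le_def.2 (hu ▸ hv ▸ this)))
  · calc (↑(st (ioBlockStart L r i)).red ∪ ioBlockNodes L r i).ncard
        ≤ (↑(st (ioBlockStart L r i)).red : Set V).ncard + (ioBlockNodes L r i).ncard :=
          Set.ncard_union_le _ _
      _ ≤ r + r := add_le_add (by simpa using hrun.red_card_le _) (ncard_ioBlockNodes_le hr i)
      _ = 2 * r := (two_mul r).symm

end ValidRun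

theorem prbp_gives_dominator_partition_general {V : Type} [Fintype V] [DecidableEq V]
    (G : DirGraph V) (hiso : G.NoIsolated)
    (r : ℕ) (hr : 1 ≤ r) :
    (∀ (L : List (PRBPMove V)) (C : ℕ), PRBPValid G r L → PRBPCost L = C →
      ∃ P : Fin ((C + r - 1) / r) → Set V,
        IsSDomPartition G (2 * r) ((C + r - 1) / r) P ∧
        C ≤ r * ((C + r - 1) / r) ∧ r * ((C + r - 1) / r - 1) ≤ C) ∧
    ((r * (minDomPartition G (2 * r) - 1) : ℕ) : ℕ∞) ≤ optPRBP G r := by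
  refine ⟨fun L C hL hC => ?_, le_sInf ?_⟩
  · subst hC
    obtain ⟨P, hP⟩ := hL.exists_isSDomPartition hiso hr
    exact ⟨P, hP, le_mul_ceil_div _ hr, mul_ceil_div_sub_one_le _ hr⟩
  · rintro _ ⟨L, hL, rfl⟩
    obtain ⟨P, hP⟩ := hL.exists_isSDomPartition hiso hr
    have hmin : minDomPartition G (2 * r) ≤ (PRBPCost L + r - 1) / r := Nat.sInf_le ⟨P, hP⟩
    exact Nat.cast_le.2 ((Nat.mul_le_mul_left r (Nat.sub_le_sub_right hmin 1)).trans
      (mul_ceil_div_sub_one_le _ hr))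

/-- any valid PRBP pebbling of cost `C` yields a `(2r)`-dominator
partition of the nodes into `k = ⌈C/r⌉` classes (so `r·k ≥ C ≥ r·(k−1)`);
consequently `OPT_PRBP(G,r) ≥ r · (MIN_dom(2r) − 1)`. -/
theorem prbp_gives_dominator_partition {V : Type} [Fintype V] [DecidableEq V]
    (G : DirGraph V) (hacyc : G.Acyclic) (hiso : G.NoIsolated)
    (r : ℕ) (hr : 1 ≤ r) :
    (∀ (L : List (PRBPMove V)) (C : ℕ), PRBPValid G r L → PRBPCost L = C →
      ∃ P : Fin ((C + r - 1) / r) → Set V,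
        IsSDomPartition G (2 * r) ((C + r - 1) / r) P ∧
        C ≤ r * ((C + r - 1) / r) ∧ r * ((C + r - 1) / r - 1) ≤ C) ∧
    ((r * (minDomPartition G (2 * r) - 1) : ℕ) : ℕ∞) ≤ optPRBP G r :=
  prbp_gives_dominator_partition_general G hiso r hr
end
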